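/- arXiv:2402.09825 — 15 statements merged into one kernel-verified Lean document; each statement's English description precedes it below -/
import Mathlib

section
/- Suppose there exist v₁ ∈ V₁, …, v_k ∈ V_k with v₁ + … + v_k = t. For each i ∈ [k] choose a_{i,v_i} ∈ A_i, and for each j ∈ [m] choose b_{j,σ_j} ∈ B_j where σ_j = (C(v₁)[j], …, C(v_k)[j]) ∈ Σ^k. Then Σ_{i∈[k]} a_{i,v_i} + Σ_{j∈[m]} b_{j,σ_j} = t'. -/
open scoped BigOperators

/-- The ambient space `F_p^D` for `D = d + mk|Σ| + k + m`, presented in its block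
structure: block (1) of length `d`, block (2) consisting of `m` sub-blocks each made of
`k` parts of length `|Σ|`, block (3) of length `k` and block (4) of length `m`. -/
abbrev GVec (F σ : Type) (k d m : ℕ) : Type :=
  (Fin d → F) × (Fin m → Fin k → σ → F) × (Fin k → F) × (Fin m → F)

/-- The vector `a_{i,v}` (with `c = C(v)` the codeword associated to `v ∈ V_i`). -/
def aVec {F σ : Type} [Field F] [DecidableEq σ] {k d m : ℕ}
    (c : Fin m → σ) (i : Fin k) (v : Fin d → F) : GVec F σ k d m :=
  ⟨v,
   fun j i' s => if i' = i ∧ s = c j then 1 else 0,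
   fun i' => if i' = i then 1 else 0,
   0⟩

/-- The vector `b_{j,σ}` for `σ = (σ₁,…,σ_k) ∈ Σ^k`. -/
def bVec {F σ : Type} [Field F] [DecidableEq σ] {k d m : ℕ}
    (j : Fin m) (τ : Fin k → σ) : GVec F σ k d m :=
  ⟨0,
   fun j' i s => if j' = j ∧ s = τ i then -1 else 0,
   0,
   fun j' => if j' = j then 1 else 0⟩

/-- The target vector `t' = (t, 0, 1_k, 1_m)`. -/
def tVec {F σ : Type} [Field F] {k d m : ℕ} (t : Fin d → F) : GVec F σ k d m :=
  ⟨t, 0, fun _ => 1, fun _ => 1⟩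

/-- `A_i = { a_{i,v} : v ∈ V_i }`, where `Enc i v = C(v)` is the codeword of `v ∈ V_i`. -/
def ASet {F σ : Type} [Field F] [DecidableEq σ] {k d m : ℕ}
    (Enc : Fin k → (Fin d → F) → (Fin m → σ)) (V : Fin k → Set (Fin d → F)) (i : Fin k) :
    Set (GVec F σ k d m) :=
  (fun v => aVec (Enc i v) i v) '' V i

/-- `B_j = { b_{j,σ} : σ ∈ Σ^k }`. -/
def BSet (F : Type) {σ : Type} [Field F] [DecidableEq σ] {k : ℕ} (d : ℕ) {m : ℕ}
    (j : Fin m) : Set (GVec F σ k d m) :=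
  Set.range (fun τ : Fin k → σ => bVec j τ)

/-- Completeness of the main construction (the YES case of Lemma 4.1): if
`v₁ + ⋯ + v_k = t` then `Σ_i a_{i,v_i} + Σ_j b_{j,σ_j} = t'`,
where `σ_j = (C(v₁)[j], …, C(v_k)[j])`. -/
theorem sum_aVec_add_sum_bVec_eq_tVec
    (p : ℕ) (hp : IsPrimePow p)
    (F : Type) [Field F] [Fintype F] (hF : Fintype.card F = p)
    (σ : Type) [Fintype σ] [DecidableEq σ]
    (k d n m : ℕ) (hk : 1 ≤ k) (hd : 1 ≤ d) (hn : 1 ≤ n) (hm : 1 ≤ m)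
    (V : Fin k → Set (Fin d → F)) (hV : ∀ i, (V i).ncard = n)
    (t : Fin d → F)
    (𝒞 : Set (Fin m → σ))
    (Enc : Fin k → (Fin d → F) → (Fin m → σ))
    (hEncMem : ∀ i, ∀ v ∈ V i, Enc i v ∈ 𝒞)
    (hEncInj : ∀ i, Set.InjOn (Enc i) (V i))
    (v : Fin k → (Fin d → F)) (hv : ∀ i, v i ∈ V i)
    (hsum : ∑ i, v i = t) :
    (∑ i : Fin k, aVec (Enc i (v i)) i (v i))
      + (∑ j : Fin m, bVec (F := F) (σ := σ) (k := k) (d := d) j (fun i => Enc i (v i) j))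
      = tVec t := by
  have h1 : ∀ (xs : GVec F σ k d m) ys, xs.1 = ys.1 → xs.2.1 = ys.2.1 → xs.2.2.1 = ys.2.2.1 → xs.2.2.2 = ys.2.2.2 → xs = ys := by
    rintro ⟨a,b,c,e⟩ ⟨a',b',c',e'⟩; rintro rfl rfl rfl rfl; rfl
  apply h1
  · simp [aVec, bVec, tVec, Prod.fst_sum, hsum]
  · funext j i0 s
    have e1 : (∑ i : Fin k, if i0 = i ∧ s = Enc i (v i) j then (1:F) else 0)
        = if s = Enc i0 (v i0) j then 1 else 0 := by
      rw [Finset.sum_eq_single i0]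
      · simp
      · intro b _ hb; simp [Ne.symm hb]
      · simp
    have e2 : (∑ j' : Fin m, if j = j' ∧ s = Enc i0 (v i0) j' then (-1:F) else 0)
        = if s = Enc i0 (v i0) j then -1 else 0 := by
      rw [Finset.sum_eq_single j]
      · simp
      · intro b _ hb; simp [Ne.symm hb]
      · simp
    simp only [Prod.fst_add, Prod.snd_add, Prod.fst_sum, Prod.snd_sum, Pi.add_apply,
      Finset.sum_apply, aVec, bVec, tVec, Pi.zero_apply]
    rw [e1, e2]
    split <;> simp
  · funext i0
    simp [aVec, bVec, tVec, Prod.fst_sum, Prod.snd_sum, Finset.sum_apply,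
      Finset.sum_ite_eq, Finset.sum_ite_eq']
  · funext j0
    simp [aVec, bVec, tVec, Prod.fst_sum, Prod.snd_sum, Finset.sum_apply,
      Finset.sum_ite_eq, Finset.sum_ite_eq']
end

section
/- Let ε ∈ (0,1) and c > 0 be reals. Assume: (NO condition) for all v₁ ∈ V₁, …, v_k ∈ V_k and all α₁, …, α_k ∈ F_p^+ one has α₁v₁ + … + α_kv_k ≠ t; and (collision condition) every subset S ⊆ 𝒞 that collides on more than εm coordinates has |S| ≥ ck. Then every solution (X, λ) satisfies at least one of: (|X ∩ A| ≥ ck and |X ∩ B| ≥ m), or (|X ∩ A| ≥ k and |X ∩ B| ≥ 2(1−ε)m). -/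
open scoped BigOperators

/-- The set of coordinates on which a set `S` of strings collides. -/
def collCoords {σ : Type} {m : ℕ} (S : Set (Fin m → σ)) : Set (Fin m) :=
  {j : Fin m | ∃ x ∈ S, ∃ y ∈ S, x ≠ y ∧ x j = y j}

section Aux
variable {F σ : Type} [Field F] [DecidableEq σ] {k d m : ℕ}
variable {Enc : Fin k → (Fin d → F) → (Fin m → σ)} {V : Fin k → Set (Fin d → F)}

lemma ASet_spec {i : Fin k} {x : GVec F σ k d m} (hx : x ∈ ASet Enc V i) :
    x.1 ∈ V i ∧ x = aVec (Enc i x.1) i x.1 := by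
  obtain ⟨v, hv, rfl⟩ := hx
  exact ⟨hv, rfl⟩

lemma BSet_spec {j : Fin m} {x : GVec F σ k d m} (hx : x ∈ BSet F d j) :
    ∃ τ, x = bVec j τ := by
  obtain ⟨τ, rfl⟩ := hx; exact ⟨τ, rfl⟩


lemma not_aVec_mem_BSet {c : Fin m → σ} {i : Fin k} {v : Fin d → F} {j : Fin m} :
    aVec c i v ∉ BSet F d j := by
  rintro ⟨τ, h⟩
  have := congrFun (congrArg (fun z : GVec F σ k d m => z.2.2.2) h) j
  simp [bVec, aVec] at this

lemma not_bVec_mem_ASet {j : Fin m} {τ : Fin k → σ} {i : Fin k} :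
    bVec j τ ∉ ASet Enc V i := by
  rintro ⟨v, hv, h⟩
  have := congrFun (congrArg (fun z : GVec F σ k d m => z.2.2.1) h) i
  simp [bVec, aVec] at this

lemma bVec_mem_BSet {j j' : Fin m} {τ : Fin k → σ}
    (h : bVec j' τ ∈ BSet F d j) : j' = j := by
  obtain ⟨τ'', h⟩ := h
  have h2 : (if j' = j then (1 : F) else 0) = if j' = j' then 1 else 0 :=
    congrFun (congrArg (fun z : GVec F σ k d m => z.2.2.2) h) j'
  rw [if_pos rfl] at h2
  by_contra hne
  rw [if_neg hne] at h2
  exact one_ne_zero h2.symm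

lemma aVec_mem_ASet {c : Fin m → σ} {i i' : Fin k} {v : Fin d → F}
    (h : aVec c i' v ∈ ASet Enc V i) : i' = i := by
  obtain ⟨w, hw, h⟩ := h
  have h2 : (if i' = i then (1 : F) else 0) = if i' = i' then 1 else 0 :=
    congrFun (congrArg (fun z : GVec F σ k d m => z.2.2.1) h) i'
  rw [if_pos rfl] at h2
  by_contra hne
  rw [if_neg hne] at h2
  exact one_ne_zero h2.symm

lemma blk4_of_mem {x : GVec F σ k d m}
    (hx : x ∈ (⋃ i, ASet Enc V i) ∪ (⋃ j, BSet F d j)) (j : Fin m)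
    [Decidable (x ∈ BSet F d j)] :
    x.2.2.2 j = if x ∈ BSet F d j then 1 else 0 := by
  rcases hx with hx | hx
  · obtain ⟨_, ⟨i, rfl⟩, v, hv, rfl⟩ := hx
    rw [if_neg not_aVec_mem_BSet]; rfl
  · obtain ⟨_, ⟨j', rfl⟩, τ, rfl⟩ := hx
    show (if j = j' then (1:F) else 0) = _
    by_cases hjj : j' = j
    · subst hjj; rw [if_pos rfl, if_pos ⟨τ, rfl⟩]
    · rw [if_neg (fun h => hjj h.symm), if_neg (fun h => hjj (bVec_mem_BSet h))]

lemma blk3_of_mem {x : GVec F σ k d m}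
    (hx : x ∈ (⋃ i, ASet Enc V i) ∪ (⋃ j, BSet F d j)) (i : Fin k)
    [Decidable (x ∈ ASet Enc V i)] :
    x.2.2.1 i = if x ∈ ASet Enc V i then 1 else 0 := by
  rcases hx with hx | hx
  · obtain ⟨_, ⟨i', rfl⟩, v, hv, rfl⟩ := hx
    show (if i = i' then (1:F) else 0) = _
    by_cases hii : i' = i
    · subst hii; rw [if_pos rfl, if_pos ⟨v, hv, rfl⟩]
    · rw [if_neg (fun h => hii h.symm), if_neg (fun h => hii (aVec_mem_ASet h))]
  · obtain ⟨_, ⟨j, rfl⟩, τ, rfl⟩ := hx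
    rw [if_neg not_bVec_mem_ASet]; rfl

end Aux

section Aux2
variable {F σ : Type} [Field F] [DecidableEq σ] {k d m : ℕ}

open Classical in
noncomputable def iOf (hk : 0 < k) (x : GVec F σ k d m) : Fin k :=
  if h : ∃ i, x.2.2.1 i = 1 then h.choose else ⟨0, hk⟩

open Classical in
lemma iOf_aVec (hk : 0 < k) (c : Fin m → σ) (i : Fin k) (v : Fin d → F) :
    iOf hk (aVec c i v) = i := by
  have hex : ∃ i', (aVec c i v : GVec F σ k d m).2.2.1 i' = 1 := ⟨i, by simp [aVec]⟩
  rw [iOf, dif_pos hex]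
  have hspec : (if hex.choose = i then (1:F) else 0) = 1 := hex.choose_spec
  by_contra hne
  rw [if_neg hne] at hspec
  exact zero_ne_one hspec

lemma bVec_inj_tau {j : Fin m} {τ τ' : Fin k → σ}
    (h : (bVec j τ : GVec F σ k d m) = bVec j τ') (i : Fin k) : τ i = τ' i := by
  have h2 : (if (j = j ∧ τ i = τ i) then (-1:F) else 0) =
      if (j = j ∧ τ i = τ' i) then -1 else 0 :=
    congrFun (congrFun (congrFun (congrArg (fun z : GVec F σ k d m => z.2.1) h) j) i) (τ i)
  rw [if_pos ⟨rfl, rfl⟩] at h2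
  by_contra hne
  rw [if_neg (fun hh => hne hh.2)] at h2
  exact (neg_ne_zero.mpr (one_ne_zero)) h2

end Aux2

/-- Soundness of the main construction (part (ii) of Lemma 4.1): under the NO condition
and assuming the code `𝒞` has `ε`-collision number at least `ck`, every solution `(X, λ)`
satisfies `|X ∩ A| ≥ ck ∧ |X ∩ B| ≥ m`, or `|X ∩ A| ≥ k ∧ |X ∩ B| ≥ 2(1−ε)m`. -/
theorem solution_lower_bounds_of_NO
    (p : ℕ) (hp : IsPrimePow p)
    (F : Type) [Field F] [Fintype F] (hF : Fintype.card F = p)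
    (σ : Type) [Fintype σ] [DecidableEq σ]
    (k d n m : ℕ) (hk : 1 ≤ k) (hd : 1 ≤ d) (hn : 1 ≤ n) (hm : 1 ≤ m)
    (V : Fin k → Set (Fin d → F)) (hV : ∀ i, (V i).ncard = n)
    (t : Fin d → F)
    (𝒞 : Set (Fin m → σ))
    (Enc : Fin k → (Fin d → F) → (Fin m → σ))
    (hEncMem : ∀ i, ∀ v ∈ V i, Enc i v ∈ 𝒞)
    (hEncInj : ∀ i, Set.InjOn (Enc i) (V i))
    (ε c : ℝ) (hε0 : 0 < ε) (hε1 : ε < 1) (hc : 0 < c)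
    -- NO condition
    (hNO : ∀ v : Fin k → (Fin d → F), (∀ i, v i ∈ V i) →
      ∀ α : Fin k → F, (∀ i, α i ≠ 0) → ∑ i, α i • v i ≠ t)
    -- collision condition
    (hcoll : ∀ S ⊆ 𝒞, ε * (m : ℝ) < ((collCoords S).ncard : ℝ) → c * (k : ℝ) ≤ (S.ncard : ℝ))
    -- a solution (X, λ)
    (X : Finset (GVec F σ k d m)) (lam : GVec F σ k d m → F)
    (hXsub : ↑X ⊆ (⋃ i, ASet Enc V i) ∪ (⋃ j, BSet F d j))
    (hlam : ∀ x ∈ X, lam x ≠ 0)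
    (hXsum : ∑ x ∈ X, lam x • x = tVec t) :
    (c * (k : ℝ) ≤ (((↑X : Set (GVec F σ k d m)) ∩ ⋃ i, ASet Enc V i).ncard : ℝ) ∧
      (m : ℝ) ≤ (((↑X : Set (GVec F σ k d m)) ∩ ⋃ j, BSet F d j).ncard : ℝ)) ∨
    ((k : ℝ) ≤ (((↑X : Set (GVec F σ k d m)) ∩ ⋃ i, ASet Enc V i).ncard : ℝ) ∧
      2 * (1 - ε) * (m : ℝ) ≤ (((↑X : Set (GVec F σ k d m)) ∩ ⋃ j, BSet F d j).ncard : ℝ)) := by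
  classical
  set AU : Set (GVec F σ k d m) := ⋃ i, ASet Enc V i with hAUdef
  set BU : Set (GVec F σ k d m) := ⋃ j, BSet F d j with hBUdef
  set Af : Fin k → Finset (GVec F σ k d m) :=
    fun i => X.filter (fun x => x ∈ ASet Enc V i) with hAfdef
  set Bf : Fin m → Finset (GVec F σ k d m) :=
    fun j => X.filter (fun x => x ∈ BSet F d j) with hBfdef
  -- component equations
  have h1 : ∀ a : Fin d, ∑ x ∈ X, lam x * x.1 a = t a := by
    intro a
    have h := congrFun (congrArg (fun z : GVec F σ k d m => z.1) hXsum) a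
    simpa [Prod.fst_sum, Finset.sum_apply, tVec] using h
  have h2 : ∀ (j : Fin m) (i : Fin k) (s : σ), ∑ x ∈ X, lam x * x.2.1 j i s = 0 := by
    intro j i s
    have h := congrFun (congrFun (congrFun
      (congrArg (fun z : GVec F σ k d m => z.2.1) hXsum) j) i) s
    simpa [Prod.fst_sum, Prod.snd_sum, Finset.sum_apply, tVec] using h
  have h3 : ∀ i : Fin k, ∑ x ∈ X, lam x * x.2.2.1 i = 1 := by
    intro i
    have h := congrFun (congrArg (fun z : GVec F σ k d m => z.2.2.1) hXsum) i
    simpa [Prod.fst_sum, Prod.snd_sum, Finset.sum_apply, tVec] using h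
  have h4 : ∀ j : Fin m, ∑ x ∈ X, lam x * x.2.2.2 j = 1 := by
    intro j
    have h := congrFun (congrArg (fun z : GVec F σ k d m => z.2.2.2) hXsum) j
    simpa [Prod.snd_sum, Finset.sum_apply, tVec] using h
  -- sums over the blocks
  have hA1 : ∀ i, ∑ x ∈ Af i, lam x = 1 := by
    intro i
    rw [← h3 i, hAfdef]
    rw [Finset.sum_filter]
    apply Finset.sum_congr rfl
    intro x hx
    rw [blk3_of_mem (hXsub hx) i]
    split_ifs <;> ring
  have hB1 : ∀ j, ∑ x ∈ Bf j, lam x = 1 := by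
    intro j
    rw [← h4 j, hBfdef]
    rw [Finset.sum_filter]
    apply Finset.sum_congr rfl
    intro x hx
    rw [blk4_of_mem (hXsub hx) j]
    split_ifs <;> ring
  have hAne : ∀ i, (Af i).Nonempty := by
    intro i
    rw [Finset.nonempty_iff_ne_empty]
    intro h
    have := hA1 i
    rw [h, Finset.sum_empty] at this
    exact zero_ne_one this
  have hBne : ∀ j, (Bf j).Nonempty := by
    intro j
    rw [Finset.nonempty_iff_ne_empty]
    intro h
    have := hB1 j
    rw [h, Finset.sum_empty] at this
    exact zero_ne_one this
  -- disjointness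
  have hdisjA : ∀ i ∈ (Finset.univ : Finset (Fin k)), ∀ i' ∈ Finset.univ,
      i ≠ i' → Disjoint (Af i) (Af i') := by
    intro i _ i' _ hne
    rw [Finset.disjoint_left]
    intro x hx hx'
    have hm1 : x ∈ ASet Enc V i := (Finset.mem_filter.mp hx).2
    have hm2 : x ∈ ASet Enc V i' := (Finset.mem_filter.mp hx').2
    have hxe := (ASet_spec hm1).2
    rw [hxe] at hm2
    exact hne (aVec_mem_ASet hm2)
  have hdisjB : ∀ j ∈ (Finset.univ : Finset (Fin m)), ∀ j' ∈ Finset.univ,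
      j ≠ j' → Disjoint (Bf j) (Bf j') := by
    intro j _ j' _ hne
    rw [Finset.disjoint_left]
    intro x hx hx'
    have hm1 : x ∈ BSet F d j := (Finset.mem_filter.mp hx).2
    have hm2 : x ∈ BSet F d j' := (Finset.mem_filter.mp hx').2
    obtain ⟨τ, rfl⟩ := BSet_spec hm1
    exact hne (bVec_mem_BSet hm2)
  -- biUnion decompositions
  have hXAf : X.filter (fun x => x ∈ AU) = Finset.univ.biUnion Af := by
    ext x
    simp only [Finset.mem_filter, Finset.mem_biUnion, Finset.mem_univ, true_and,
      hAUdef, Set.mem_iUnion, hAfdef]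
    tauto
  have hXBf : X.filter (fun x => x ∈ BU) = Finset.univ.biUnion Bf := by
    ext x
    simp only [Finset.mem_filter, Finset.mem_biUnion, Finset.mem_univ, true_and,
      hBUdef, Set.mem_iUnion, hBfdef]
    tauto
  -- cardinalities
  have hAcoe : (↑X ∩ AU : Set (GVec F σ k d m)) = ↑(X.filter (fun x => x ∈ AU)) := by
    ext x; simp [Finset.mem_filter]
  have hBcoe : (↑X ∩ BU : Set (GVec F σ k d m)) = ↑(X.filter (fun x => x ∈ BU)) := by
    ext x; simp [Finset.mem_filter]
  have hAcard : (↑X ∩ AU : Set (GVec F σ k d m)).ncard = ∑ i, (Af i).card := by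
    rw [hAcoe, Set.ncard_coe_finset, hXAf, Finset.card_biUnion hdisjA]
  have hBcard : (↑X ∩ BU : Set (GVec F σ k d m)).ncard = ∑ j, (Bf j).card := by
    rw [hBcoe, Set.ncard_coe_finset, hXBf, Finset.card_biUnion hdisjB]
  have hAk : k ≤ (↑X ∩ AU : Set (GVec F σ k d m)).ncard := by
    rw [hAcard]
    calc k = ∑ _i : Fin k, 1 := by simp
    _ ≤ ∑ i, (Af i).card := Finset.sum_le_sum fun i _ => Finset.card_pos.mpr (hAne i)
  have hBm : m ≤ (↑X ∩ BU : Set (GVec F σ k d m)).ncard := by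
    rw [hBcard]
    calc m = ∑ _j : Fin m, 1 := by simp
    _ ≤ ∑ j, (Bf j).card := Finset.sum_le_sum fun j _ => Finset.card_pos.mpr (hBne j)
  by_cases hck : c * (k : ℝ) ≤ ((↑X ∩ AU : Set (GVec F σ k d m)).ncard : ℝ)
  · exact Or.inl ⟨hck, by exact_mod_cast Nat.cast_le.mpr hBm⟩
  right
  refine ⟨by exact_mod_cast Nat.cast_le.mpr hAk, ?_⟩
  push_neg at hck
  -- the set of codewords used by the solution
  set S : Set (Fin m → σ) := (fun x => Enc (iOf hk x) x.1) '' (↑X ∩ AU) with hSdef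
  have hiOfm : ∀ (i : Fin k) (x : GVec F σ k d m), x ∈ ASet Enc V i → iOf hk x = i := by
    intro i x hx
    obtain ⟨v, hv, rfl⟩ := hx
    exact iOf_aVec hk _ i v
  have hmemS : ∀ i, ∀ x ∈ Af i, Enc i x.1 ∈ S := by
    intro i x hx
    have hxX : x ∈ X := (Finset.mem_filter.mp hx).1
    have hxAs : x ∈ ASet Enc V i := (Finset.mem_filter.mp hx).2
    have hxA : x ∈ AU := Set.mem_iUnion.mpr ⟨i, hxAs⟩
    exact ⟨x, ⟨hxX, hxA⟩, by show Enc (iOf hk x) x.1 = Enc i x.1; rw [hiOfm i x hxAs]⟩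
  have hSsub : S ⊆ 𝒞 := by
    rintro w ⟨x, ⟨hxX, hxA⟩, rfl⟩
    obtain ⟨i, hxi⟩ := Set.mem_iUnion.mp hxA
    show Enc (iOf hk x) x.1 ∈ 𝒞
    rw [hiOfm i x hxi]
    exact hEncMem i x.1 (ASet_spec hxi).1
  have hXAfin : (↑X ∩ AU : Set (GVec F σ k d m)).Finite :=
    (X.finite_toSet).inter_of_left AU
  have hScard : (S.ncard : ℝ) ≤ (((↑X ∩ AU : Set (GVec F σ k d m))).ncard : ℝ) := by
    exact_mod_cast Nat.cast_le.mpr (Set.ncard_image_le hXAfin)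
  have hcollS : ((collCoords S).ncard : ℝ) ≤ ε * m := by
    by_contra h
    push_neg at h
    have := hcoll S hSsub h
    linarith
  -- uniqueness of a-vectors with a given symbol at a noncolliding coordinate
  have hUniq : ∀ j, j ∉ collCoords S → ∀ i, ∀ x ∈ Af i, ∀ x' ∈ Af i,
      Enc i x.1 j = Enc i x'.1 j → x = x' := by
    intro j hj i x hx x' hx' hsym
    have hS1 := hmemS i x hx
    have hS2 := hmemS i x' hx'
    have hEq : Enc i x.1 = Enc i x'.1 := by
      by_contra hne
      exact hj ⟨_, hS1, _, hS2, hne, hsym⟩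
    have hv1 := ASet_spec (Finset.mem_filter.mp hx).2
    have hv2 := ASet_spec (Finset.mem_filter.mp hx').2
    have h11 := hEncInj i hv1.1 hv2.1 hEq
    rw [hv1.2, hv2.2, h11]
  -- every noncolliding coordinate carries at least two b-vectors
  have hBig : ∀ j, j ∉ collCoords S → 2 ≤ (Bf j).card := by
    intro j hj
    by_contra hcard
    push_neg at hcard
    have hone : (Bf j).card = 1 :=
      le_antisymm (by omega) (Finset.card_pos.mpr (hBne j))
    obtain ⟨b, hb⟩ := Finset.card_eq_one.mp hone
    have hbBf : b ∈ Bf j := hb ▸ Finset.mem_singleton_self b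
    have hbX : b ∈ X := (Finset.mem_filter.mp hbBf).1
    obtain ⟨τ, hbe⟩ := BSet_spec (Finset.mem_filter.mp hbBf).2
    have hlamb : lam b = 1 := by
      have := hB1 j; rwa [hb, Finset.sum_singleton] at this
    -- step B : every a-vector in X has symbol τ i at coordinate j
    have hsymb : ∀ i, ∀ x ∈ Af i, Enc i x.1 j = τ i := by
      intro i x hx
      by_contra hne
      have hterm : ∀ y ∈ X, lam y * y.2.1 j i (Enc i x.1 j) =
          if (y ∈ ASet Enc V i ∧ Enc i y.1 j = Enc i x.1 j) then lam y else 0 := by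
        intro y hy
        rcases hXsub hy with hyA | hyB
        · rw [hAUdef] at hyA
          obtain ⟨_, ⟨i', rfl⟩, v, hv, rfl⟩ := hyA
          show lam (aVec (Enc i' v) i' v) * (if i = i' ∧ Enc i x.1 j = Enc i' v j then 1 else 0)
              = if ((aVec (Enc i' v) i' v : GVec F σ k d m) ∈ ASet Enc V i
                    ∧ Enc i v j = Enc i x.1 j)
                then lam (aVec (Enc i' v) i' v) else 0
          by_cases hii : i = i'
          · subst hii
            by_cases hs : Enc i v j = Enc i x.1 j
            · rw [if_pos ⟨rfl, hs.symm⟩, if_pos ⟨⟨v, hv, rfl⟩, hs⟩, mul_one]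
            · rw [if_neg (fun h => hs h.2.symm), if_neg (fun h => hs h.2), mul_zero]
          · rw [if_neg (fun h => hii h.1),
              if_neg (fun h => hii (aVec_mem_ASet h.1).symm), mul_zero]
        · rw [hBUdef] at hyB
          obtain ⟨_, ⟨j', rfl⟩, τ', rfl⟩ := hyB
          have hnb : ¬((bVec j' τ' : GVec F σ k d m) ∈ ASet Enc V i
              ∧ Enc i (bVec j' τ' : GVec F σ k d m).1 j = Enc i x.1 j) :=
            fun h => not_bVec_mem_ASet h.1
          show lam (bVec j' τ') * (if j = j' ∧ Enc i x.1 j = τ' i then -1 else 0)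
              = if ((bVec j' τ' : GVec F σ k d m) ∈ ASet Enc V i
                    ∧ Enc i (bVec j' τ' : GVec F σ k d m).1 j = Enc i x.1 j)
                then lam (bVec j' τ') else 0
          rw [if_neg hnb]
          by_cases hjj : j' = j
          · have hyBf : bVec j' τ' ∈ Bf j := Finset.mem_filter.mpr ⟨hy, by
              rw [← hjj]; exact ⟨τ', rfl⟩⟩
            have hyb : (bVec j' τ' : GVec F σ k d m) = b := by
              rw [hb] at hyBf; exact Finset.mem_singleton.mp hyBf
            have heq : (bVec j τ' : GVec F σ k d m) = bVec j τ := by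
              rw [hjj] at hyb; exact hyb.trans hbe
            have hττ : τ' i = τ i := bVec_inj_tau heq i
            rw [if_neg (fun h => hne (h.2.trans hττ)), mul_zero]
          · rw [if_neg (fun h => hjj h.1.symm), mul_zero]
      have he1 : ∑ y ∈ X.filter
          (fun y => y ∈ ASet Enc V i ∧ Enc i y.1 j = Enc i x.1 j), lam y = 0 := by
        calc ∑ y ∈ X.filter (fun y => y ∈ ASet Enc V i ∧ Enc i y.1 j = Enc i x.1 j), lam y
            = ∑ y ∈ X, if (y ∈ ASet Enc V i ∧ Enc i y.1 j = Enc i x.1 j) then lam y else 0 :=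
              Finset.sum_filter _ _
          _ = ∑ y ∈ X, lam y * y.2.1 j i (Enc i x.1 j) := (Finset.sum_congr rfl hterm).symm
          _ = 0 := h2 j i _
      have hfil : X.filter
          (fun y => y ∈ ASet Enc V i ∧ Enc i y.1 j = Enc i x.1 j) = {x} := by
        apply Finset.eq_singleton_iff_unique_mem.mpr
        refine ⟨Finset.mem_filter.mpr ⟨(Finset.mem_filter.mp hx).1,
          (Finset.mem_filter.mp hx).2, rfl⟩, ?_⟩
        intro y hy
        obtain ⟨hyX, hyA, hys⟩ := Finset.mem_filter.mp hy
        exact hUniq j hj i y (Finset.mem_filter.mpr ⟨hyX, hyA⟩) x hx hys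
      rw [hfil, Finset.sum_singleton] at he1
      exact hlam x (Finset.mem_filter.mp hx).1 he1
    -- step C : each Af i is a singleton
    have hsing : ∀ i, ∃ y, Af i = {y} := by
      intro i
      obtain ⟨y, hy⟩ := hAne i
      exact ⟨y, Finset.eq_singleton_iff_unique_mem.mpr ⟨hy,
        fun z hz => hUniq j hj i z hz y hy (by rw [hsymb i z hz, hsymb i y hy])⟩⟩
    choose xi hxi using hsing
    have hxiAf : ∀ i, xi i ∈ Af i := fun i => (hxi i) ▸ Finset.mem_singleton_self (xi i)
    have hlamxi : ∀ i, lam (xi i) = 1 := by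
      intro i; have := hA1 i; rwa [hxi i, Finset.sum_singleton] at this
    have hvV : ∀ i, (xi i).1 ∈ V i :=
      fun i => (ASet_spec (Finset.mem_filter.mp (hxiAf i)).2).1
    -- block (1) gives a contradiction with the NO condition
    refine hNO (fun i => (xi i).1) hvV (fun _ => 1) (fun _ => one_ne_zero) ?_
    funext a
    rw [Finset.sum_apply]
    have hsplit : ∑ x ∈ X, lam x * x.1 a
        = ∑ x ∈ X.filter (fun x => x ∈ AU), lam x * x.1 a := by
      rw [Finset.sum_filter]
      apply Finset.sum_congr rfl
      intro y hy
      rcases hXsub hy with hyA | hyB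
      · rw [if_pos hyA]
      · rw [hBUdef] at hyB
        obtain ⟨_, ⟨j', rfl⟩, τ', rfl⟩ := hyB
        rw [if_neg, show ((bVec j' τ' : GVec F σ k d m)).1 a = 0 from rfl, mul_zero]
        rw [hAUdef]
        intro hmem
        obtain ⟨_, ⟨i', rfl⟩, hmem⟩ := hmem
        exact not_bVec_mem_ASet hmem
    have hstep : ∑ i, ((1:F) • (xi i).1) a = ∑ x ∈ X, lam x * x.1 a := by
      rw [hsplit, hXAf,
        Finset.sum_biUnion (fun i hi i' hi' hne => hdisjA i hi i' hi' hne)]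
      apply Finset.sum_congr rfl
      intro i _
      rw [hxi i, Finset.sum_singleton, hlamxi i, one_mul, Pi.smul_apply, one_smul]
    rw [hstep, h1 a]
  -- final counting
  have h0 : (collCoords S).ncard
      = (Finset.univ.filter (fun j => j ∈ collCoords S)).card := by
    rw [← Set.ncard_coe_finset]
    congr 1
    ext j; simp
  have hnc : ((collCoords S).ncard : ℝ)
      = ∑ j : Fin m, (if j ∈ collCoords S then (1:ℝ) else 0) := by
    rw [h0, Finset.sum_boole]
  have hper : ∀ j : Fin m,
      (2:ℝ) - (if j ∈ collCoords S then 1 else 0) ≤ ((Bf j).card : ℝ) := by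
    intro j
    by_cases hj : j ∈ collCoords S
    · rw [if_pos hj]
      have : (1:ℝ) ≤ ((Bf j).card : ℝ) := by
        exact_mod_cast Finset.card_pos.mpr (hBne j)
      linarith
    · rw [if_neg hj]
      have : (2:ℝ) ≤ ((Bf j).card : ℝ) := by exact_mod_cast hBig j hj
      linarith
  have hsum2 : ∑ j : Fin m, ((2:ℝ) - (if j ∈ collCoords S then 1 else 0))
      ≤ ∑ j : Fin m, ((Bf j).card : ℝ) :=
    Finset.sum_le_sum fun j _ => hper j
  rw [Finset.sum_sub_distrib, ← hnc] at hsum2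
  have hconst : ∑ _j : Fin m, (2:ℝ) = 2 * m := by
    simp [Finset.sum_const, Finset.card_univ, mul_comm]
  rw [hconst] at hsum2
  have hBR : (((↑X ∩ BU : Set (GVec F σ k d m))).ncard : ℝ)
      = ∑ j : Fin m, ((Bf j).card : ℝ) := by
    rw [hBcard]; push_cast; ring
  rw [hBR]
  have hεm : 0 ≤ ε * m := by positivity
  nlinarith [hsum2, hcollS, hεm]
end

section
/- Every solution (X, λ) satisfies X ∩ A_i ≠ ∅ for every i ∈ [k] and X ∩ B_j ≠ ∅ for every j ∈ [m]; in particular |X ∩ A| ≥ k and |X ∩ B| ≥ m. -/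
open scoped BigOperators

/-- Every solution `(X, λ)` meets every `A_i` and every `B_j`; in particular
`|X ∩ A| ≥ k` and `|X ∩ B| ≥ m`. -/
theorem solution_meets_every_block
    (p : ℕ) (hp : IsPrimePow p)
    (F : Type) [Field F] [Fintype F] (hF : Fintype.card F = p)
    (σ : Type) [Fintype σ] [DecidableEq σ]
    (k d n m : ℕ) (hk : 1 ≤ k) (hd : 1 ≤ d) (hn : 1 ≤ n) (hm : 1 ≤ m)
    (V : Fin k → Set (Fin d → F)) (hV : ∀ i, (V i).ncard = n)
    (t : Fin d → F)
    (𝒞 : Set (Fin m → σ))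
    (Enc : Fin k → (Fin d → F) → (Fin m → σ))
    (hEncMem : ∀ i, ∀ v ∈ V i, Enc i v ∈ 𝒞)
    (hEncInj : ∀ i, Set.InjOn (Enc i) (V i))
    (X : Finset (GVec F σ k d m)) (lam : GVec F σ k d m → F)
    (hXsub : ↑X ⊆ (⋃ i, ASet Enc V i) ∪ (⋃ j, BSet F d j))
    (hlam : ∀ x ∈ X, lam x ≠ 0)
    (hXsum : ∑ x ∈ X, lam x • x = tVec t) :
    (∀ i, ((↑X : Set (GVec F σ k d m)) ∩ ASet Enc V i).Nonempty) ∧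
    (∀ j, ((↑X : Set (GVec F σ k d m)) ∩ BSet F d j).Nonempty) ∧
    k ≤ ((↑X : Set (GVec F σ k d m)) ∩ ⋃ i, ASet Enc V i).ncard ∧
    m ≤ ((↑X : Set (GVec F σ k d m)) ∩ ⋃ j, BSet F d j).ncard := by

  have h3 : ∀ i : Fin k, ∑ x ∈ X, lam x * x.2.2.1 i = 1 := by
    intro i
    have h := congrFun (congrArg (fun y : GVec F σ k d m => y.2.2.1) hXsum) i
    simpa [tVec, Prod.snd_sum, Prod.fst_sum, Finset.sum_apply, Prod.smul_snd,
      Prod.smul_fst, Pi.smul_apply, smul_eq_mul] using h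
  have h4 : ∀ j : Fin m, ∑ x ∈ X, lam x * x.2.2.2 j = 1 := by
    intro j
    have h := congrFun (congrArg (fun y : GVec F σ k d m => y.2.2.2) hXsum) j
    simpa [tVec, Prod.snd_sum, Prod.fst_sum, Finset.sum_apply, Prod.smul_snd,
      Prod.smul_fst, Pi.smul_apply, smul_eq_mul] using h
  have hAne : ∀ i, ((↑X : Set (GVec F σ k d m)) ∩ ASet Enc V i).Nonempty := by
    intro i
    by_contra h
    rw [Set.not_nonempty_iff_eq_empty, Set.eq_empty_iff_forall_notMem] at h
    have hzero : ∀ x ∈ X, lam x * x.2.2.1 i = 0 := by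
      intro x hx
      rcases hXsub hx with hmem | hmem
      · rcases Set.mem_iUnion.1 hmem with ⟨i', hi'⟩
        obtain ⟨v, hv, rfl⟩ := hi'
        by_cases hii : i = i'
        · subst hii
          exact absurd ⟨hx, ⟨v, hv, rfl⟩⟩ (h _)
        · simp [aVec, hii]
      · rcases Set.mem_iUnion.1 hmem with ⟨j', hj'⟩
        obtain ⟨τ, rfl⟩ := hj'
        simp [bVec]
    have h1 := h3 i
    rw [Finset.sum_eq_zero hzero] at h1
    exact zero_ne_one h1
  have hBne : ∀ j, ((↑X : Set (GVec F σ k d m)) ∩ BSet F d j).Nonempty := by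
    intro j
    by_contra h
    rw [Set.not_nonempty_iff_eq_empty, Set.eq_empty_iff_forall_notMem] at h
    have hzero : ∀ x ∈ X, lam x * x.2.2.2 j = 0 := by
      intro x hx
      rcases hXsub hx with hmem | hmem
      · rcases Set.mem_iUnion.1 hmem with ⟨i', hi'⟩
        obtain ⟨v, hv, rfl⟩ := hi'
        simp [aVec]
      · rcases Set.mem_iUnion.1 hmem with ⟨j', hj'⟩
        obtain ⟨τ, rfl⟩ := hj'
        by_cases hjj : j = j'
        · subst hjj
          exact absurd ⟨hx, ⟨τ, rfl⟩⟩ (h _)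
        · simp [bVec, hjj]
    have h1 := h4 j
    rw [Finset.sum_eq_zero hzero] at h1
    exact zero_ne_one h1
  refine ⟨hAne, hBne, ?_, ?_⟩
  · choose g hgX hgA using hAne
    have hfin : ((↑X : Set (GVec F σ k d m)) ∩ ⋃ i, ASet Enc V i).Finite :=
      X.finite_toSet.inter_of_left _
    have : Finite ↥((↑X : Set (GVec F σ k d m)) ∩ ⋃ i, ASet Enc V i) := hfin.to_subtype
    have hginj : Function.Injective g := by
      intro i i' he
      have h1 := hgA i
      rw [he] at h1
      obtain ⟨v, hv, hveq⟩ := h1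
      obtain ⟨v', hv', hveq'⟩ := hgA i'
      have h2 := congrFun (congrArg (fun y : GVec F σ k d m => y.2.2.1)
        (hveq.trans hveq'.symm)) i
      by_contra hne
      simp [aVec, hne] at h2
    have hf : Function.Injective
        (fun i : Fin k => (⟨g i, Set.mem_inter (hgX i) (Set.mem_iUnion.2 ⟨i, hgA i⟩)⟩ :
          ↥((↑X : Set (GVec F σ k d m)) ∩ ⋃ i, ASet Enc V i))) := by
      intro i i' he
      exact hginj (congrArg Subtype.val he)
    calc k = Nat.card (Fin k) := (Nat.card_eq_fintype_card.trans (Fintype.card_fin k)).symm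
    _ ≤ Nat.card ↥((↑X : Set (GVec F σ k d m)) ∩ ⋃ i, ASet Enc V i) :=
        Nat.card_le_card_of_injective _ hf
    _ = _ := rfl
  · choose g hgX hgB using hBne
    have hfin : ((↑X : Set (GVec F σ k d m)) ∩ ⋃ j, BSet F d j).Finite :=
      X.finite_toSet.inter_of_left _
    have : Finite ↥((↑X : Set (GVec F σ k d m)) ∩ ⋃ j, BSet F d j) := hfin.to_subtype
    have hginj : Function.Injective g := by
      intro j j' he
      have h1 := hgB j
      rw [he] at h1
      obtain ⟨τ, hveq⟩ := h1
      obtain ⟨τ', hveq'⟩ := hgB j'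
      have h2 := congrFun (congrArg (fun y : GVec F σ k d m => y.2.2.2)
        (hveq.trans hveq'.symm)) j
      by_contra hne
      simp [bVec, hne] at h2
    have hf : Function.Injective
        (fun j : Fin m => (⟨g j, Set.mem_inter (hgX j) (Set.mem_iUnion.2 ⟨j, hgB j⟩)⟩ :
          ↥((↑X : Set (GVec F σ k d m)) ∩ ⋃ j, BSet F d j))) := by
      intro j j' he
      exact hginj (congrArg Subtype.val he)
    calc m = Nat.card (Fin m) := (Nat.card_eq_fintype_card.trans (Fintype.card_fin m)).symm
    _ ≤ Nat.card ↥((↑X : Set (GVec F σ k d m)) ∩ ⋃ j, BSet F d j) :=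
        Nat.card_le_card_of_injective _ hf
    _ = _ := rfl
end

section
/- Let (X, λ) be a solution, let j ∈ [m] be such that |X ∩ B_j| = 1, let i* ∈ [k], and suppose X ∩ A_{i*} = {a_{i*,v₁}, …, a_{i*,v_l}} with v₁, …, v_l ∈ V_{i*} distinct and l ≥ 2. Then the symbols C(v₁)[j], …, C(v_l)[j] are not pairwise distinct, i.e., there exist c ≠ c' with C(v_c)[j] = C(v_{c'})[j]. -/
open scoped BigOperators

/-- If `(X, λ)` is a solution, `|X ∩ B_j| = 1`, and `X ∩ A_{i*} = {a_{i*,v₁},…,a_{i*,v_l}}`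
with `v₁,…,v_l ∈ V_{i*}` distinct and `l ≥ 2`, then the symbols `C(v₁)[j],…,C(v_l)[j]`
are not pairwise distinct. -/
theorem codewords_collide_at_unique_B_coordinate
    (p : ℕ) (hp : IsPrimePow p)
    (F : Type) [Field F] [Fintype F] (hF : Fintype.card F = p)
    (σ : Type) [Fintype σ] [DecidableEq σ]
    (k d n m : ℕ) (hk : 1 ≤ k) (hd : 1 ≤ d) (hn : 1 ≤ n) (hm : 1 ≤ m)
    (V : Fin k → Set (Fin d → F)) (hV : ∀ i, (V i).ncard = n)
    (t : Fin d → F)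
    (𝒞 : Set (Fin m → σ))
    (Enc : Fin k → (Fin d → F) → (Fin m → σ))
    (hEncMem : ∀ i, ∀ v ∈ V i, Enc i v ∈ 𝒞)
    (hEncInj : ∀ i, Set.InjOn (Enc i) (V i))
    (X : Finset (GVec F σ k d m)) (lam : GVec F σ k d m → F)
    (hXsub : ↑X ⊆ (⋃ i, ASet Enc V i) ∪ (⋃ j, BSet F d j))
    (hlam : ∀ x ∈ X, lam x ≠ 0)
    (hXsum : ∑ x ∈ X, lam x • x = tVec t)
    (j : Fin m) (hBj : ((↑X : Set (GVec F σ k d m)) ∩ BSet F d j).ncard = 1)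
    (istar : Fin k) (l : ℕ) (hl : 2 ≤ l)
    (v : Fin l → (Fin d → F)) (hvinj : Function.Injective v)
    (hvmem : ∀ c, v c ∈ V istar)
    (hXA : (↑X : Set (GVec F σ k d m)) ∩ ASet Enc V istar
      = Set.range (fun c : Fin l => aVec (Enc istar (v c)) istar (v c))) :
    ∃ c c' : Fin l, c ≠ c' ∧ Enc istar (v c) j = Enc istar (v c') j := by
  by_contra hcon
  push_neg at hcon
  have hdist : ∀ c c' : Fin l, Enc istar (v c) j = Enc istar (v c') j → c = c' := by
    intro c c' h
    by_contra hne
    exact hcon c c' hne h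
  obtain ⟨b, hb⟩ := Set.ncard_eq_one.mp hBj
  have hbmem : b ∈ (↑X : Set (GVec F σ k d m)) ∩ BSet F d j := by
    rw [hb]; exact rfl
  obtain ⟨hbX, hbB⟩ := hbmem
  obtain ⟨τ, hτ⟩ := hbB
  have hτ' : bVec j τ = b := hτ
  -- choose c with symbol different from τ istar
  have hex : ∃ c : Fin l, Enc istar (v c) j ≠ τ istar := by
    by_contra h
    push_neg at h
    have h0 := h ⟨0, by omega⟩
    have h1 := h ⟨1, by omega⟩
    have := hdist ⟨0, by omega⟩ ⟨1, by omega⟩ (h0.trans h1.symm)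
    simp [Fin.ext_iff] at this
  obtain ⟨c, hcτ⟩ := hex
  set sym := Enc istar (v c) j with hsym
  set a := aVec (F := F) (Enc istar (v c)) istar (v c) with ha
  have haX : a ∈ X := by
    have hmem : a ∈ (↑X : Set (GVec F σ k d m)) ∩ ASet Enc V istar := by
      rw [hXA]; exact ⟨c, rfl⟩
    exact hmem.1
  have hsum := congrArg (fun z : GVec F σ k d m => z.2.1 j istar sym) hXsum
  simp only [Prod.snd_sum, Prod.fst_sum, Finset.sum_apply, Prod.smul_snd, Prod.smul_fst,
    Pi.smul_apply, smul_eq_mul, tVec, Pi.zero_apply] at hsum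
  have hother : ∀ x ∈ X, x ≠ a → lam x * x.2.1 j istar sym = 0 := by
    intro x hx hxa
    have hxmem := hXsub hx
    simp only [Set.mem_union, Set.mem_iUnion, ASet, BSet, Set.mem_image,
      Set.mem_range] at hxmem
    rcases hxmem with ⟨i, w, hwV, rfl⟩ | ⟨j', τ', rfl⟩
    · simp only [aVec]
      split_ifs with h
      · exfalso
        obtain ⟨hi, hs⟩ := h
        subst hi
        have hmem : aVec (Enc istar w) istar w ∈
            (↑X : Set (GVec F σ k d m)) ∩ ASet Enc V istar := ⟨hx, ⟨w, hwV, rfl⟩⟩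
        rw [hXA] at hmem
        obtain ⟨c', hc'⟩ := hmem
        have hw : v c' = w := congrArg Prod.fst hc'
        subst hw
        have hcc : c = c' := hdist c c' (hsym.symm.trans hs)
        subst hcc
        exact hxa ha.symm
      · exact mul_zero _
    · simp only [bVec]
      split_ifs with h
      · exfalso
        obtain ⟨hj, hs⟩ := h
        subst hj
        have hmem : bVec j τ' ∈ (↑X : Set (GVec F σ k d m)) ∩ BSet F d j :=
          ⟨hx, ⟨τ', rfl⟩⟩
        rw [hb] at hmem
        have heq : bVec j τ' = bVec j τ := hmem.trans hτ'.symm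
        by_cases hteq : τ' istar = τ istar
        · exact hcτ (hs.trans hteq)
        · have hcoord := congrArg
            (fun z : GVec F σ k d m => z.2.1 j istar (τ' istar)) heq
          simp [bVec, hteq] at hcoord
      · exact mul_zero _
  have hnot : a ∉ X → lam a * a.2.1 j istar sym = 0 := fun h => absurd haX h
  rw [Finset.sum_eq_single a hother hnot] at hsum
  rw [ha] at hsum
  simp only [aVec, ← hsym] at hsum
  simp at hsum
  exact hlam a haX hsum
end

section
/- Assume the following property (P): every X ⊆ A ∪ B with coefficients λ : X → F_p^+ satisfying Σ_{x∈X} λ(x)·x = t' has X ∩ A_i ≠ ∅ for every i ∈ [k], X ∩ B_j ≠ ∅ for every j ∈ [m], and moreover |X ∩ A| ≥ 2k or |X ∩ B| ≥ 2(1−ε)m. Then every X' ⊆ (⋃_{l∈[w], i∈[k]} A'_{l,i}) ∪ (⋃_{j∈[m]} B'_j) with coefficients λ' : X' → F_p^+ satisfying Σ_{x∈X'} λ'(x)·x = t'' has |X'| ≥ (3 − 2ε)·m. -/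
open scoped BigOperators

/-- `A'_{l,i} ⊆ F_p^{wD}`: copies of `A_i` placed in the `l`-th of the `w` blocks,
with zeros elsewhere. -/
def strA {F : Type} [Field F] {D k w : ℕ} (A : Fin k → Set (Fin D → F))
    (l : Fin w) (i : Fin k) : Set (Fin w → Fin D → F) :=
  (fun a : Fin D → F => fun l' => if l' = l then a else 0) '' A i

/-- `B'_j ⊆ F_p^{wD}`: vectors `(b, …, b)` repeating `b ∈ B_j` in all `w` blocks. -/
def strB {F : Type} [Field F] {D m : ℕ} (w : ℕ) (B : Fin m → Set (Fin D → F))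
    (j : Fin m) : Set (Fin w → Fin D → F) :=
  (fun b : Fin D → F => fun _ : Fin w => b) '' B j

/-- The duplication (parameter-stretching) step in the proof of Theorem 4.2:
assuming property (P) for solutions in `F_p^D`, every solution `(X', λ')` of the
stretched instance in `F_p^{wD}` has `|X'| ≥ (3 − 2ε)·m`. -/
theorem stretched_solution_lower_bound
    (p : ℕ) (hp : IsPrimePow p)
    (F : Type) [Field F] [Fintype F] (hF : Fintype.card F = p)
    (D k m w : ℕ) (hD : 1 ≤ D) (hk : 1 ≤ k) (hm : 1 ≤ m) (hw : 1 ≤ w)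
    (hmw : m = w * k)
    (ε : ℝ) (hε0 : 0 < ε) (hε1 : ε < 1)
    (A : Fin k → Set (Fin D → F)) (B : Fin m → Set (Fin D → F))
    (hAfin : ∀ i, (A i).Finite) (hBfin : ∀ j, (B j).Finite)
    (hAA : ∀ i i', i ≠ i' → Disjoint (A i) (A i'))
    (hBB : ∀ j j', j ≠ j' → Disjoint (B j) (B j'))
    (hAB : ∀ i j, Disjoint (A i) (B j))
    (t' : Fin D → F)
    -- property (P)
    (hP : ∀ (X : Finset (Fin D → F)) (lam : (Fin D → F) → F),
      ↑X ⊆ (⋃ i, A i) ∪ (⋃ j, B j) → (∀ x ∈ X, lam x ≠ 0) →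
      ∑ x ∈ X, lam x • x = t' →
      (∀ i, ((↑X : Set (Fin D → F)) ∩ A i).Nonempty) ∧
      (∀ j, ((↑X : Set (Fin D → F)) ∩ B j).Nonempty) ∧
      ((2 * (k : ℝ) ≤ (((↑X : Set (Fin D → F)) ∩ ⋃ i, A i).ncard : ℝ)) ∨
        2 * (1 - ε) * (m : ℝ) ≤ (((↑X : Set (Fin D → F)) ∩ ⋃ j, B j).ncard : ℝ)))
    (X' : Finset (Fin w → Fin D → F)) (lam' : (Fin w → Fin D → F) → F)
    (hX'sub : ↑X' ⊆ (⋃ l, ⋃ i, strA A l i) ∪ (⋃ j, strB w B j))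
    (hlam' : ∀ x ∈ X', lam' x ≠ 0)
    (hsum' : ∑ x ∈ X', lam' x • x = fun _ : Fin w => t') :
    (3 - 2 * ε) * (m : ℝ) ≤ (X'.card : ℝ) := by
  classical
  -- embeddings of A- and B-elements into the stretched space
  set embA : Fin w → (Fin D → F) → (Fin w → Fin D → F) :=
    fun l a l' => if l' = l then a else 0 with hembA
  set embB : (Fin D → F) → (Fin w → Fin D → F) := fun b _ => b with hembB
  -- classification of elements of X'
  have hclass : ∀ x ∈ X', (∃ l i a, a ∈ A i ∧ x = embA l a) ∨
      (∃ j b, b ∈ B j ∧ x = embB b) := by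
    intro x hx
    rcases hX'sub hx with h | h
    · simp only [Set.mem_iUnion, strA, Set.mem_image] at h
      obtain ⟨l, i, a, ha, rfl⟩ := h
      exact Or.inl ⟨l, i, a, ha, rfl⟩
    · simp only [Set.mem_iUnion, strB, Set.mem_image] at h
      obtain ⟨j, b, hb, rfl⟩ := h
      exact Or.inr ⟨j, b, hb, rfl⟩
  -- blockwise coefficients and blockwise solutions
  set lamL : Fin w → (Fin D → F) → F :=
    fun l v => ∑ x ∈ X'.filter (fun x => x l = v), lam' x with hlamL
  set Y : Fin w → Finset (Fin D → F) :=
    fun l => (X'.image (fun x => x l)).filter (fun v => lamL l v ≠ 0 ∧ v ≠ 0) with hYdef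
  have hYne : ∀ l, ∀ v ∈ Y l, v ≠ (0 : Fin D → F) := by
    intro l v hv
    simp only [hYdef, Finset.mem_filter] at hv
    exact hv.2.2
  have hYlam : ∀ l, ∀ v ∈ Y l, lamL l v ≠ 0 := by
    intro l v hv
    simp only [hYdef, Finset.mem_filter] at hv
    exact hv.2.1
  -- each member of a blockwise solution has a canonical lift in X'
  have hrep : ∀ l v, v ∈ Y l →
      (∃ i, v ∈ A i ∧ embA l v ∈ X') ∨ (∃ j, v ∈ B j ∧ embB v ∈ X') := by
    intro l v hv
    have hv0 : v ≠ 0 := hYne l v hv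
    simp only [hYdef, Finset.mem_filter, Finset.mem_image] at hv
    obtain ⟨⟨x, hx, hxl⟩, -⟩ := hv
    rcases hclass x hx with ⟨l', i, a, ha, rfl⟩ | ⟨j, b, hb, rfl⟩
    · have hxl' : (if l = l' then a else 0) = v := hxl
      by_cases hll : l = l'
      · subst hll
        rw [if_pos rfl] at hxl'
        subst hxl'
        exact Or.inl ⟨i, ha, hx⟩
      · rw [if_neg hll] at hxl'
        exact absurd hxl'.symm hv0
    · have hxl' : b = v := hxl
      subst hxl'
      exact Or.inr ⟨j, hb, hx⟩
  -- blockwise sum condition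
  have hYsum : ∀ l, ∑ v ∈ Y l, lamL l v • v = t' := by
    intro l
    have h1 : ∑ x ∈ X', lam' x • (x l) = t' := by
      have h := congrFun hsum' l
      simpa [Finset.sum_apply] using h
    have h2 : ∑ v ∈ X'.image (fun x => x l),
        ∑ x ∈ X'.filter (fun x => x l = v), lam' x • (x l)
        = ∑ x ∈ X', lam' x • (x l) :=
      Finset.sum_fiberwise_of_maps_to (fun x hx => Finset.mem_image_of_mem _ hx) _
    have h3 : ∀ v ∈ X'.image (fun x => x l),
        ∑ x ∈ X'.filter (fun x => x l = v), lam' x • (x l) = lamL l v • v := by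
      intro v _
      simp only [hlamL]
      rw [Finset.sum_smul]
      exact Finset.sum_congr rfl fun x hx => by rw [(Finset.mem_filter.1 hx).2]
    simp only [hYdef]
    calc ∑ v ∈ (X'.image (fun x => x l)).filter (fun v => lamL l v ≠ 0 ∧ v ≠ 0),
          lamL l v • v
        = ∑ v ∈ X'.image (fun x => x l), lamL l v • v := by
          apply Finset.sum_filter_of_ne
          intro v _ hne
          constructor
          · intro h0
            exact hne (by rw [h0, zero_smul])
          · intro h0
            exact hne (by rw [h0, smul_zero])
      _ = ∑ v ∈ X'.image (fun x => x l),
            ∑ x ∈ X'.filter (fun x => x l = v), lam' x • (x l) :=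
          Finset.sum_congr rfl fun v hv => (h3 v hv).symm
      _ = ∑ x ∈ X', lam' x • (x l) := h2
      _ = t' := h1
  have hYsub : ∀ l, ↑(Y l) ⊆ (⋃ i, A i) ∪ (⋃ j, B j) := by
    intro l v hv
    rcases hrep l v hv with ⟨i, hvi, -⟩ | ⟨j, hvj, -⟩
    · exact Or.inl (Set.mem_iUnion.2 ⟨i, hvi⟩)
    · exact Or.inr (Set.mem_iUnion.2 ⟨j, hvj⟩)
  have hPl := fun l => hP (Y l) (lamL l) (hYsub l) (hYlam l) (hYsum l)
  -- the A- and B-parts of the blockwise solutions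
  set SA : Fin w → Finset (Fin D → F) :=
    fun l => (Y l).filter (fun v => v ∈ ⋃ i, A i) with hSA
  set SB : Fin w → Finset (Fin D → F) :=
    fun l => (Y l).filter (fun v => v ∈ ⋃ j, B j) with hSB
  have hSAY : ∀ l, ∀ v ∈ SA l, v ∈ Y l := by
    intro l v hv
    simp only [hSA, Finset.mem_filter] at hv
    exact hv.1
  have hSBY : ∀ l, ∀ v ∈ SB l, v ∈ Y l := by
    intro l v hv
    simp only [hSB, Finset.mem_filter] at hv
    exact hv.1
  have hSAmem : ∀ l, ∀ v ∈ SA l, v ∈ ⋃ i, A i := by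
    intro l v hv
    simp only [hSA, Finset.mem_filter] at hv
    exact hv.2
  have hSBmem : ∀ l, ∀ v ∈ SB l, v ∈ ⋃ j, B j := by
    intro l v hv
    simp only [hSB, Finset.mem_filter] at hv
    exact hv.2
  have hSAcoe : ∀ l, (↑(Y l) : Set (Fin D → F)) ∩ (⋃ i, A i) = ↑(SA l) := by
    intro l
    ext v
    simp [hSA, and_comm]
  have hSBcoe : ∀ l, (↑(Y l) : Set (Fin D → F)) ∩ (⋃ j, B j) = ↑(SB l) := by
    intro l
    ext v
    simp [hSB, and_comm]
  -- blockwise lower bounds on |SA l|, |SB l|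
  have hSAk : ∀ l, k ≤ (SA l).card := by
    intro l
    choose f hf using (hPl l).1
    have hfm : ∀ i : Fin k, f i ∈ SA l := by
      intro i
      simp only [hSA, Finset.mem_filter]
      exact ⟨(hf i).1, Set.mem_iUnion.2 ⟨i, (hf i).2⟩⟩
    calc k = (Finset.univ : Finset (Fin k)).card := by simp
      _ ≤ (SA l).card := by
          apply Finset.card_le_card_of_injOn f (fun i _ => hfm i)
          intro i _ i' _ hfe
          by_contra hne
          exact Set.disjoint_left.mp (hAA i i' hne) (hf i).2
            (by rw [hfe]; exact (hf i').2)
  have hSBm : ∀ l, m ≤ (SB l).card := by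
    intro l
    choose f hf using (hPl l).2.1
    have hfm : ∀ j : Fin m, f j ∈ SB l := by
      intro j
      simp only [hSB, Finset.mem_filter]
      exact ⟨(hf j).1, Set.mem_iUnion.2 ⟨j, (hf j).2⟩⟩
    calc m = (Finset.univ : Finset (Fin m)).card := by simp
      _ ≤ (SB l).card := by
          apply Finset.card_le_card_of_injOn f (fun j _ => hfm j)
          intro j _ j' _ hfe
          by_contra hne
          exact Set.disjoint_left.mp (hBB j j' hne) (hf j).2
            (by rw [hfe]; exact (hf j').2)
  -- lifts land in X'
  have hSAX : ∀ l, ∀ v ∈ SA l, embA l v ∈ X' := by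
    intro l v hv
    rcases hrep l v (hSAY l v hv) with ⟨i, -, hx⟩ | ⟨j, hvj, -⟩
    · exact hx
    · obtain ⟨i, hvi⟩ := Set.mem_iUnion.1 (hSAmem l v hv)
      exact (Set.disjoint_left.mp (hAB i j) hvi hvj).elim
  have hSBX : ∀ l, ∀ v ∈ SB l, embB v ∈ X' := by
    intro l v hv
    rcases hrep l v (hSBY l v hv) with ⟨i, hvi, -⟩ | ⟨j, -, hx⟩
    · obtain ⟨j, hvj⟩ := Set.mem_iUnion.1 (hSBmem l v hv)
      exact (Set.disjoint_left.mp (hAB i j) hvi hvj).elim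
    · exact hx
  -- the main counting inequality
  have hmain : ∀ l0 : Fin w, (∑ l, (SA l).card) + (SB l0).card ≤ X'.card := by
    intro l0
    have hinjA : ∀ l, Set.InjOn (embA l) ↑(SA l) := by
      intro l v _ v' _ he
      have h := congrFun he l
      simpa [hembA] using h
    have hinjB : Set.InjOn embB ↑(SB l0) := by
      intro v _ v' _ he
      exact congrFun he ⟨0, hw⟩
    have hdisjA : ∀ l ∈ (Finset.univ : Finset (Fin w)),
        ∀ l' ∈ (Finset.univ : Finset (Fin w)), l ≠ l' →
        Disjoint ((SA l).image (embA l)) ((SA l').image (embA l')) := by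
      intro l _ l' _ hll
      simp only [Finset.disjoint_left, Finset.mem_image]
      rintro x ⟨v, hv, rfl⟩ ⟨v', hv', he⟩
      have h0 : embA l v l = v := by simp [hembA]
      have h0' : embA l' v' l = 0 := by simp [hembA, hll]
      exact hYne l v (hSAY l v hv) (by rw [← h0, ← he, h0'])
    have hdisjAB : Disjoint (Finset.univ.biUnion fun l => (SA l).image (embA l))
        ((SB l0).image embB) := by
      simp only [Finset.disjoint_left, Finset.mem_biUnion, Finset.mem_image]
      rintro x ⟨l, -, v, hv, rfl⟩ ⟨b, hb, he⟩
      have hvb : b = v := congrFun he l |>.trans (by simp [hembA])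
      obtain ⟨i, hvi⟩ := Set.mem_iUnion.1 (hSAmem l v hv)
      obtain ⟨j, hbj⟩ := Set.mem_iUnion.1 (hSBmem l0 b hb)
      exact Set.disjoint_left.mp (hAB i j) hvi (hvb ▸ hbj)
    have hTsub : (Finset.univ.biUnion fun l => (SA l).image (embA l)) ∪
        (SB l0).image embB ⊆ X' := by
      intro x hx
      rcases Finset.mem_union.1 hx with h | h
      · obtain ⟨l, -, v, hv, rfl⟩ := by
          simpa only [Finset.mem_biUnion, Finset.mem_image] using h
        exact hSAX l v hv
      · obtain ⟨b, hb, rfl⟩ := Finset.mem_image.1 h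
        exact hSBX l0 b hb
    calc (∑ l, (SA l).card) + (SB l0).card
        = ((Finset.univ.biUnion fun l => (SA l).image (embA l)) ∪
            (SB l0).image embB).card := by
          rw [Finset.card_union_of_disjoint hdisjAB, Finset.card_biUnion hdisjA,
            Finset.card_image_of_injOn hinjB]
          congr 1
          exact Finset.sum_congr rfl fun l _ =>
            (Finset.card_image_of_injOn (hinjA l)).symm
      _ ≤ X'.card := Finset.card_le_card hTsub
  -- the dichotomy in terms of SA, SB
  have hdich : ∀ l, (2 * (k : ℝ) ≤ ((SA l).card : ℝ)) ∨
      (2 * (1 - ε) * (m : ℝ) ≤ ((SB l).card : ℝ)) := by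
    intro l
    rcases (hPl l).2.2 with h | h
    · left
      rwa [hSAcoe l, Set.ncard_coe_finset] at h
    · right
      rwa [hSBcoe l, Set.ncard_coe_finset] at h
  have hmr : (m : ℝ) = (w : ℝ) * (k : ℝ) := by exact_mod_cast hmw
  have hm0 : (0 : ℝ) ≤ (m : ℝ) := Nat.cast_nonneg m
  by_cases hc : ∃ l, 2 * (1 - ε) * (m : ℝ) ≤ ((SB l).card : ℝ)
  · obtain ⟨l0, hl0⟩ := hc
    have h1 : ((∑ l, (SA l).card : ℕ) : ℝ) + ((SB l0).card : ℝ) ≤ (X'.card : ℝ) := by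
      exact_mod_cast hmain l0
    have h2 : (m : ℝ) ≤ ((∑ l, (SA l).card : ℕ) : ℝ) := by
      have h2n : m ≤ ∑ l, (SA l).card := by
        calc m = w * k := hmw
          _ = ∑ _l : Fin w, k := by
              simp [Finset.sum_const, Finset.card_univ, mul_comm]
          _ ≤ ∑ l, (SA l).card := Finset.sum_le_sum fun l _ => hSAk l
      exact_mod_cast h2n
    nlinarith [hl0, h1, h2]
  · push_neg at hc
    have hA2 : ∀ l, 2 * (k : ℝ) ≤ ((SA l).card : ℝ) :=
      fun l => (hdich l).resolve_right (not_le.mpr (hc l))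
    have h1 : ((∑ l, (SA l).card : ℕ) : ℝ) + ((SB ⟨0, hw⟩).card : ℝ) ≤ (X'.card : ℝ) := by
      exact_mod_cast hmain ⟨0, hw⟩
    have h2 : 2 * (m : ℝ) ≤ ((∑ l, (SA l).card : ℕ) : ℝ) := by
      have hs : ∑ _l : Fin w, 2 * (k : ℝ) ≤ ∑ l, ((SA l).card : ℝ) :=
        Finset.sum_le_sum fun l _ => hA2 l
      rw [Finset.sum_const, Finset.card_univ, Fintype.card_fin, nsmul_eq_mul] at hs
      rw [Nat.cast_sum] at h1 ⊢
      nlinarith [hs]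
    have h3 : (m : ℝ) ≤ ((SB ⟨0, hw⟩).card : ℝ) := by exact_mod_cast hSBm ⟨0, hw⟩
    nlinarith [mul_nonneg hε0.le hm0, h1, h2, h3]
end

section
/- Let Σ be a finite alphabet, m ≥ 1 an integer, and let 0 < ε ≤ 1 and 0 < δ < 1 be reals. Let 𝒞 ⊆ Σ^m be a code of relative distance at least δ, i.e., any two distinct elements of 𝒞 differ in at least δ·m coordinates. Then every subset S ⊆ 𝒞 that collides on more than ε·m coordinates satisfies |S| ≥ √(2ε/(1−δ)). -/
/-!
A coordinate on which `S` collides is one on which some unordered pair of distinct words of `S`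
agree. Each such pair agrees on at most `(1 - δ) m` coordinates and there are `k (k - 1) / 2`
pairs when `|S| = k`, so `ε m < k (k - 1) / 2 · (1 - δ) m`, whence `k² ≥ 2ε / (1 - δ)`.
-/

open Finset

theorem Finset.card_biUnion_offDiag_le_choose_two_mul {β γ : Type*} [DecidableEq β]
    [DecidableEq γ] (s : Finset β) (t : β → β → Finset γ) (ht : ∀ x y, t x y = t y x) {b : ℝ}
    (hb : ∀ x ∈ s, ∀ y ∈ s, x ≠ y → (#(t x y) : ℝ) ≤ b) :
    (#(s.offDiag.biUnion fun p ↦ t p.1 p.2) : ℝ) ≤ (#s).choose 2 * b := by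
  have hunordered : s.offDiag.biUnion (fun p ↦ t p.1 p.2)
      = (s.offDiag.image Sym2.mk.uncurry).biUnion (Sym2.lift ⟨t, ht⟩) := by
    rw [image_biUnion]; rfl
  rw [hunordered, ← Sym2.card_image_offDiag]
  calc (#((s.offDiag.image Sym2.mk.uncurry).biUnion (Sym2.lift ⟨t, ht⟩)) : ℝ)
      ≤ ∑ z ∈ s.offDiag.image Sym2.mk.uncurry, (#(Sym2.lift ⟨t, ht⟩ z) : ℝ) := by
        exact_mod_cast card_biUnion_le
    _ ≤ _ := by
        rw [← nsmul_eq_mul]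
        refine sum_le_card_nsmul _ _ _ fun z hz ↦ ?_
        obtain ⟨⟨x, y⟩, hxy, rfl⟩ := mem_image.1 hz
        obtain ⟨hx, hy, hne⟩ := mem_offDiag.1 hxy
        exact hb x hx y hy hne

section Words

variable {ι α : Type*} [Fintype ι] [DecidableEq α]

theorem card_filter_eq_add_hammingDist (x y : ι → α) :
    #{j | x j = y j} + hammingDist x y = Fintype.card ι :=
  card_filter_add_card_filter_not _

theorem ncard_setOf_ne_eq_hammingDist (x y : ι → α) :
    {j | x j ≠ y j}.ncard = hammingDist x y := by
  simp [hammingDist, Set.ncard_eq_toFinset_card']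

def collidingCoords (S : Set (ι → α)) : Set ι :=
  {j | ∃ x ∈ S, ∃ y ∈ S, x ≠ y ∧ x j = y j}

theorem ncard_collidingCoords_le {S : Set (ι → α)} (hS : S.Finite) {d : ℝ}
    (hd : ∀ x ∈ S, ∀ y ∈ S, x ≠ y → d ≤ hammingDist x y) :
    ((collidingCoords S).ncard : ℝ) ≤ S.ncard.choose 2 * (Fintype.card ι - d) := by
  classical
  have hcolliding : collidingCoords S = ↑(hS.toFinset.offDiag.biUnion fun p ↦ ({j | p.1 j = p.2 j} : Finset ι)) := by
    ext j
    simp [collidingCoords, and_assoc]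
  rw [hcolliding, Set.ncard_coe_finset, Set.ncard_eq_toFinset_card S hS]
  refine card_biUnion_offDiag_le_choose_two_mul hS.toFinset
    (fun x y ↦ ({j | x j = y j} : Finset ι)) (fun _ _ ↦ filter_congr fun _ _ ↦ eq_comm)
    fun x hx y hy hne ↦ ?_
  have hsum : (#{j | x j = y j} : ℝ) + hammingDist x y = Fintype.card ι := by
    exact_mod_cast card_filter_eq_add_hammingDist x y
  linarith [hd x (hS.mem_toFinset.1 hx) y (hS.mem_toFinset.1 hy) hne]

end Words

theorem collision_number_of_distance_general
    (σ : Type) [Fintype σ] (m : ℕ)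
    (ε δ : ℝ) (hδ1 : δ < 1)
    (𝒞 : Set (Fin m → σ))
    (hdist : ∀ x ∈ 𝒞, ∀ y ∈ 𝒞, x ≠ y →
      δ * (m : ℝ) ≤ (({j : Fin m | x j ≠ y j}).ncard : ℝ))
    (S : Set (Fin m → σ)) (hS : S ⊆ 𝒞)
    (hcol : ε * (m : ℝ) < (({j : Fin m | ∃ x ∈ S, ∃ y ∈ S, x ≠ y ∧ x j = y j}).ncard : ℝ)) :
    Real.sqrt (2 * ε / (1 - δ)) ≤ (S.ncard : ℝ) := by
  classical
  change ε * m < ((collidingCoords S).ncard : ℝ) at hcol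
  have hcount := ncard_collidingCoords_le (Set.toFinite S) (d := δ * m)
    fun x hx y hy hxy ↦ by
      simpa [ncard_setOf_ne_eq_hammingDist] using hdist x (hS hx) y (hS hy) hxy
  rw [Fintype.card_fin, Nat.cast_choose_two] at hcount
  set k : ℝ := (S.ncard : ℝ)
  have hk : 0 ≤ k := Nat.cast_nonneg _
  have hδ : 0 < 1 - δ := by linarith
  have hpairs : ε < k * (k - 1) / 2 * (1 - δ) := by
    refine lt_of_mul_lt_mul_right (a := (m : ℝ)) ?_ (Nat.cast_nonneg m)
    linarith
  rw [Real.sqrt_le_left hk, div_le_iff₀ hδ]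
  nlinarith [mul_nonneg hk hδ.le]

/-- Lemma 3.1 (Karthik–Navon): if `𝒞 ⊆ Σ^m` has relative distance at least `δ`,
then every subset `S ⊆ 𝒞` colliding on more than `ε·m` coordinates has
`|S| ≥ √(2ε/(1−δ))`. -/
theorem collision_number_of_distance
    (σ : Type) [Fintype σ] (m : ℕ) (hm : 1 ≤ m)
    (ε δ : ℝ) (hε0 : 0 < ε) (hε1 : ε ≤ 1) (hδ0 : 0 < δ) (hδ1 : δ < 1)
    (𝒞 : Set (Fin m → σ))
    (hdist : ∀ x ∈ 𝒞, ∀ y ∈ 𝒞, x ≠ y →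
      δ * (m : ℝ) ≤ (({j : Fin m | x j ≠ y j}).ncard : ℝ))
    (S : Set (Fin m → σ)) (hS : S ⊆ 𝒞)
    (hcol : ε * (m : ℝ) < (({j : Fin m | ∃ x ∈ S, ∃ y ∈ S, x ≠ y ∧ x j = y j}).ncard : ℝ)) :
    Real.sqrt (2 * ε / (1 - δ)) ≤ (S.ncard : ℝ) :=
  collision_number_of_distance_general σ m ε δ hδ1 𝒞 hdist S hS hcol
end

section
/- Let F be a field, let r, m be integers with 1 ≤ r < m, and let α₁, …, α_m be distinct elements of F (so m ≤ |F|). Let 𝒞^{RS} = {(P(α₁), …, P(α_m)) : P ∈ F[X], deg P < r} ⊆ F^m be the Reed–Solomon code of dimension r evaluated at these points. Then for every real ε with 0 < ε < 1, every subset S ⊆ 𝒞^{RS} that collides on more than ε·m coordinates satisfies |S| ≥ √(2εm/r). -/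
/-!
Two distinct codewords come from distinct polynomials of degree `< r`, so their difference has
fewer than `r` roots and the codewords agree on fewer than `r` coordinates. Every colliding
coordinate is a coordinate of agreement of some pair of distinct elements of `S`, so a union
bound over the `|S|(|S| - 1)/2` pairs gives `εm < |S|(|S| - 1) r / 2 ≤ |S|² r / 2`.
-/

open Finset Polynomial

variable {ι : Type*}

theorem Polynomial.ncard_eval_eq_eval_le_natDegree_sub {R : Type*} [CommRing R] [IsDomain R]
    {α : ι → R} (hα : Function.Injective α) {P Q : R[X]} (hPQ : P ≠ Q) :
    {j | P.eval (α j) = Q.eval (α j)}.ncard ≤ (P - Q).natDegree := by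
  refine (Set.ncard_le_ncard_of_injOn α (fun j hj => ?_) hα.injOn).trans (ncard_rootSet_le _ R)
  exact mem_rootSet.2 ⟨sub_ne_zero.2 hPQ, by simpa [sub_eq_zero] using hj⟩

def reedSolomon {F : Type*} [Field F] (α : ι → F) (r : ℕ) : Set (ι → F) :=
  {w | ∃ P : F[X], P.degree < r ∧ ∀ j, w j = P.eval (α j)}

theorem ncard_setOf_apply_eq_lt_of_mem_reedSolomon {F : Type*} [Field F] {α : ι → F}
    (hα : Function.Injective α) {r : ℕ} {x y : ι → F} (hx : x ∈ reedSolomon α r)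
    (hy : y ∈ reedSolomon α r) (hxy : x ≠ y) : {j | x j = y j}.ncard < r := by
  obtain ⟨P, hP, rfl⟩ : ∃ P : F[X], P.degree < r ∧ x = fun j => P.eval (α j) :=
    hx.imp fun _ h => h.imp_right funext
  obtain ⟨Q, hQ, rfl⟩ : ∃ Q : F[X], Q.degree < r ∧ y = fun j => Q.eval (α j) :=
    hy.imp fun _ h => h.imp_right funext
  have hPQ : P ≠ Q := by rintro rfl; exact hxy rfl
  refine (ncard_eval_eq_eval_le_natDegree_sub hα hPQ).trans_lt ?_
  rw [natDegree_lt_iff_degree_lt (sub_ne_zero.2 hPQ)]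
  exact (degree_sub_le P Q).trans_lt (max_lt hP hQ)

def collisionSet {β : Type*} (S : Set (ι → β)) : Set ι :=
  {j | ∃ x ∈ S, ∃ y ∈ S, x ≠ y ∧ x j = y j}

theorem ncard_collisionSet_le [Finite ι] {β : Type*} (s : Finset (ι → β)) (d : ℕ)
    (hd : ∀ x ∈ s, ∀ y ∈ s, x ≠ y → {j | x j = y j}.ncard ≤ d) :
    (collisionSet (s : Set (ι → β))).ncard ≤ (#s).choose 2 * d := by
  classical
  have := Fintype.ofFinite ι
  have hcover : collisionSet (s : Set (ι → β)) ⊆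
      ↑((s.powersetCard 2).biUnion fun t => {j | ∀ x ∈ t, ∀ y ∈ t, x j = y j}) := by
    rintro j ⟨x, hx, y, hy, hxy, hj⟩
    simp only [coe_biUnion, mem_coe, mem_powersetCard, Set.mem_iUnion]
    refine ⟨{x, y}, ⟨insert_subset hx (singleton_subset_iff.2 hy), card_pair hxy⟩, ?_⟩
    simp [hj]
  refine (Set.ncard_le_ncard hcover).trans ?_
  rw [Set.ncard_coe_finset, ← card_powersetCard]
  refine card_biUnion_le_card_mul _ _ _ fun t ht => ?_
  obtain ⟨hts, htcard⟩ := mem_powersetCard.1 ht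
  obtain ⟨x, y, hxy, rfl⟩ := card_eq_two.1 htcard
  rw [← Set.ncard_coe_finset]
  refine (Set.ncard_le_ncard fun j hj => ?_).trans (hd x (hts (by simp)) y (hts (by simp)) hxy)
  exact (mem_filter.1 (mem_coe.1 hj)).2 x (mem_insert_self x {y}) y
    (mem_insert_of_mem (mem_singleton_self y))

theorem collision_number_of_reed_solomon_general
    (F : Type) [Field F] (r m : ℕ)
    (α : Fin m → F) (hα : Function.Injective α)
    (ε : ℝ)
    (S : Set (Fin m → F))
    (hS : S ⊆ {w : Fin m → F | ∃ P : Polynomial F,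
      P.degree < (r : ℕ) ∧ ∀ j, w j = P.eval (α j)})
    (hcol : ε * (m : ℝ) < (({j : Fin m | ∃ x ∈ S, ∃ y ∈ S, x ≠ y ∧ x j = y j}).ncard : ℝ)) :
    S.Infinite ∨ Real.sqrt (2 * ε * (m : ℝ) / (r : ℝ)) ≤ (S.ncard : ℝ) := by
  rw [or_iff_not_imp_left, Set.not_infinite]
  intro hfin
  lift S to Finset (Fin m → F) using hfin
  have hcard : (collisionSet (S : Set (Fin m → F))).ncard ≤ (#S).choose 2 * r :=
    ncard_collisionSet_le S r fun x hx y hy hxy =>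
      (ncard_setOf_apply_eq_lt_of_mem_reedSolomon hα (hS hx) (hS hy) hxy).le
  have hreal : 2 * ε * m ≤ (#S : ℝ) ^ 2 * r := by
    have := hcol.trans_le (Nat.cast_le.2 hcard : _ ≤ ((_ * r : ℕ) : ℝ))
    push_cast [Nat.cast_choose_two] at this
    nlinarith [mul_nonneg (Nat.cast_nonneg (#S) : (0 : ℝ) ≤ #S) (Nat.cast_nonneg r : (0 : ℝ) ≤ r)]
  rw [Set.ncard_coe_finset, Real.sqrt_le_iff]
  exact ⟨by positivity, div_le_of_le_mul₀ (by positivity) (by positivity) hreal⟩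

/-- Theorem 3.1: every subset of a Reed–Solomon code of dimension `r` and length `m`
that collides on more than `ε·m` coordinates has size at least `√(2εm/r)`
(an infinite subset trivially satisfies the bound). -/
theorem collision_number_of_reed_solomon
    (F : Type) [Field F] (r m : ℕ) (hr : 1 ≤ r) (hrm : r < m)
    (α : Fin m → F) (hα : Function.Injective α)
    (ε : ℝ) (hε0 : 0 < ε) (hε1 : ε < 1)
    (S : Set (Fin m → F))
    (hS : S ⊆ {w : Fin m → F | ∃ P : Polynomial F,
      P.degree < (r : ℕ) ∧ ∀ j, w j = P.eval (α j)})
    (hcol : ε * (m : ℝ) < (({j : Fin m | ∃ x ∈ S, ∃ y ∈ S, x ≠ y ∧ x j = y j}).ncard : ℝ)) :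
    S.Infinite ∨ Real.sqrt (2 * ε * (m : ℝ) / (r : ℝ)) ≤ (S.ncard : ℝ) :=
  collision_number_of_reed_solomon_general F r m α hα ε S hS hcol
end

section
/- Let q ≥ 2, r ≥ 1, m ≥ 1 be integers and ε ∈ (0,1) a real satisfying (1 − q^{−2/3})^{q^{1/3}} ≥ 1 − ε/2 and m ≥ 16·ε^{−2}·q^{1/3}·(ln q)·r. Let n = q^r and let C(1), …, C(n) be independent random strings in ([q])^m, each of whose m symbols is independent and uniformly distributed on [q]. Then the probability that there exists a subset S ⊆ [n] with |S| ≤ ⌊q^{1/3}⌋ such that the indexed family (C(i))_{i∈S} collides on more than ε·m coordinates is at most exp(−q^{1/3}·(ln q)·r). -/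
set_option maxHeartbeats 1000000

open Finset

lemma rcc_ncard_setOf {α : Type*} [Fintype α] (p : α → Prop) [DecidablePred p] :
    {x | p x}.ncard = (Finset.univ.filter p).card := by
  rw [Set.ncard_eq_toFinset_card', Set.toFinset_setOf]

lemma rcc_col_pair_count {n q : ℕ} (i i' : Fin n) (h : i ≠ i') :
    (Finset.univ.filter fun c : Fin n → Fin q => c i = c i').card ≤ q ^ (n - 1) := by
  classical
  have hcard : Fintype.card ({x : Fin n // x ≠ i} → Fin q) = q ^ (n - 1) := by
    rw [Fintype.card_fun]
    congr 1
    · simp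
    · have h1 := Fintype.card_subtype_compl (fun x : Fin n => x = i)
      have h2 : Fintype.card {x : Fin n // x = i} = 1 := Fintype.card_subtype_eq i
      simp only [h2, Fintype.card_fin] at h1
      convert h1 using 2
  calc (Finset.univ.filter fun c : Fin n → Fin q => c i = c i').card
      ≤ (Finset.univ : Finset ({x : Fin n // x ≠ i} → Fin q)).card := by
        apply Finset.card_le_card_of_injOn (fun c => fun x => c x.1)
        · intro c _; exact Finset.mem_univ _
        · intro c hc c' hc' hcc
          simp only [Finset.coe_filter, Set.mem_setOf_eq, Finset.mem_univ, true_and] at hc hc'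
          funext x
          by_cases hx : x = i
          · subst hx
            rw [hc, hc']
            exact congrFun hcc ⟨i', Ne.symm h⟩
          · exact congrFun hcc ⟨x, hx⟩
    _ = q ^ (n - 1) := by rw [Finset.card_univ, hcard]

lemma rcc_col_bad_count {n q : ℕ} (S : Finset (Fin n)) :
    (Finset.univ.filter fun c : Fin n → Fin q =>
        ∃ i ∈ S, ∃ i' ∈ S, i ≠ i' ∧ c i = c i').card
      ≤ (S.card * S.card - S.card) * q ^ (n - 1) := by
  classical
  have hsub : (Finset.univ.filter fun c : Fin n → Fin q =>
        ∃ i ∈ S, ∃ i' ∈ S, i ≠ i' ∧ c i = c i')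
      ⊆ S.offDiag.biUnion fun p => Finset.univ.filter fun c => c p.1 = c p.2 := by
    intro c hc
    simp only [Finset.mem_filter, Finset.mem_univ, true_and] at hc
    obtain ⟨i, hi, i', hi', hne, hcc⟩ := hc
    exact Finset.mem_biUnion.2 ⟨(i, i'), Finset.mem_offDiag.2 ⟨hi, hi', hne⟩, by simp [hcc]⟩
  calc (Finset.univ.filter fun c : Fin n → Fin q =>
        ∃ i ∈ S, ∃ i' ∈ S, i ≠ i' ∧ c i = c i').card
      ≤ (S.offDiag.biUnion fun p =>
          Finset.univ.filter fun c : Fin n → Fin q => c p.1 = c p.2).card :=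
        Finset.card_le_card hsub
    _ ≤ ∑ p ∈ S.offDiag, (Finset.univ.filter fun c : Fin n → Fin q => c p.1 = c p.2).card :=
        Finset.card_biUnion_le
    _ ≤ ∑ _p ∈ S.offDiag, q ^ (n - 1) :=
        Finset.sum_le_sum fun p hp => rcc_col_pair_count p.1 p.2 (Finset.mem_offDiag.1 hp).2.2
    _ = (S.card * S.card - S.card) * q ^ (n - 1) := by
        rw [Finset.sum_const, smul_eq_mul, Finset.offDiag_card]

lemma rcc_moment {n m q : ℕ} (P : (Fin n → Fin q) → Prop) [DecidablePred P] :
    ∑ ω : Fin n → Fin m → Fin q, ∏ j : Fin m, (if P (fun i => ω i j) then (2:ℝ) else 1)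
      = (∑ c : Fin n → Fin q, (if P c then (2:ℝ) else 1)) ^ m := by
  classical
  have hswap : Function.Bijective
      (Function.swap : (Fin m → Fin n → Fin q) → (Fin n → Fin m → Fin q)) :=
    Function.bijective_iff_has_inverse.2 ⟨Function.swap, fun f => rfl, fun f => rfl⟩
  rw [← Fintype.sum_bijective _ hswap
      (fun σ : Fin m → Fin n → Fin q => ∏ j, if P (σ j) then (2:ℝ) else 1) _ (fun σ => rfl)]
  have h := Finset.prod_univ_sum (fun _ : Fin m => (Finset.univ : Finset (Fin n → Fin q)))
      (fun _ c => if P c then (2:ℝ) else 1)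
  rw [Fintype.piFinset_univ] at h
  rw [← h, Finset.prod_const, Finset.card_univ, Fintype.card_fin]

lemma rcc_prod_ite {m : ℕ} (p : Fin m → Prop) [DecidablePred p] :
    ∏ j : Fin m, (if p j then (2:ℝ) else 1) = 2 ^ (Finset.univ.filter p).card := by
  rw [Finset.prod_ite, Finset.prod_const, Finset.prod_const, one_pow, mul_one]

lemma rcc_sum_ite {α : Type*} [Fintype α] (P : α → Prop) [DecidablePred P] :
    ∑ c : α, (if P c then (2:ℝ) else 1)
      = (Fintype.card α : ℝ) + ((Finset.univ.filter P).card : ℝ) := by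
  have h : ∀ c, (if P c then (2:ℝ) else 1) = 1 + (if P c then 1 else 0) := by
    intro c; split <;> norm_num
  rw [Finset.sum_congr rfl fun c _ => h c, Finset.sum_add_distrib, Finset.sum_boole,
    Finset.sum_const, Finset.card_univ]
  simp

/-- Lemma 3.2 (explicit-parameter form): for a uniformly random code of `q^r` strings
in `[q]^m` with `m ≥ 16 ε⁻² q^{1/3} (ln q) r`, the probability that some subset of at
most `⌊q^{1/3}⌋` indices collides on more than `ε·m` coordinates is at most
`exp(−q^{1/3} (ln q) r)`. -/
theorem random_code_collision_probability
    (q r m : ℕ) (hq : 2 ≤ q) (hr : 1 ≤ r) (hm : 1 ≤ m)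
    (ε : ℝ) (hε0 : 0 < ε) (hε1 : ε < 1)
    (hq' : 1 - ε / 2 ≤ (1 - (q : ℝ) ^ (-(2 : ℝ) / 3)) ^ ((q : ℝ) ^ ((1 : ℝ) / 3)))
    (hm' : 16 / ε ^ 2 * (q : ℝ) ^ ((1 : ℝ) / 3) * Real.log q * (r : ℝ) ≤ (m : ℝ)) :
    (({ω : Fin (q ^ r) → Fin m → Fin q |
        ∃ S : Finset (Fin (q ^ r)), S.card ≤ ⌊(q : ℝ) ^ ((1 : ℝ) / 3)⌋₊ ∧
          ε * (m : ℝ) <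
            (({j : Fin m | ∃ i ∈ S, ∃ i' ∈ S, i ≠ i' ∧ ω i j = ω i' j}).ncard : ℝ)}).ncard : ℝ)
        / (Fintype.card (Fin (q ^ r) → Fin m → Fin q) : ℝ)
      ≤ Real.exp (-((q : ℝ) ^ ((1 : ℝ) / 3) * Real.log q * (r : ℝ))) := by
  classical
  have hq2 : (2:ℝ) ≤ (q:ℝ) := by exact_mod_cast hq
  have hq0 : (0:ℝ) < q := by linarith
  have hq1 : (1:ℝ) < q := by linarith
  set Y : ℝ := (q : ℝ) ^ ((1:ℝ)/3) with hYdef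
  set A : ℝ := Y * Real.log q * r with hAdef
  have hY1 : 1 < Y := (Real.one_lt_rpow_iff_of_pos hq0).2 (Or.inl ⟨hq1, by norm_num⟩)
  have hY0 : 0 < Y := by linarith
  set y : ℝ := (q:ℝ) ^ (-(1:ℝ)/3) with hydef
  have hy0 : 0 < y := Real.rpow_pos_of_pos hq0 _
  have hy1 : y < 1 := Real.rpow_lt_one_of_one_lt_of_neg hq1 (by norm_num)
  have hlogq : 0 < Real.log q := Real.log_pos hq1
  have hr1 : (1:ℝ) ≤ r := by exact_mod_cast hr
  have hm1 : (1:ℝ) ≤ m := by exact_mod_cast hm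
  have hr0 : (0:ℝ) < r := by linarith
  have hA0 : 0 < A := mul_pos (mul_pos hY0 hlogq) hr0
  -- lower bound on ε obtained from hq'
  have hεy : y - y*y ≤ ε/2 := by
    set x : ℝ := (q:ℝ) ^ (-(2:ℝ)/3) with hxdef
    have hx0 : 0 < x := Real.rpow_pos_of_pos hq0 _
    have hx1 : x < 1 := Real.rpow_lt_one_of_one_lt_of_neg hq1 (by norm_num)
    have hYx : Y * x = y := by
      rw [hYdef, hxdef, hydef, ← Real.rpow_add hq0]; norm_num
    have h1 : ((1-x)*(1+x)) ^ Y ≤ 1 :=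
      Real.rpow_le_one (by nlinarith) (by nlinarith) hY0.le
    have h2 : (1-x) ^ Y * (1+x) ^ Y ≤ 1 := by
      rw [← Real.mul_rpow (by linarith) (by linarith)]; exact h1
    have h3 : (0:ℝ) < (1+x) ^ Y := Real.rpow_pos_of_pos (by linarith) _
    have h4 : 1 + y ≤ (1+x) ^ Y := by
      have hb := one_add_mul_self_le_rpow_one_add (by linarith : (-1:ℝ) ≤ x) hY1.le
      rwa [hYx] at hb
    have h6 : (1 - ε/2) * (1+x)^Y ≤ 1 :=
      le_trans (mul_le_mul_of_nonneg_right hq' h3.le) h2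
    have h5 : (1 - ε/2) * (1 + y) ≤ 1 :=
      le_trans (mul_le_mul_of_nonneg_left h4 (by linarith)) h6
    nlinarith [mul_nonneg (by linarith : (0:ℝ) ≤ 1 - y)
        (by nlinarith [h5] : (0:ℝ) ≤ ε/2 + ε*y/2 - y),
      mul_nonneg (mul_nonneg hε0.le hy0.le) hy0.le]
  -- consequence of hm'
  have hεm8 : 2 * A ≤ ε^2 * m / 8 := by
    have hstep := mul_le_mul_of_nonneg_left hm' (by positivity : (0:ℝ) ≤ ε^2/8)
    calc 2*A = ε^2/8 * (16/ε^2 * Y * Real.log q * r) := by field_simp; ring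
      _ ≤ ε^2/8 * m := hstep
      _ = ε^2 * m / 8 := by ring
  -- total count
  set N : ℕ := Fintype.card (Fin (q^r) → Fin m → Fin q) with hNdef
  have hNval : (N:ℝ) = ((q:ℝ) ^ (q^r : ℕ)) ^ m := by
    rw [hNdef, Fintype.card_fun, Fintype.card_fun, Fintype.card_fin, Fintype.card_fin,
      Fintype.card_fin]
    push_cast
    rw [← pow_mul, ← pow_mul, mul_comm]
  have hN0 : (0:ℝ) < N := by rw [hNval]; positivity
  have hn1 : 1 ≤ q ^ r := Nat.one_le_pow _ _ (by omega)
  have hQn0 : (0:ℝ) < (q:ℝ) ^ (q^r : ℕ) := by positivity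
  -- arithmetic identities for y, Y, q
  have e1 : y * (q:ℝ) = Y * Y := by
    have ha := Real.rpow_add hq0 (-(1:ℝ)/3) 1
    have hb := Real.rpow_add hq0 ((1:ℝ)/3) ((1:ℝ)/3)
    rw [Real.rpow_one] at ha
    rw [hydef, hYdef, ← ha, ← hb]
    norm_num
  have e2 : y * y * (q:ℝ) = Y := by
    have ha := Real.rpow_add hq0 (-(1:ℝ)/3) (-(1:ℝ)/3)
    have hb := Real.rpow_add hq0 (-(1:ℝ)/3 + -(1:ℝ)/3) 1
    rw [Real.rpow_one] at hb
    rw [hydef, hYdef, ← ha, ← hb]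
    norm_num
  -- per-subset bound
  have hperS : ∀ S : Finset (Fin (q^r)), (S.card : ℝ) ≤ Y →
      (((Finset.univ.filter fun ω : Fin (q^r) → Fin m → Fin q =>
          ε * m < ((Finset.univ.filter fun j : Fin m =>
            ∃ i ∈ S, ∃ i' ∈ S, i ≠ i' ∧ ω i j = ω i' j).card : ℝ)).card : ℝ))
        ≤ Real.exp (-(2*A)) * N := by
    intro S hSY
    -- column bad count
    have hss : S.card ≤ S.card * S.card := by
      rcases Nat.eq_zero_or_pos S.card with h | h
      · simp [h]
      · exact Nat.le_mul_of_pos_left _ h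
    have hBc : ((Finset.univ.filter fun c : Fin (q^r) → Fin q =>
          ∃ i ∈ S, ∃ i' ∈ S, i ≠ i' ∧ c i = c i').card : ℝ)
        ≤ (ε/2) * (q:ℝ) ^ (q^r : ℕ) := by
      have h1 := rcc_col_bad_count (q := q) S
      have h1' : ((Finset.univ.filter fun c : Fin (q^r) → Fin q =>
            ∃ i ∈ S, ∃ i' ∈ S, i ≠ i' ∧ c i = c i').card : ℝ)
          ≤ ((S.card:ℝ) * S.card - S.card) * (q:ℝ) ^ (q^r - 1 : ℕ) := by
        have h2 := (Nat.cast_le (α := ℝ)).2 h1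
        push_cast [Nat.cast_sub hss] at h2
        exact h2
      have hqpow : (q:ℝ) ^ (q^r : ℕ) = (q:ℝ) * (q:ℝ) ^ (q^r - 1 : ℕ) := by
        obtain ⟨k, hk⟩ : ∃ k : ℕ, q ^ r = k + 1 := ⟨q ^ r - 1, (Nat.sub_add_cancel hn1).symm⟩
        rw [hk, Nat.add_sub_cancel, pow_succ]
        ring
      have hsY2 : ((S.card:ℝ) * S.card - S.card) ≤ Y * Y - Y := by
        have hcast : (0:ℝ) ≤ (S.card : ℝ) := Nat.cast_nonneg _
        linarith only [mul_nonneg (show (0:ℝ) ≤ Y - (S.card:ℝ) by linarith only [hSY])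
          (show (0:ℝ) ≤ Y + (S.card:ℝ) - 1 by linarith only [hSY, hY1, hcast])]
      have hid : (Y * Y - Y) * (q:ℝ) ^ (q^r - 1 : ℕ) = (y - y*y) * (q:ℝ) ^ (q^r : ℕ) := by
        rw [hqpow]
        linear_combination ((q:ℝ) ^ (q^r - 1 : ℕ)) * e2 - ((q:ℝ) ^ (q^r - 1 : ℕ)) * e1
      calc ((Finset.univ.filter fun c : Fin (q^r) → Fin q =>
            ∃ i ∈ S, ∃ i' ∈ S, i ≠ i' ∧ c i = c i').card : ℝ)
          ≤ ((S.card:ℝ) * S.card - S.card) * (q:ℝ) ^ (q^r - 1 : ℕ) := h1'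
        _ ≤ (Y * Y - Y) * (q:ℝ) ^ (q^r - 1 : ℕ) :=
            mul_le_mul_of_nonneg_right hsY2 (by positivity)
        _ = (y - y*y) * (q:ℝ) ^ (q^r : ℕ) := hid
        _ ≤ (ε/2) * (q:ℝ) ^ (q^r : ℕ) := mul_le_mul_of_nonneg_right hεy hQn0.le
    -- moment method
    have hmom := rcc_moment (m := m)
      (P := fun c : Fin (q^r) → Fin q => ∃ i ∈ S, ∃ i' ∈ S, i ≠ i' ∧ c i = c i')
    have hsum' := rcc_sum_ite
      (P := fun c : Fin (q^r) → Fin q => ∃ i ∈ S, ∃ i' ∈ S, i ≠ i' ∧ c i = c i')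
    beta_reduce at hmom hsum'
    have hcardfun : (Fintype.card (Fin (q^r) → Fin q) : ℝ) = (q:ℝ) ^ (q^r : ℕ) := by
      rw [Fintype.card_fun, Fintype.card_fin, Fintype.card_fin]; push_cast; ring
    have h2pos : (0:ℝ) < (2:ℝ) ^ (ε * m : ℝ) := Real.rpow_pos_of_pos (by norm_num) _
    have hkey : ((Finset.univ.filter fun ω : Fin (q^r) → Fin m → Fin q =>
          ε * m < ((Finset.univ.filter fun j : Fin m =>
            ∃ i ∈ S, ∃ i' ∈ S, i ≠ i' ∧ ω i j = ω i' j).card : ℝ)).card : ℝ)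
          * (2:ℝ) ^ (ε * m : ℝ)
        ≤ ((1 + ε/2) * (q:ℝ) ^ (q^r : ℕ)) ^ m := by
      have hterm : ∀ ω ∈ (Finset.univ.filter fun ω : Fin (q^r) → Fin m → Fin q =>
            ε * m < ((Finset.univ.filter fun j : Fin m =>
              ∃ i ∈ S, ∃ i' ∈ S, i ≠ i' ∧ ω i j = ω i' j).card : ℝ)),
          (2:ℝ) ^ (ε * m : ℝ) ≤ ∏ j : Fin m,
            (if ∃ i ∈ S, ∃ i' ∈ S, i ≠ i' ∧ ω i j = ω i' j then (2:ℝ) else 1) := by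
        intro ω hω
        have hω' := (Finset.mem_filter.1 hω).2
        rw [rcc_prod_ite]
        have h := Real.rpow_le_rpow_of_exponent_le (by norm_num : (1:ℝ) ≤ 2) hω'.le
        rwa [Real.rpow_natCast] at h
      calc ((Finset.univ.filter fun ω : Fin (q^r) → Fin m → Fin q =>
            ε * m < ((Finset.univ.filter fun j : Fin m =>
              ∃ i ∈ S, ∃ i' ∈ S, i ≠ i' ∧ ω i j = ω i' j).card : ℝ)).card : ℝ)
            * (2:ℝ) ^ (ε * m : ℝ)
          = ∑ _ω ∈ (Finset.univ.filter fun ω : Fin (q^r) → Fin m → Fin q =>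
              ε * m < ((Finset.univ.filter fun j : Fin m =>
                ∃ i ∈ S, ∃ i' ∈ S, i ≠ i' ∧ ω i j = ω i' j).card : ℝ)),
              (2:ℝ) ^ (ε * m : ℝ) := by
            rw [Finset.sum_const, nsmul_eq_mul]
        _ ≤ ∑ ω ∈ (Finset.univ.filter fun ω : Fin (q^r) → Fin m → Fin q =>
              ε * m < ((Finset.univ.filter fun j : Fin m =>
                ∃ i ∈ S, ∃ i' ∈ S, i ≠ i' ∧ ω i j = ω i' j).card : ℝ)),
              ∏ j : Fin m,
                (if ∃ i ∈ S, ∃ i' ∈ S, i ≠ i' ∧ ω i j = ω i' j then (2:ℝ) else 1) :=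
            Finset.sum_le_sum hterm
        _ ≤ ∑ ω : Fin (q^r) → Fin m → Fin q, ∏ j : Fin m,
              (if ∃ i ∈ S, ∃ i' ∈ S, i ≠ i' ∧ ω i j = ω i' j then (2:ℝ) else 1) :=
            Finset.sum_le_sum_of_subset_of_nonneg (Finset.filter_subset _ _)
              (fun ω _ _ => Finset.prod_nonneg fun j _ => by split <;> norm_num)
        _ = (∑ c : Fin (q^r) → Fin q,
              (if ∃ i ∈ S, ∃ i' ∈ S, i ≠ i' ∧ c i = c i' then (2:ℝ) else 1)) ^ m := hmom
        _ ≤ ((1 + ε/2) * (q:ℝ) ^ (q^r : ℕ)) ^ m := by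
            apply pow_le_pow_left₀ ?_ ?_ m
            · rw [hsum']; positivity
            · rw [hsum', hcardfun]
              linarith only [hBc]
    -- turn into exponentials
    have hpow1 : ((1 + ε/2) * (q:ℝ) ^ (q^r : ℕ)) ^ m ≤ Real.exp (ε/2 * m) * N := by
      rw [mul_pow, hNval]
      apply mul_le_mul_of_nonneg_right ?_ (by positivity)
      calc (1+ε/2)^m ≤ (Real.exp (ε/2))^m :=
            pow_le_pow_left₀ (by linarith) (by linarith [Real.add_one_le_exp (ε/2)]) m
        _ = Real.exp (ε/2 * m) := by rw [← Real.exp_nat_mul, mul_comm]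
    have h2eq : (2:ℝ) ^ (ε * m : ℝ) = Real.exp (Real.log 2 * (ε*m)) :=
      Real.rpow_def_of_pos (by norm_num) _
    have hexp : ε/2*m + 2*A ≤ Real.log 2 * (ε*m) := by
      have hu0 : (0:ℝ) ≤ ε * m := by positivity
      have hm0 : (0:ℝ) ≤ (m:ℝ) := by linarith only [hm1]
      have hε1' : (0:ℝ) ≤ 1 - ε := by linarith only [hε1]
      have hlog58 : (0:ℝ) ≤ Real.log 2 - 5/8 := by
        have hl2 := Real.log_two_gt_d9
        linarith only [hl2]
      have hp1 := mul_nonneg (mul_nonneg hε0.le hm0) hε1'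
      have hp2 := mul_nonneg hlog58 hu0
      linarith only [hεm8, hp1, hp2]
    have hfinal : Real.exp (ε/2 * m) * N ≤ (Real.exp (-(2*A)) * N) * (2:ℝ) ^ (ε * m : ℝ) := by
      calc Real.exp (ε/2 * m) * N ≤ Real.exp (-(2*A) + Real.log 2 * (ε*m)) * N :=
            mul_le_mul_of_nonneg_right (Real.exp_le_exp.2 (by linarith only [hexp])) hN0.le
        _ = (Real.exp (-(2*A)) * N) * (2:ℝ) ^ (ε * m : ℝ) := by
            rw [Real.exp_add, h2eq]; ring
    exact le_of_mul_le_mul_right (le_trans hkey (le_trans hpow1 hfinal)) h2pos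
  -- union bound over subsets of size t
  set t : ℕ := ⌊Y⌋₊ with htdef
  have htY : (t:ℝ) ≤ Y := Nat.floor_le hY0.le
  have htn : t ≤ q ^ r := by
    have h1 : Y ≤ (q:ℝ) := by
      have h := Real.rpow_le_rpow_of_exponent_le hq1.le (by norm_num : (1:ℝ)/3 ≤ 1)
      rwa [Real.rpow_one] at h
    have h2 : t ≤ q := by
      have h3 := Nat.floor_mono h1
      simpa using h3
    exact le_trans h2 (Nat.le_self_pow (by omega) q)
  rw [div_le_iff₀ hN0, rcc_ncard_setOf]
  have hsub : (Finset.univ.filter fun ω : Fin (q^r) → Fin m → Fin q =>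
        ∃ S : Finset (Fin (q^r)), S.card ≤ t ∧
          ε * m < (({j : Fin m | ∃ i ∈ S, ∃ i' ∈ S, i ≠ i' ∧ ω i j = ω i' j}).ncard : ℝ))
      ⊆ (Finset.powersetCard t (Finset.univ : Finset (Fin (q^r)))).biUnion
          (fun S => Finset.univ.filter fun ω : Fin (q^r) → Fin m → Fin q =>
            ε * m < ((Finset.univ.filter fun j : Fin m =>
              ∃ i ∈ S, ∃ i' ∈ S, i ≠ i' ∧ ω i j = ω i' j).card : ℝ)) := by
    intro ω hω
    obtain ⟨S₀, hS₀t, hS₀⟩ := (Finset.mem_filter.1 hω).2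
    rw [rcc_ncard_setOf] at hS₀
    obtain ⟨S, hS₀S, -, hScard⟩ := Finset.exists_subsuperset_card_eq (Finset.subset_univ S₀)
      hS₀t (by simpa using htn)
    refine Finset.mem_biUnion.2 ⟨S, Finset.mem_powersetCard.2 ⟨Finset.subset_univ S, hScard⟩,
      Finset.mem_filter.2 ⟨Finset.mem_univ _, lt_of_lt_of_le hS₀ ?_⟩⟩
    have hmono : (Finset.univ.filter fun j : Fin m =>
          ∃ i ∈ S₀, ∃ i' ∈ S₀, i ≠ i' ∧ ω i j = ω i' j)
        ⊆ Finset.univ.filter fun j : Fin m =>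
          ∃ i ∈ S, ∃ i' ∈ S, i ≠ i' ∧ ω i j = ω i' j := by
      apply Finset.monotone_filter_right
      intro j _ hj
      obtain ⟨i, hi, i', hi', hne, he⟩ := hj
      exact ⟨i, hS₀S hi, i', hS₀S hi', hne, he⟩
    exact_mod_cast Finset.card_le_card hmono
  have hqrt : (((q^r)^t : ℕ) : ℝ) = Real.exp (((r*t : ℕ) : ℝ) * Real.log q) := by
    rw [← Real.log_pow, Real.exp_log (by positivity)]
    push_cast
    rw [pow_mul]
  calc ((Finset.univ.filter fun ω : Fin (q^r) → Fin m → Fin q =>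
        ∃ S : Finset (Fin (q^r)), S.card ≤ t ∧
          ε * m < (({j : Fin m | ∃ i ∈ S, ∃ i' ∈ S, i ≠ i' ∧ ω i j = ω i' j}).ncard : ℝ)).card : ℝ)
      ≤ (((Finset.powersetCard t (Finset.univ : Finset (Fin (q^r)))).biUnion
          (fun S => Finset.univ.filter fun ω : Fin (q^r) → Fin m → Fin q =>
            ε * m < ((Finset.univ.filter fun j : Fin m =>
              ∃ i ∈ S, ∃ i' ∈ S, i ≠ i' ∧ ω i j = ω i' j).card : ℝ))).card : ℝ) := by
        exact_mod_cast Finset.card_le_card hsub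
    _ ≤ ∑ S ∈ Finset.powersetCard t (Finset.univ : Finset (Fin (q^r))),
          ((Finset.univ.filter fun ω : Fin (q^r) → Fin m → Fin q =>
            ε * m < ((Finset.univ.filter fun j : Fin m =>
              ∃ i ∈ S, ∃ i' ∈ S, i ≠ i' ∧ ω i j = ω i' j).card : ℝ)).card : ℝ) := by
        exact_mod_cast Finset.card_biUnion_le
    _ ≤ ∑ _S ∈ Finset.powersetCard t (Finset.univ : Finset (Fin (q^r))),
          Real.exp (-(2*A)) * N := by
        apply Finset.sum_le_sum
        intro S hS
        apply hperS
        rw [(Finset.mem_powersetCard.1 hS).2]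
        exact htY
    _ = ((Finset.powersetCard t (Finset.univ : Finset (Fin (q^r)))).card : ℝ)
          * (Real.exp (-(2*A)) * N) := by
        rw [Finset.sum_const, nsmul_eq_mul]
    _ ≤ Real.exp A * (Real.exp (-(2*A)) * N) := by
        apply mul_le_mul_of_nonneg_right ?_ (by positivity)
        rw [Finset.card_powersetCard, Finset.card_univ, Fintype.card_fin]
        calc ((q^r).choose t : ℝ) ≤ (((q^r)^t : ℕ) : ℝ) := by
              exact_mod_cast Nat.choose_le_pow _ _
          _ = Real.exp (((r*t : ℕ) : ℝ) * Real.log q) := hqrt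
          _ ≤ Real.exp A := by
              apply Real.exp_le_exp.2
              push_cast
              linarith only [hAdef, mul_nonneg (mul_nonneg
                (show (0:ℝ) ≤ Y - (t:ℝ) by linarith only [htY]) hlogq.le) hr0.le]
    _ = Real.exp (-A) * N := by
        rw [← mul_assoc, ← Real.exp_add]
        ring_nf
end

section
/- Let q ≥ 2 and m ≥ 1 be integers, let ε ∈ (0,1) be a real satisfying (1 − q^{−2/3})^{q^{1/3}} ≥ 1 − ε/2, and let s = ⌊q^{1/3}⌋ with s ≥ 1. Let X(1), …, X(s) be independent random strings in ([q])^m, each of whose m symbols is independent and uniformly distributed on [q]. Then the probability that the indexed family (X(c))_{c∈[s]} collides on more than ε·m coordinates is at most exp(−ε²·m/8). -/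
/-!
Read `ω` column by column: the `m` columns `(ω i j)ᵢ ∈ [q]^s` are independent and uniform, and
column `j` is a collision coordinate iff it is not injective. Since `s ≤ q^{1/3} = q^{-2/3} q`,
there are at least `((1 - q^{-2/3}) q)^s ≥ (1 - ε/2) q^s` injective columns, so a column collides
with probability at most `ε/2`. Markov's inequality for `2^{#collisions}`, whose mean factors over
the columns as `(1 + P[collision])^m ≤ (1 + ε/2)^m`, together with `1 + ε/2 ≤ 2^ε e^{-ε²/8}`,
gives the bound.
-/

open Finset

section Injective

variable {α β : Type*} [Fintype α] [DecidableEq α] [Fintype β] [DecidableEq β]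

theorem card_filter_injective :
    #{f : α → β | Function.Injective f} = (Fintype.card β).descFactorial (Fintype.card α) := by
  rw [← Fintype.card_subtype, Fintype.card_congr (Equiv.subtypeInjectiveEquivEmbedding α β),
    Fintype.card_embedding_eq]

theorem pow_le_card_filter_injective {δ : ℝ} (hδ : δ ≤ 1)
    (hcard : Fintype.card α ≤ δ * Fintype.card β) :
    ((1 - δ) * Fintype.card β) ^ Fintype.card α ≤ #{f : α → β | Function.Injective f} := by
  have hle : Fintype.card α ≤ Fintype.card β := by
    exact_mod_cast hcard.trans (mul_le_of_le_one_left (by positivity) hδ)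
  have hbase : (1 - δ) * Fintype.card β ≤ ((Fintype.card β + 1 - Fintype.card α : ℕ) : ℝ) := by
    rw [Nat.cast_sub (by omega)]
    push_cast
    linarith
  rw [card_filter_injective]
  calc ((1 - δ) * Fintype.card β) ^ Fintype.card α
      ≤ ((Fintype.card β + 1 - Fintype.card α : ℕ) : ℝ) ^ Fintype.card α := by
        gcongr
    _ ≤ _ := by exact_mod_cast Nat.pow_sub_le_descFactorial _ _

theorem card_filter_not_injective_le {δ : ℝ} (hδ : δ ≤ 1)
    (hcard : Fintype.card α ≤ δ * Fintype.card β) :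
    (#{f : α → β | ¬Function.Injective f} : ℝ) ≤
      (1 - (1 - δ) ^ Fintype.card α) * Fintype.card (α → β) := by
  have hsplit := card_filter_add_card_filter_not (s := univ) (fun f : α → β => Function.Injective f)
  rw [card_univ, Fintype.card_fun] at hsplit
  have hinj := pow_le_card_filter_injective hδ hcard
  rw [mul_pow] at hinj
  rw [Fintype.card_fun, Nat.cast_pow]
  have hsplit' : (#{f : α → β | Function.Injective f} : ℝ) + #{f : α → β | ¬Function.Injective f}
      = (Fintype.card β : ℝ) ^ Fintype.card α := by exact_mod_cast hsplit
  linarith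

end Injective

section ExponentialMoment

variable {ι α : Type*} [Fintype ι] [DecidableEq ι] [Fintype α] (P : α → Prop) [DecidablePred P]

theorem sum_two_pow_card_filter_apply :
    ∑ ω : ι → α, (2 : ℝ) ^ #{j | P (ω j)} = (Fintype.card α + #{a | P a}) ^ Fintype.card ι := by
  have hcol : ∑ a : α, (if P a then (2 : ℝ) else 1) = Fintype.card α + #{a | P a} := by
    have hsplit := card_filter_add_card_filter_not (s := univ) P
    rw [card_univ] at hsplit
    rw [sum_ite, sum_const, sum_const, ← hsplit]
    push_cast [nsmul_eq_mul]
    ring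
  have hprod (ω : ι → α) : (2 : ℝ) ^ #{j | P (ω j)} = ∏ j, if P (ω j) then (2 : ℝ) else 1 := by
    rw [prod_ite, prod_const, prod_const_one, mul_one]
  simp_rw [hprod]
  rw [← Fintype.prod_sum (fun _ a => if P a then (2 : ℝ) else 1), hcol, prod_const, card_univ]

theorem card_filter_lt_card_filter_apply_mul_le (t : ℝ) :
    #{ω : ι → α | t < #{j | P (ω j)}} * (2 : ℝ) ^ t ≤
      (Fintype.card α + #{a | P a}) ^ Fintype.card ι := by
  rw [← sum_two_pow_card_filter_apply]
  calc #{ω : ι → α | t < #{j | P (ω j)}} * (2 : ℝ) ^ t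
      = ∑ ω : ι → α with t < #{j | P (ω j)}, (2 : ℝ) ^ t := by rw [sum_const, nsmul_eq_mul]
    _ ≤ ∑ ω : ι → α with t < #{j | P (ω j)}, (2 : ℝ) ^ #{j | P (ω j)} := by
      refine sum_le_sum fun ω hω => ?_
      rw [← Real.rpow_natCast]
      exact Real.rpow_le_rpow_of_exponent_le one_le_two (mem_filter.mp hω).2.le
    _ ≤ ∑ ω : ι → α, (2 : ℝ) ^ #{j | P (ω j)} :=
      sum_le_univ_sum_of_nonneg fun _ => by positivity

theorem card_filter_lt_card_filter_apply_div_le [Nonempty α] {p : ℝ}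
    (hP : #{a | P a} ≤ p * Fintype.card α) (t : ℝ) :
    #{ω : ι → α | t < #{j | P (ω j)}} / (Fintype.card (ι → α) : ℝ) ≤
      (1 + p) ^ Fintype.card ι / 2 ^ t := by
  rw [div_le_div_iff₀ (by positivity) (by positivity), Fintype.card_fun, Nat.cast_pow, ← mul_pow]
  calc _ ≤ ((Fintype.card α : ℝ) + #{a | P a}) ^ Fintype.card ι :=
        card_filter_lt_card_filter_apply_mul_le P t
    _ ≤ _ := by gcongr; linarith

end ExponentialMoment

theorem one_add_half_le_two_rpow_mul_exp {ε : ℝ} (hε0 : 0 ≤ ε) (hε1 : ε < 1) :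
    1 + ε / 2 ≤ 2 ^ ε * Real.exp (-(ε ^ 2 / 8)) := by
  have hlog : (0.6931471803 : ℝ) < Real.log 2 := Real.log_two_gt_d9
  calc 1 + ε / 2 ≤ Real.exp (ε / 2) := by linarith [Real.add_one_le_exp (ε / 2)]
    _ ≤ Real.exp (ε * Real.log 2 - ε ^ 2 / 8) := Real.exp_le_exp.mpr (by nlinarith)
    _ = 2 ^ ε * Real.exp (-(ε ^ 2 / 8)) := by
      rw [Real.rpow_def_of_pos two_pos, ← Real.exp_add]
      ring_nf

theorem one_add_half_pow_div_two_rpow_le {ε : ℝ} (hε0 : 0 ≤ ε) (hε1 : ε < 1) (m : ℕ) :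
    (1 + ε / 2) ^ m / 2 ^ (ε * m) ≤ Real.exp (-(ε ^ 2 * m / 8)) := by
  have hpow : ((2 : ℝ) ^ ε * Real.exp (-(ε ^ 2 / 8))) ^ m
      = 2 ^ (ε * m) * Real.exp (-(ε ^ 2 * m / 8)) := by
    rw [mul_pow, ← Real.rpow_natCast ((2 : ℝ) ^ ε), ← Real.rpow_mul zero_le_two,
      ← Real.exp_nat_mul]
    ring_nf
  rw [div_le_iff₀' (by positivity), ← hpow]
  gcongr
  exact one_add_half_le_two_rpow_mul_exp hε0 hε1

theorem ncard_collide_eq_card_filter_not_injective {σ ι α : Type*} [Fintype σ] [DecidableEq σ]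
    [Fintype ι] [DecidableEq ι] [Fintype α] [DecidableEq α] (t : ℝ) :
    {ω : σ → ι → α | t < ({j | ∃ i i' : σ, i ≠ i' ∧ ω i j = ω i' j}).ncard}.ncard =
      #{ω : ι → σ → α | t < #{j | ¬Function.Injective (ω j)}} := by
  have hcol (ω : σ → ι → α) : ({j | ∃ i i' : σ, i ≠ i' ∧ ω i j = ω i' j}).ncard =
      #{j | ¬Function.Injective (Equiv.piComm _ ω j)} := by
    rw [Set.ncard_eq_toFinset_card']
    congr 1
    ext j
    simp [Function.not_injective_iff, Equiv.piComm, and_comm]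
  rw [Set.ncard_eq_toFinset_card']
  refine card_equiv (Equiv.piComm _) fun ω => ?_
  simp [hcol]

theorem random_strings_collision_probability_general
    (q m : ℕ) (hq : 2 ≤ q)
    (ε : ℝ) (hε0 : 0 < ε) (hε1 : ε < 1)
    (hq' : 1 - ε / 2 ≤ (1 - (q : ℝ) ^ (-(2 : ℝ) / 3)) ^ ((q : ℝ) ^ ((1 : ℝ) / 3)))
    (s : ℕ) (hs : s = ⌊(q : ℝ) ^ ((1 : ℝ) / 3)⌋₊) :
    (({ω : Fin s → Fin m → Fin q |
        ε * (m : ℝ) <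
          (({j : Fin m | ∃ i i' : Fin s, i ≠ i' ∧ ω i j = ω i' j}).ncard : ℝ)}).ncard : ℝ)
        / (Fintype.card (Fin s → Fin m → Fin q) : ℝ)
      ≤ Real.exp (-(ε ^ 2 * (m : ℝ) / 8)) := by
  have : NeZero q := ⟨by omega⟩
  have hq1 : (1 : ℝ) < q := by exact_mod_cast hq
  set δ : ℝ := (q : ℝ) ^ (-(2 : ℝ) / 3)
  have hδ0 : 0 ≤ δ := by positivity
  have hδ1 : δ < 1 := Real.rpow_lt_one_of_one_lt_of_neg hq1 (by norm_num)
  have hδq : δ * q = (q : ℝ) ^ ((1 : ℝ) / 3) := by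
    rw [← Real.rpow_add_one (by positivity)]
    norm_num
  have hsδ : (s : ℝ) ≤ (q : ℝ) ^ ((1 : ℝ) / 3) := hs ▸ Nat.floor_le (by positivity)
  have hcol : (#{c : Fin s → Fin q | ¬Function.Injective c} : ℝ) ≤
      ε / 2 * Fintype.card (Fin s → Fin q) := by
    have hpow : 1 - ε / 2 ≤ (1 - δ) ^ s := by
      calc 1 - ε / 2 ≤ (1 - δ) ^ ((q : ℝ) ^ ((1 : ℝ) / 3)) := hq'
        _ ≤ (1 - δ) ^ (s : ℝ) :=
          Real.rpow_le_rpow_of_exponent_ge (by linarith) (by linarith) hsδ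
        _ = (1 - δ) ^ s := Real.rpow_natCast _ s
    refine (card_filter_not_injective_le hδ1.le (by simpa [hδq] using hsδ)).trans ?_
    rw [Fintype.card_fin]
    gcongr
    linarith
  rw [ncard_collide_eq_card_filter_not_injective, Fintype.card_congr (Equiv.piComm _)]
  calc _ ≤ (1 + ε / 2) ^ m / 2 ^ (ε * m) := by
        simpa using card_filter_lt_card_filter_apply_div_le (ι := Fin m) _ hcol (ε * m)
    _ ≤ _ := one_add_half_pow_div_two_rpow_le hε0.le hε1 m

/-- The per-subset Chernoff estimate inside the proof of Lemma 3.2: `s = ⌊q^{1/3}⌋`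
independent uniform strings in `[q]^m` collide on more than `ε·m` coordinates with
probability at most `exp(−ε² m / 8)`. -/
theorem random_strings_collision_probability
    (q m : ℕ) (hq : 2 ≤ q) (hm : 1 ≤ m)
    (ε : ℝ) (hε0 : 0 < ε) (hε1 : ε < 1)
    (hq' : 1 - ε / 2 ≤ (1 - (q : ℝ) ^ (-(2 : ℝ) / 3)) ^ ((q : ℝ) ^ ((1 : ℝ) / 3)))
    (s : ℕ) (hs : s = ⌊(q : ℝ) ^ ((1 : ℝ) / 3)⌋₊) (hs1 : 1 ≤ s) :
    (({ω : Fin s → Fin m → Fin q |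
        ε * (m : ℝ) <
          (({j : Fin m | ∃ i i' : Fin s, i ≠ i' ∧ ω i j = ω i' j}).ncard : ℝ)}).ncard : ℝ)
        / (Fintype.card (Fin s → Fin m → Fin q) : ℝ)
      ≤ Real.exp (-(ε ^ 2 * (m : ℝ) / 8)) :=
  random_strings_collision_probability_general q m hq ε hε0 hε1 hq' s hs
end

section
/- For all real constants c > 0 and ε ∈ (0,1), there exist constants C₁, C₂ > 0 and k₀ ∈ ℕ such that for every integer k ≥ k₀ and every integer n ≥ 2, there exist a finite alphabet Σ with |Σ| ≤ C₁·k³, an integer m ≤ C₂·k·log n, and a set 𝒞 ⊆ Σ^m with |𝒞| = n such that every subset S ⊆ 𝒞 that collides on more than ε·m coordinates satisfies |S| > c·k. -/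
open Finset

namespace CollisionCode

variable {n m a : ℕ}

/-- the bad (non-separated) vectors for a set S -/
def Bset (S : Finset (Fin n)) (a : ℕ) : Finset (Fin n → Fin a) :=
  univ.filter fun v => ∃ x ∈ S, ∃ y ∈ S, x ≠ y ∧ v x = v y

/-- number of functions with two fixed coordinates equal -/
lemma pair_count (x y : Fin n) (hxy : x ≠ y) :
    (univ.filter fun v : Fin n → Fin a => v x = v y).card = a ^ (n - 1) := by
  classical
  rw [← Fintype.card_subtype]
  have hyx : y ≠ x := fun h => hxy h.symm
  have e : {v : Fin n → Fin a // v x = v y} ≃ ({z : Fin n // z ≠ x} → Fin a) :=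
    { toFun := fun v z => v.1 z.1
      invFun := fun w => ⟨fun z => if h : z = x then w ⟨y, hyx⟩ else w ⟨z, h⟩, by
        beta_reduce; rw [dif_pos rfl, dif_neg hyx]⟩
      left_inv := by
        rintro ⟨v, hv⟩
        ext z
        by_cases h : z = x
        · simp [h, hv.symm]
        · simp [h]
      right_inv := by
        intro w
        ext z
        rcases z with ⟨z, hz⟩
        simp [hz] }
  rw [Fintype.card_congr e, Fintype.card_fun, Fintype.card_fin]
  congr 1
  rw [Fintype.card_subtype_compl]
  simp


lemma Bset_card (S : Finset (Fin n)) :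
    (Bset S a).card ≤ S.card ^ 2 * a ^ (n - 1) := by
  classical
  have hsub : Bset S a ⊆ ((S ×ˢ S).filter fun p => p.1 ≠ p.2).biUnion
      (fun p => univ.filter fun v : Fin n → Fin a => v p.1 = v p.2) := by
    intro v hv
    simp only [Bset, mem_filter, mem_univ, true_and] at hv
    obtain ⟨x, hx, y, hy, hxy, hvv⟩ := hv
    exact mem_biUnion.2 ⟨(x, y), by simp [hx, hy, hxy], by simp [hvv]⟩
  calc (Bset S a).card ≤ _ := card_le_card hsub
    _ ≤ ∑ p ∈ (S ×ˢ S).filter fun p => p.1 ≠ p.2,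
        (univ.filter fun v : Fin n → Fin a => v p.1 = v p.2).card := card_biUnion_le
    _ ≤ ∑ p ∈ (S ×ˢ S).filter (fun p => p.1 ≠ p.2), a ^ (n - 1) := by
        apply Finset.sum_le_sum
        intro p hp
        rw [pair_count p.1 p.2 (mem_filter.1 hp).2]
    _ = ((S ×ˢ S).filter fun p => p.1 ≠ p.2).card * a ^ (n - 1) := by
        rw [Finset.sum_const, smul_eq_mul]
    _ ≤ S.card ^ 2 * a ^ (n - 1) := by
        apply Nat.mul_le_mul_right
        calc _ ≤ (S ×ˢ S).card := card_filter_le _ _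
          _ = S.card ^ 2 := by rw [card_product, sq]

/-- counting functions `Fin m → β` constrained on a subset of coordinates -/
lemma constrained_count {β : Type*} [Fintype β] [DecidableEq β] (T : Finset (Fin m))
    (P : Finset β) :
    (univ.filter fun h : Fin m → β => ∀ i ∈ T, h i ∈ P).card
      = P.card ^ T.card * (Fintype.card β) ^ (m - T.card) := by
  classical
  have : (univ.filter fun h : Fin m → β => ∀ i ∈ T, h i ∈ P)
      = Fintype.piFinset (fun i => if i ∈ T then P else univ) := by
    ext h
    simp only [mem_filter, mem_univ, true_and, Fintype.mem_piFinset]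
    constructor
    · intro hh i
      by_cases hi : i ∈ T <;> simp [hi, hh]
    · intro hh i hi
      have := hh i
      rwa [if_pos hi] at this
  rw [this, Fintype.card_piFinset]
  rw [← Finset.prod_filter_mul_prod_filter_not univ (· ∈ T)]
  have h1 : Finset.filter (· ∈ T) univ = T := by ext i; simp
  rw [h1]
  have h2 : ∏ i ∈ T, (if i ∈ T then P else univ).card = P.card ^ T.card := by
    rw [Finset.prod_congr rfl (fun i hi => by rw [if_pos hi]), Finset.prod_const]
  have h3 : ∏ i ∈ Finset.filter (· ∉ T) univ, (if i ∈ T then P else univ).card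
      = (Fintype.card β) ^ (m - T.card) := by
    rw [Finset.prod_congr rfl (fun i hi => by
      rw [if_neg (mem_filter.1 hi).2, card_univ]), Finset.prod_const]
    congr 1
    rw [Finset.filter_not, card_sdiff_of_subset (filter_subset _ _)]
    congr 1
    · simp
    · rw [h1]
  rw [h2, h3]


/-- bad coordinates of the code `h` for the subset `S` -/
def badc (h : Fin m → Fin n → Fin a) (S : Finset (Fin n)) : Finset (Fin m) :=
  univ.filter fun i => h i ∈ Bset S a

lemma choose_le_two_pow (m t : ℕ) : m.choose t ≤ 2 ^ m := by
  rcases le_or_gt t m with h | h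
  · calc m.choose t ≤ ∑ j ∈ range (m+1), m.choose j :=
        Finset.single_le_sum (fun j _ => Nat.zero_le _) (mem_range.2 (Nat.lt_succ_of_le h))
      _ = 2 ^ m := Nat.sum_range_choose m
  · rw [Nat.choose_eq_zero_of_lt h]; exact Nat.zero_le _

lemma badH_card (t : ℕ) (S : Finset (Fin n)) :
    (univ.filter fun h : Fin m → Fin n → Fin a => t ≤ (badc h S).card).card
      ≤ m.choose t * ((Bset S a).card ^ t * (a ^ n) ^ (m - t)) := by
  classical
  have hsub : (univ.filter fun h : Fin m → Fin n → Fin a => t ≤ (badc h S).card)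
      ⊆ (powersetCard t (univ : Finset (Fin m))).biUnion
        (fun T => univ.filter fun h => ∀ i ∈ T, h i ∈ Bset S a) := by
    intro h hh
    rw [mem_filter] at hh
    obtain ⟨T, hTsub, hTcard⟩ := Finset.exists_subset_card_eq hh.2
    refine mem_biUnion.2 ⟨T, ?_, ?_⟩
    · exact mem_powersetCard.2 ⟨subset_univ _, hTcard⟩
    · refine mem_filter.2 ⟨mem_univ _, fun i hi => ?_⟩
      have := hTsub hi
      rw [badc, mem_filter] at this
      exact this.2
  calc _ ≤ _ := card_le_card hsub
    _ ≤ ∑ T ∈ powersetCard t (univ : Finset (Fin m)),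
        (univ.filter fun h : Fin m → Fin n → Fin a => ∀ i ∈ T, h i ∈ Bset S a).card :=
        card_biUnion_le
    _ ≤ ∑ _T ∈ powersetCard t (univ : Finset (Fin m)),
        (Bset S a).card ^ t * (a ^ n) ^ (m - t) := by
        apply Finset.sum_le_sum
        intro T hT
        have hc := (mem_powersetCard.1 hT).2
        rw [constrained_count T (Bset S a), hc]
        apply le_of_eq
        congr 1
        · rw [Fintype.card_fun, Fintype.card_fin, Fintype.card_fin]
    _ = m.choose t * ((Bset S a).card ^ t * (a ^ n) ^ (m - t)) := by
        rw [Finset.sum_const, smul_eq_mul, card_powersetCard, card_univ, Fintype.card_fin]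

lemma noninj_card :
    (univ.filter fun h : Fin m → Fin n → Fin a =>
      ¬ Function.Injective (fun x i => h i x)).card ≤ n ^ 2 * (a ^ (n - 1)) ^ m := by
  classical
  have hsub : (univ.filter fun h : Fin m → Fin n → Fin a =>
      ¬ Function.Injective (fun x i => h i x))
      ⊆ ((univ ×ˢ univ : Finset (Fin n × Fin n)).filter fun p => p.1 ≠ p.2).biUnion
        (fun p => univ.filter fun h => ∀ i : Fin m,
          h i ∈ univ.filter (fun v : Fin n → Fin a => v p.1 = v p.2)) := by
    intro h hh
    rw [mem_filter, Function.Injective] at hh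
    push_neg at hh
    obtain ⟨_, x, y, hxy, hne⟩ := hh
    refine mem_biUnion.2 ⟨(x, y), by simp [hne], ?_⟩
    refine mem_filter.2 ⟨mem_univ _, fun i => ?_⟩
    simp only [mem_filter, mem_univ, true_and]
    exact congrFun hxy i
  calc _ ≤ _ := card_le_card hsub
    _ ≤ ∑ p ∈ (univ ×ˢ univ : Finset (Fin n × Fin n)).filter fun p => p.1 ≠ p.2,
        (univ.filter fun h : Fin m → Fin n → Fin a => ∀ i : Fin m,
          h i ∈ univ.filter (fun v : Fin n → Fin a => v p.1 = v p.2)).card := card_biUnion_le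
    _ ≤ ∑ p ∈ (univ ×ˢ univ : Finset (Fin n × Fin n)).filter fun p => p.1 ≠ p.2,
        (a ^ (n-1)) ^ m := by
        apply Finset.sum_le_sum
        intro p hp
        have : (univ.filter fun h : Fin m → Fin n → Fin a => ∀ i : Fin m,
            h i ∈ univ.filter (fun v : Fin n → Fin a => v p.1 = v p.2))
            = (univ.filter fun h : Fin m → Fin n → Fin a => ∀ i ∈ (univ : Finset (Fin m)),
            h i ∈ univ.filter (fun v : Fin n → Fin a => v p.1 = v p.2)) := by
          simp
        rw [this, constrained_count, pair_count p.1 p.2 (mem_filter.1 hp).2,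
          card_univ, Fintype.card_fin, Nat.sub_self, pow_zero, mul_one]
    _ ≤ n ^ 2 * (a ^ (n-1)) ^ m := by
        rw [Finset.sum_const, smul_eq_mul]
        apply Nat.mul_le_mul_right
        calc _ ≤ (univ ×ˢ univ : Finset (Fin n × Fin n)).card := card_filter_le _ _
          _ = n ^ 2 := by rw [card_product, card_univ, Fintype.card_fin, sq]

lemma master (n m a s t : ℕ) (ha : 1 ≤ a) (hn : 1 ≤ n)
    (hI : 2 * (n ^ s * (2 ^ m * s ^ (2 * t))) ≤ a ^ t)
    (hII : 2 * n ^ 2 < a ^ m) :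
    ∃ h : Fin m → Fin n → Fin a, Function.Injective (fun x i => h i x) ∧
      ∀ S : Finset (Fin n), S.card = s → (badc h S).card < t := by
  classical
  set Bad : Finset (Fin m → Fin n → Fin a) :=
    (univ.filter fun h : Fin m → Fin n → Fin a => ¬ Function.Injective (fun x i => h i x))
    ∪ (powersetCard s (univ : Finset (Fin n))).biUnion
        (fun S => univ.filter fun h : Fin m → Fin n → Fin a => t ≤ (badc h S).card) with hBad
  obtain ⟨n', rfl⟩ : ∃ n', n = n' + 1 := ⟨n - 1, by omega⟩
  have hcard_univ : (univ : Finset (Fin m → Fin (n'+1) → Fin a)).card = (a ^ (n'+1)) ^ m := by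
    rw [card_univ, Fintype.card_fun, Fintype.card_fun, Fintype.card_fin, Fintype.card_fin,
      Fintype.card_fin]
  have hT1 : 2 * ((univ.filter fun h : Fin m → Fin (n'+1) → Fin a =>
      ¬ Function.Injective (fun x i => h i x)).card) < (a ^ (n'+1)) ^ m := by
    calc 2 * _ ≤ 2 * ((n'+1) ^ 2 * (a ^ n') ^ m) :=
          Nat.mul_le_mul_left 2 (noninj_card (n := n'+1) (m := m) (a := a))
      _ = (2 * (n'+1) ^ 2) * (a ^ n') ^ m := by ring
      _ < a ^ m * (a ^ n') ^ m := mul_lt_mul_of_pos_right hII (by positivity)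
      _ = (a ^ (n'+1)) ^ m := by rw [← mul_pow, ← pow_succ']
  have hT2 : 2 * (((n'+1) ^ s) * (m.choose t * (((s ^ 2) * a ^ n') ^ t * (a ^ (n'+1)) ^ (m - t))))
      ≤ (a ^ (n'+1)) ^ m := by
    rcases le_or_gt t m with htm | htm
    · calc 2 * (((n'+1) ^ s) * (m.choose t * (((s ^ 2) * a ^ n') ^ t * (a ^ (n'+1)) ^ (m - t))))
          = (2 * ((n'+1) ^ s * (m.choose t * s ^ (2*t)))) *
              ((a ^ n') ^ t * (a ^ (n'+1)) ^ (m - t)) := by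
            simp only [mul_pow, pow_mul, pow_two]; ring
        _ ≤ (2 * ((n'+1) ^ s * (2 ^ m * s ^ (2*t)))) *
              ((a ^ n') ^ t * (a ^ (n'+1)) ^ (m - t)) := by
            apply Nat.mul_le_mul_right
            apply Nat.mul_le_mul_left
            apply Nat.mul_le_mul_left
            exact mul_le_mul_left (choose_le_two_pow m t) _
        _ ≤ a ^ t * ((a ^ n') ^ t * (a ^ (n'+1)) ^ (m - t)) := mul_le_mul_left hI _
        _ = (a ^ (n'+1)) ^ t * (a ^ (n'+1)) ^ (m - t) := by
            rw [← mul_assoc, ← mul_pow, ← pow_succ']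
        _ = (a ^ (n'+1)) ^ m := by
            rw [← pow_add, Nat.add_sub_cancel' htm]
    · rw [Nat.choose_eq_zero_of_lt htm]
      simp only [Nat.zero_mul, Nat.mul_zero]
      positivity
  have hBadcard : Bad.card < (univ : Finset (Fin m → Fin (n'+1) → Fin a)).card := by
    rw [hcard_univ]
    have hb : ((powersetCard s (univ : Finset (Fin (n'+1)))).biUnion
        (fun S => univ.filter fun h : Fin m → Fin (n'+1) → Fin a =>
          t ≤ (badc h S).card)).card
        ≤ ((n'+1) ^ s) * (m.choose t * (((s ^ 2) * a ^ n') ^ t * (a ^ (n'+1)) ^ (m - t))) := by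
      calc _ ≤ ∑ S ∈ powersetCard s (univ : Finset (Fin (n'+1))),
            (univ.filter fun h : Fin m → Fin (n'+1) → Fin a =>
              t ≤ (badc h S).card).card := card_biUnion_le
        _ ≤ ∑ _S ∈ powersetCard s (univ : Finset (Fin (n'+1))),
            m.choose t * (((s ^ 2) * a ^ n') ^ t * (a ^ (n'+1)) ^ (m - t)) := by
            apply Finset.sum_le_sum
            intro S hS
            have hSc : S.card = s := (mem_powersetCard.1 hS).2
            refine le_trans (badH_card t S) ?_
            apply Nat.mul_le_mul_left
            apply Nat.mul_le_mul_right
            apply Nat.pow_le_pow_left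
            have := Bset_card (a := a) S
            rw [hSc] at this
            simpa using this
        _ = (powersetCard s (univ : Finset (Fin (n'+1)))).card *
              (m.choose t * (((s ^ 2) * a ^ n') ^ t * (a ^ (n'+1)) ^ (m - t))) := by
            rw [Finset.sum_const, smul_eq_mul]
        _ ≤ ((n'+1) ^ s) * _ := by
            apply Nat.mul_le_mul_right
            rw [card_powersetCard, card_univ, Fintype.card_fin]
            exact Nat.choose_le_pow _ _
    have := card_union_le
      (univ.filter fun h : Fin m → Fin (n'+1) → Fin a =>
        ¬ Function.Injective (fun x i => h i x))
      ((powersetCard s (univ : Finset (Fin (n'+1)))).biUnion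
        (fun S => univ.filter fun h : Fin m → Fin (n'+1) → Fin a => t ≤ (badc h S).card))
    rw [← hBad] at this
    refine lt_of_le_of_lt this ?_
    generalize hA : (univ.filter fun h : Fin m → Fin (n'+1) → Fin a =>
      ¬ Function.Injective (fun x i => h i x)).card = A at hT1
    generalize hPP : ((a : ℕ) ^ (n'+1)) ^ m = P at hT1 hT2 ⊢
    generalize hBB : ((powersetCard s (univ : Finset (Fin (n'+1)))).biUnion
        (fun S => univ.filter fun h : Fin m → Fin (n'+1) → Fin a =>
          t ≤ (badc h S).card)).card = BB at hb ⊢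
    generalize hX : ((n'+1) ^ s) * (m.choose t * (((s ^ 2) * a ^ n') ^ t *
      (a ^ (n'+1)) ^ (m - t))) = X at hb hT2
    clear * - hT1 hT2 hb
    omega
  have hnot : ¬ ((univ : Finset (Fin m → Fin (n'+1) → Fin a)) ⊆ Bad) :=
    fun hsub => absurd (card_le_card hsub) (not_le.2 hBadcard)
  obtain ⟨h, -, hh⟩ := Finset.not_subset.1 hnot
  rw [hBad, Finset.mem_union] at hh
  push_neg at hh
  obtain ⟨h1, h2⟩ := hh
  refine ⟨h, ?_, ?_⟩
  · by_contra hni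
    exact h1 (mem_filter.2 ⟨mem_univ _, hni⟩)
  · intro S hS
    by_contra hge
    push_neg at hge
    exact h2 (mem_biUnion.2 ⟨S, mem_powersetCard.2 ⟨subset_univ _, hS⟩,
      mem_filter.2 ⟨mem_univ _, hge⟩⟩)

end CollisionCode

set_option maxHeartbeats 1000000 in
open Real in
lemma numericI (c ε : ℝ) (hc : 0 < c) (hε0 : 0 < ε) (hε1 : ε < 1)
    (k n m s t : ℕ)
    (hk1 : 1 ≤ (k:ℝ)) (hn2 : 2 ≤ n)
    (hlogk : 2 * max (Real.log c) 0 + 1 + 1/ε ≤ Real.log k)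
    (hs1 : 1 ≤ s) (hsck : (s:ℝ) ≤ c * k)
    (hm : (4*c+4)/ε * k * Real.log n ≤ (m:ℝ))
    (ht : ε * (m:ℝ) ≤ (t:ℝ)) :
    2 * (n ^ s * (2 ^ m * s ^ (2 * t))) ≤ (k ^ 3) ^ t := by
  set L := max (Real.log c) 0 with hL
  have hn1R : (1:ℝ) ≤ n := by exact_mod_cast le_trans one_le_two (by exact_mod_cast hn2)
  have hn0R : (0:ℝ) < n := lt_of_lt_of_le one_pos hn1R
  have hs1R : (1:ℝ) ≤ s := by exact_mod_cast hs1
  have hs0R : (0:ℝ) < s := lt_of_lt_of_le one_pos hs1R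
  have hk0R : (0:ℝ) < k := lt_of_lt_of_le one_pos hk1
  have hm0R : (0:ℝ) ≤ m := Nat.cast_nonneg m
  have ht0R : (0:ℝ) ≤ t := Nat.cast_nonneg t
  have hlog2pos : (0:ℝ) < Real.log 2 := Real.log_pos one_lt_two
  have hlogn : Real.log 2 ≤ Real.log n := Real.log_le_log two_pos (by exact_mod_cast hn2)
  have hlogn0 : (0:ℝ) < Real.log n := lt_of_lt_of_le hlog2pos hlogn
  have hlog21 : Real.log 2 ≤ 1 := le_of_lt (lt_trans Real.log_two_lt_d9 (by norm_num))
  -- positivity of both sides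
  have hX : (0:ℝ) < 2 * ((n:ℝ) ^ s * (2 ^ m * (s:ℝ) ^ (2 * t))) := by positivity
  have hY : (0:ℝ) < ((k:ℝ) ^ 3) ^ t := by positivity
  -- the log inequality
  have hlogs : Real.log s ≤ L + Real.log k := by
    calc Real.log s ≤ Real.log (c * k) := Real.log_le_log hs0R hsck
      _ = Real.log c + Real.log k := Real.log_mul (ne_of_gt hc) (ne_of_gt hk0R)
      _ ≤ L + Real.log k := by
          have : Real.log c ≤ L := le_max_left _ _
          linarith
  have hεm : ε * (m:ℝ) ≥ (4*c+4) * k * Real.log n := by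
    have h1 : ε * ((4*c+4)/ε * k * Real.log n) = (4*c+4) * k * Real.log n := by
      field_simp
    nlinarith [mul_le_mul_of_nonneg_left hm (le_of_lt hε0)]
  have htlb : (4*c+4) * (k:ℝ) * Real.log n ≤ t := le_trans hεm ht
  have hA3 : (s:ℝ) * Real.log n + Real.log 2 ≤ t := by
    have h1 : (s:ℝ) * Real.log n ≤ c * k * Real.log n :=
      mul_le_mul_of_nonneg_right hsck (le_of_lt hlogn0)
    have h2 : (3*c+3) * (k:ℝ) * Real.log n ≥ Real.log 2 := by
      nlinarith
    nlinarith
  have hp1 : 2 * (t:ℝ) * Real.log s ≤ 2 * t * (L + Real.log k) := by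
    apply mul_le_mul_of_nonneg_left hlogs
    positivity
  have hp2 : (t:ℝ) * (2*L + 1 + 1/ε) ≤ t * Real.log k :=
    mul_le_mul_of_nonneg_left hlogk ht0R
  have hp3 : (m:ℝ) * Real.log 2 ≤ m := by nlinarith
  have hp4 : (m:ℝ) ≤ (t:ℝ) * (1/ε) := by
    rw [mul_one_div, le_div_iff₀ hε0]
    linarith [ht]
  have hL0 : 0 ≤ L := le_max_right _ _
  have key : Real.log (2 * ((n:ℝ) ^ s * (2 ^ m * (s:ℝ) ^ (2 * t))))
      ≤ Real.log (((k:ℝ) ^ 3) ^ t) := by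
    rw [Real.log_mul (by norm_num) (by positivity),
        Real.log_mul (by positivity) (by positivity),
        Real.log_mul (by positivity) (by positivity),
        Real.log_pow, Real.log_pow, Real.log_pow, Real.log_pow, Real.log_pow]
    push_cast
    nlinarith [hp1, hp2, hp3, hp4, hA3, ht0R]
  have hc2 : (2 * (n ^ s * (2 ^ m * s ^ (2 * t))) : ℝ) ≤ ((k:ℝ) ^ 3) ^ t := by
    calc (2 * ((n:ℝ) ^ s * (2 ^ m * (s:ℝ) ^ (2 * t)))) 
        = Real.exp (Real.log (2 * ((n:ℝ) ^ s * (2 ^ m * (s:ℝ) ^ (2 * t))))) :=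
          (Real.exp_log hX).symm
      _ ≤ Real.exp (Real.log (((k:ℝ) ^ 3) ^ t)) := Real.exp_le_exp.mpr key
      _ = ((k:ℝ) ^ 3) ^ t := Real.exp_log hY
  exact_mod_cast hc2

private lemma numericII (c ε : ℝ) (hc : 0 < c) (hε0 : 0 < ε) (hε1 : ε < 1)
    (k n m : ℕ)
    (hk1 : 1 ≤ (k:ℝ)) (hn2 : 2 ≤ n)
    (hlogk1 : 1 ≤ Real.log k)
    (hm : (4*c+4)/ε * k * Real.log n ≤ (m:ℝ)) :
    2 * n ^ 2 < (k ^ 3) ^ m := by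
  have hn0R : (0:ℝ) < n := by exact_mod_cast lt_of_lt_of_le two_pos hn2
  have hk0R : (0:ℝ) < k := lt_of_lt_of_le one_pos hk1
  have hlog2pos : (0:ℝ) < Real.log 2 := Real.log_pos one_lt_two
  have hlogn : Real.log 2 ≤ Real.log n := Real.log_le_log two_pos (by exact_mod_cast hn2)
  have hlogn0 : (0:ℝ) < Real.log n := lt_of_lt_of_le hlog2pos hlogn
  have hlog21 : Real.log 2 ≤ 1 := le_of_lt (lt_trans Real.log_two_lt_d9 (by norm_num))
  have hm4 : 4 * Real.log n ≤ (m:ℝ) := by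
    have hB : (4:ℝ) ≤ (4*c+4)/ε := by
      rw [le_div_iff₀ hε0]
      nlinarith
    nlinarith [mul_le_mul_of_nonneg_right (mul_le_mul hB hk1 zero_le_one (by positivity)) (le_of_lt hlogn0)]
  have hX : (0:ℝ) < 2 * (n:ℝ) ^ 2 := by positivity
  have hY : (0:ℝ) < ((k:ℝ) ^ 3) ^ m := by positivity
  have key : Real.log (2 * (n:ℝ) ^ 2) < Real.log (((k:ℝ) ^ 3) ^ m) := by
    rw [Real.log_mul (by norm_num) (by positivity), Real.log_pow, Real.log_pow, Real.log_pow]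
    push_cast
    have hm0 : (0:ℝ) ≤ m := Nat.cast_nonneg m
    nlinarith [mul_le_mul_of_nonneg_left hlogk1 (by positivity : (0:ℝ) ≤ 3 * (m:ℝ))]
  have hc2 : (2 * (n:ℝ) ^ 2) < ((k:ℝ) ^ 3) ^ m := by
    calc (2 * (n:ℝ) ^ 2) = Real.exp (Real.log (2 * (n:ℝ) ^ 2)) := (Real.exp_log hX).symm
      _ < Real.exp (Real.log (((k:ℝ) ^ 3) ^ m)) := Real.exp_lt_exp.mpr key
      _ = ((k:ℝ) ^ 3) ^ m := Real.exp_log hY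
  exact_mod_cast hc2

set_option maxHeartbeats 1000000 in
/-- Lemma 3.3, existence form: for all constants `c > 0` and `ε ∈ (0,1)` there are
constants `C₁, C₂ > 0` and `k₀` such that for all `k ≥ k₀` and `n ≥ 2` there is a code
of size `n` over an alphabet of size at most `C₁ k³`, of length at most `C₂ k log n`,
whose `ε`-collision number exceeds `c·k`. -/
theorem exists_code_with_large_collision_number
    (c ε : ℝ) (hc : 0 < c) (hε0 : 0 < ε) (hε1 : ε < 1) :
    ∃ C₁ C₂ : ℝ, 0 < C₁ ∧ 0 < C₂ ∧ ∃ k₀ : ℕ,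
      ∀ k : ℕ, k₀ ≤ k → ∀ n : ℕ, 2 ≤ n →
      ∃ (a m : ℕ) (𝒞 : Set (Fin m → Fin a)),
        (a : ℝ) ≤ C₁ * (k : ℝ) ^ 3 ∧
        (m : ℝ) ≤ C₂ * (k : ℝ) * Real.log n ∧
        𝒞.ncard = n ∧
        ∀ S ⊆ 𝒞,
          ε * (m : ℝ) < (({j : Fin m | ∃ x ∈ S, ∃ y ∈ S, x ≠ y ∧ x j = y j}).ncard : ℝ) →
          c * (k : ℝ) < (S.ncard : ℝ) := by
  classical
  set L := max (Real.log c) 0 with hLdef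
  refine ⟨1, (4*c+4)/ε + 1, one_pos, by positivity,
    ⌈Real.exp (2*L+1+1/ε)⌉₊ + ⌈c⌉₊ + ⌈1/c⌉₊ + 2, ?_⟩
  intro k hk n hn
  have hk2 : 2 ≤ k := by omega
  have hkR : (2:ℝ) ≤ k := by exact_mod_cast hk2
  have hk1 : (1:ℝ) ≤ k := by linarith
  have hk0R : (0:ℝ) < k := by linarith
  have hlog2pos : (0:ℝ) < Real.log 2 := Real.log_pos one_lt_two
  have hlognge : Real.log 2 ≤ Real.log n := Real.log_le_log two_pos (by exact_mod_cast hn)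
  have hlogn0 : (0:ℝ) < Real.log n := lt_of_lt_of_le hlog2pos hlognge
  have hL0 : 0 ≤ L := le_max_right _ _
  have hexpk : Real.exp (2*L+1+1/ε) ≤ k := by
    have h1 : (⌈Real.exp (2*L+1+1/ε)⌉₊ : ℝ) ≤ k := by
      have : ⌈Real.exp (2*L+1+1/ε)⌉₊ ≤ k := by omega
      exact_mod_cast this
    exact le_trans (Nat.le_ceil _) h1
  have hlogk : 2*L+1+1/ε ≤ Real.log k := by
    have := Real.log_le_log (Real.exp_pos _) hexpk
    rwa [Real.log_exp] at this
  have h1ε : (1:ℝ) ≤ 1/ε := by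
    rw [le_div_iff₀ hε0]; linarith
  have hlogk1 : 1 ≤ Real.log k := by linarith
  have hck : c ≤ (k:ℝ) := by
    have h1 : (⌈c⌉₊ : ℝ) ≤ k := by
      have : ⌈c⌉₊ ≤ k := by omega
      exact_mod_cast this
    exact le_trans (Nat.le_ceil _) h1
  have hck1 : (1:ℝ) ≤ c * k := by
    have h1 : (⌈1/c⌉₊ : ℝ) ≤ k := by
      have : ⌈1/c⌉₊ ≤ k := by omega
      exact_mod_cast this
    have h2 : 1/c ≤ (k:ℝ) := le_trans (Nat.le_ceil _) h1
    rw [div_le_iff₀ hc] at h2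
    linarith [mul_comm c (k:ℝ)]
  by_cases hsmall : n ≤ k ^ 3
  · -- trivial construction with distinct constant codewords
    set g : Fin n → Fin 1 → Fin (k ^ 3) := fun x _ => Fin.castLE hsmall x with hg
    have ginj : Function.Injective g := fun u v huv =>
      Fin.castLE_injective _ (congrFun huv 0)
    refine ⟨k ^ 3, 1, ↑(Finset.image g Finset.univ), ?_, ?_, ?_, ?_⟩
    · push_cast; linarith [sq_nonneg (k:ℝ)]
    · push_cast
      have h3 : (2:ℝ) * Real.log 2 ≤ (k:ℝ) * Real.log n :=
        mul_le_mul hkR hlognge hlog2pos.le (by linarith)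
      have h2 : (1:ℝ) ≤ (k:ℝ) * Real.log n := by nlinarith [Real.log_two_gt_d9]
      have h4 : (0:ℝ) ≤ (4*c+4)/ε := by positivity
      nlinarith [mul_nonneg h4 (by linarith : (0:ℝ) ≤ (k:ℝ) * Real.log n)]
    · rw [Set.ncard_coe_finset, Finset.card_image_of_injective _ ginj, Finset.card_univ,
        Fintype.card_fin]
    · intro S hS hcol
      exfalso
      have hempty : {j : Fin 1 | ∃ x ∈ S, ∃ y ∈ S, x ≠ y ∧ x j = y j} = ∅ := by
        ext j
        simp only [Set.mem_setOf_eq, Set.mem_empty_iff_false, iff_false]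
        rintro ⟨x, hx, y, hy, hxy, hj⟩
        obtain ⟨u, -, rfl⟩ := by
          simpa only [Finset.coe_image, Set.mem_image, Finset.mem_coe, Finset.mem_univ,
            true_and] using hS hx
        obtain ⟨v, -, rfl⟩ := by
          simpa only [Finset.coe_image, Set.mem_image, Finset.mem_coe, Finset.mem_univ,
            true_and] using hS hy
        exact hxy (congrArg g (Fin.castLE_injective _ hj))
      rw [hempty] at hcol
      simp only [Set.ncard_empty, Nat.cast_zero, Nat.cast_one] at hcol
      linarith
  · push_neg at hsmall
    set s := ⌊c * (k:ℝ)⌋₊ with hs_def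
    set m := ⌈(4*c+4)/ε * k * Real.log n⌉₊ with hm_def
    set t := ⌊ε * (m:ℝ)⌋₊ + 1 with ht_def
    have hs1 : 1 ≤ s := Nat.le_floor (by exact_mod_cast hck1)
    have hsck : (s:ℝ) ≤ c * k := Nat.floor_le (by positivity)
    have hmlb : (4*c+4)/ε * k * Real.log n ≤ (m:ℝ) := Nat.le_ceil _
    have hmub : (m:ℝ) ≤ (4*c+4)/ε * k * Real.log n + 1 :=
      (Nat.ceil_lt_add_one (by positivity)).le
    have htR : ε * (m:ℝ) < (t:ℝ) := by
      rw [ht_def]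
      push_cast
      exact Nat.lt_floor_add_one _
    have hn3R : ((k:ℝ) ^ 3) < n := by exact_mod_cast hsmall
    have hsnR : (s:ℝ) < n := by
      have e1 : c * (k:ℝ) ≤ (k:ℝ) * k := mul_le_mul_of_nonneg_right hck hk0R.le
      have e2 : (k:ℝ) * k ≤ (k:ℝ) ^ 3 := by
        nlinarith [mul_nonneg (mul_nonneg hk0R.le hk0R.le) (by linarith : (0:ℝ) ≤ (k:ℝ) - 1)]
      linarith
    have hsn : s ≤ n := le_of_lt (by exact_mod_cast hsnR)
    have hI := numericI c ε hc hε0 hε1 k n m s t hk1 hn hlogk hs1 hsck hmlb htR.le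
    have hII := numericII c ε hc hε0 hε1 k n m hk1 hn hlogk1 hmlb
    obtain ⟨h, hinj, hgood⟩ := CollisionCode.master n m (k ^ 3) s t
      (Nat.one_le_iff_ne_zero.mpr (by positivity)) (by omega) hI hII
    set f : Fin n → Fin m → Fin (k ^ 3) := fun x i => h i x with hf
    have hfinj : Function.Injective f := hinj
    refine ⟨k ^ 3, m, ↑(Finset.image f Finset.univ), ?_, ?_, ?_, ?_⟩
    · push_cast; linarith [sq_nonneg (k:ℝ)]
    · have hklogn : (1:ℝ) ≤ k * Real.log n := by nlinarith [Real.log_two_gt_d9]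
      calc (m:ℝ) ≤ (4*c+4)/ε * k * Real.log n + 1 := hmub
        _ ≤ (4*c+4)/ε * k * Real.log n + 1 * (k * Real.log n) := by linarith
        _ = ((4*c+4)/ε + 1) * k * Real.log n := by ring
    · rw [Set.ncard_coe_finset, Finset.card_image_of_injective _ hfinj, Finset.card_univ,
        Fintype.card_fin]
    · intro S hS hcol
      set P := Finset.univ.filter (fun x => f x ∈ S) with hP
      have hSP : S = ↑(P.image f) := by
        ext y
        simp only [Finset.coe_image, Set.mem_image, Finset.mem_coe]
        constructor
        · intro hy
          obtain ⟨u, -, rfl⟩ := by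
            simpa only [Finset.coe_image, Set.mem_image, Finset.mem_coe, Finset.mem_univ,
              true_and] using hS hy
          exact ⟨u, Finset.mem_filter.2 ⟨Finset.mem_univ _, hy⟩, rfl⟩
        · rintro ⟨u, hu, rfl⟩
          exact (Finset.mem_filter.1 hu).2
      have hcard : S.ncard = P.card := by
        rw [hSP, Set.ncard_coe_finset, Finset.card_image_of_injective _ hfinj]
      have hcolset : {j : Fin m | ∃ x ∈ S, ∃ y ∈ S, x ≠ y ∧ x j = y j}
          = ↑(CollisionCode.badc h P) := by
        ext j
        simp only [Set.mem_setOf_eq, Finset.mem_coe, CollisionCode.badc, CollisionCode.Bset,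
          Finset.mem_filter, Finset.mem_univ, true_and]
        constructor
        · rintro ⟨x, hx, y, hy, hxy, hj⟩
          rw [hSP] at hx hy
          simp only [Finset.coe_image, Set.mem_image, Finset.mem_coe] at hx hy
          obtain ⟨u, hu, rfl⟩ := hx
          obtain ⟨v, hv, rfl⟩ := hy
          exact ⟨u, hu, v, hv, fun huv => hxy (congrArg f huv), hj⟩
        · rintro ⟨u, hu, v, hv, huv, hj⟩
          refine ⟨f u, ?_, f v, ?_, fun hfe => huv (hfinj hfe), hj⟩
          · exact (Finset.mem_filter.1 hu).2
          · exact (Finset.mem_filter.1 hv).2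
      rw [hcolset, Set.ncard_coe_finset] at hcol
      rw [hcard]
      by_contra hle
      push_neg at hle
      have hPs : P.card ≤ s := Nat.le_floor hle
      obtain ⟨Q, hPQ, hQcard⟩ := Finset.exists_superset_card_eq hPs
        (by simpa [Fintype.card_fin] using hsn)
      have hmono : CollisionCode.badc h P ⊆ CollisionCode.badc h Q := by
        intro i hi
        simp only [CollisionCode.badc, CollisionCode.Bset, Finset.mem_filter,
          Finset.mem_univ, true_and] at hi ⊢
        obtain ⟨x, hx, y, hy, hxy, hij⟩ := hi
        exact ⟨x, hPQ hx, y, hPQ hy, hxy, hij⟩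
      have h1 : t ≤ (CollisionCode.badc h P).card := by
        have := (Nat.floor_lt (by positivity)).mpr hcol
        omega
      have h2 := hgood Q hQcard
      have h3 := Finset.card_le_card hmono
      omega
end

section
/- Let Σ' be a finite alphabet, let g, m ≥ 1 be integers and m' = g·m, and let C' ⊆ (Σ')^{m'} be a set of strings. Let φ : (Σ')^{m'} → ((Σ')^g)^m be the bijection that groups each g consecutive coordinates of a string into a single coordinate over the alphabet (Σ')^g, and let C = φ(C'). Let h ≥ 0 be an integer and ε ∈ (0,1) a real. If every subset S' ⊆ C' that collides on more than ε·m' coordinates satisfies |S'| > h, then every subset S ⊆ C that collides on more than ε·m coordinates satisfies |S| > h. -/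
/-- The grouping bijection: `regroup σ g m` turns a string of length `g·m` over `σ` into
a string of length `m` over the alphabet `σ^g` by merging each `g` consecutive
coordinates into one. -/
def regroup (σ : Type) (g m : ℕ) (x : Fin (g * m) → σ) : Fin m → Fin g → σ :=
  fun j i => x ⟨(j : ℕ) * g + (i : ℕ), by
    calc (j : ℕ) * g + (i : ℕ) < (j : ℕ) * g + g := Nat.add_lt_add_left i.isLt _
      _ = ((j : ℕ) + 1) * g := by ring
      _ ≤ m * g := Nat.mul_le_mul_right g j.isLt
      _ = g * m := Nat.mul_comm m g⟩

lemma ncard_prod_aux {α β : Type*} (s : Set α) (t : Set β) :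
    (s ×ˢ t).ncard = s.ncard * t.ncard := by
  rw [← Nat.card_coe_set_eq, ← Nat.card_coe_set_eq, ← Nat.card_coe_set_eq,
    Nat.card_congr (Equiv.Set.prod s t), Nat.card_prod]

lemma regroup_injective (σ : Type) (g m : ℕ) (hg : 0 < g) :
    Function.Injective (regroup σ g m) := by
  intro x y hxy
  funext k
  have hj : (k : ℕ) / g < m :=
    Nat.div_lt_of_lt_mul k.isLt
  have hi : (k : ℕ) % g < g := Nat.mod_lt _ hg
  have h1 := congrFun (congrFun hxy ⟨(k : ℕ) / g, hj⟩) ⟨(k : ℕ) % g, hi⟩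
  simp only [regroup] at h1
  have hidx : (k : ℕ) / g * g + (k : ℕ) % g = (k : ℕ) := Nat.div_add_mod' _ _
  have : x ⟨(k : ℕ) / g * g + (k : ℕ) % g, by omega⟩ = x k := by
    congr 1
    apply Fin.ext
    simpa using hidx
  rw [this] at h1
  rw [h1]
  congr 1
  apply Fin.ext
  simpa using hidx

/-- The 'merging' step in the proof of Lemma 3.4: grouping each `g` consecutive
coordinates into blocks does not decrease the `ε`-collision number of a code. -/
theorem collision_number_of_regrouped_code
    (σ : Type) [Fintype σ] (g m : ℕ) (hg : 1 ≤ g) (hm : 1 ≤ m)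
    (ε : ℝ) (hε0 : 0 < ε) (hε1 : ε < 1) (h : ℕ)
    (C' : Set (Fin (g * m) → σ))
    (hC' : ∀ S' ⊆ C',
      ε * ((g * m : ℕ) : ℝ) <
        (({j : Fin (g * m) | ∃ x ∈ S', ∃ y ∈ S', x ≠ y ∧ x j = y j}).ncard : ℝ) →
      h < S'.ncard)
    (S : Set (Fin m → Fin g → σ)) (hS : S ⊆ regroup σ g m '' C')
    (hcol : ε * (m : ℝ) <
      (({j : Fin m | ∃ x ∈ S, ∃ y ∈ S, x ≠ y ∧ x j = y j}).ncard : ℝ)) :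
    h < S.ncard := by
  have hg0 : 0 < g := hg
  have hinj := regroup_injective σ g m hg0
  set S' : Set (Fin (g * m) → σ) := C' ∩ regroup σ g m ⁻¹' S with hS'def
  have hS'sub : S' ⊆ C' := Set.inter_subset_left
  have himg : regroup σ g m '' S' = S := by
    apply Set.Subset.antisymm
    · rintro _ ⟨x, ⟨_, hx⟩, rfl⟩; exact hx
    · intro s hs
      obtain ⟨c, hc, rfl⟩ := hS hs
      exact ⟨c, ⟨hc, hs⟩, rfl⟩
  have hcard : S'.ncard = S.ncard := by
    rw [← himg, Set.ncard_image_of_injective _ hinj]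
  -- the block injection
  set ψ : Fin m × Fin g → Fin (g * m) := fun p =>
    ⟨(p.1 : ℕ) * g + (p.2 : ℕ), by
      calc (p.1 : ℕ) * g + (p.2 : ℕ) < (p.1 : ℕ) * g + g := Nat.add_lt_add_left p.2.isLt _
        _ = ((p.1 : ℕ) + 1) * g := by ring
        _ ≤ m * g := Nat.mul_le_mul_right g p.1.isLt
        _ = g * m := Nat.mul_comm m g⟩ with hψdef
  have hψinj : Function.Injective ψ := by
    have hdiv : ∀ (j : Fin m) (i : Fin g), ((j : ℕ) * g + (i : ℕ)) / g = (j : ℕ) := by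
      intro j i
      rw [Nat.mul_comm, Nat.mul_add_div hg0, Nat.div_eq_of_lt i.isLt, Nat.add_zero]
    rintro ⟨j1, i1⟩ ⟨j2, i2⟩ hpq
    have he : (j1 : ℕ) * g + (i1 : ℕ) = (j2 : ℕ) * g + (i2 : ℕ) := congrArg Fin.val hpq
    have hj : (j1 : ℕ) = (j2 : ℕ) := by rw [← hdiv j1 i1, ← hdiv j2 i2, he]
    rw [hj] at he
    have hi : (i1 : ℕ) = (i2 : ℕ) := Nat.add_left_cancel he
    exact Prod.ext (Fin.ext hj) (Fin.ext hi)
  set T : Set (Fin m) := {j : Fin m | ∃ x ∈ S, ∃ y ∈ S, x ≠ y ∧ x j = y j} with hTdef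
  set T' : Set (Fin (g * m)) :=
    {j : Fin (g * m) | ∃ x ∈ S', ∃ y ∈ S', x ≠ y ∧ x j = y j} with hT'def
  have hsub : ψ '' (T ×ˢ (Set.univ : Set (Fin g))) ⊆ T' := by
    rintro _ ⟨⟨j, i⟩, ⟨hj, -⟩, rfl⟩
    obtain ⟨x, hx, y, hy, hxy, hcoll⟩ := hj
    obtain ⟨x', hx'C, hx'⟩ := hS hx
    obtain ⟨y', hy'C, hy'⟩ := hS hy
    refine ⟨x', ⟨hx'C, by rw [Set.mem_preimage, hx']; exact hx⟩,
      y', ⟨hy'C, by rw [Set.mem_preimage, hy']; exact hy⟩, ?_, ?_⟩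
    · intro hcon; exact hxy (by rw [← hx', ← hy', hcon])
    · have hx2 : x' (ψ (j, i)) = x j i := by
        rw [← hx']; rfl
      have hy2 : y' (ψ (j, i)) = y j i := by
        rw [← hy']; rfl
      rw [hx2, hy2, hcoll]
  have hcnt : T.ncard * g ≤ T'.ncard := by
    calc T.ncard * g = T.ncard * (Set.univ : Set (Fin g)).ncard := by
          rw [Set.ncard_univ, Nat.card_eq_fintype_card, Fintype.card_fin]
      _ = (T ×ˢ (Set.univ : Set (Fin g))).ncard := (ncard_prod_aux _ _).symm
      _ = (ψ '' (T ×ˢ (Set.univ : Set (Fin g)))).ncard :=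
          (Set.ncard_image_of_injective _ hψinj).symm
      _ ≤ T'.ncard := Set.ncard_le_ncard hsub (Set.toFinite _)
  have hkey : ε * ((g * m : ℕ) : ℝ) < (T'.ncard : ℝ) := by
    have h1 : ε * ((g * m : ℕ) : ℝ) = (g : ℝ) * (ε * (m : ℝ)) := by
      push_cast; ring
    have h2 : (g : ℝ) * (ε * (m : ℝ)) < (g : ℝ) * (T.ncard : ℝ) := by
      apply mul_lt_mul_of_pos_left hcol
      exact_mod_cast hg0
    have h3 : ((T.ncard * g : ℕ) : ℝ) ≤ (T'.ncard : ℝ) := Nat.cast_le.mpr hcnt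
    push_cast at h3
    have hcm : (g : ℝ) * (T.ncard : ℝ) = (T.ncard : ℝ) * (g : ℝ) := mul_comm _ _
    linarith
  have := hC' S' hS'sub hkey
  rwa [hcard] at this
end

section
/- For all real constants c > 1 and ε ∈ (0,1), there exist constants C₁, C₂, C₃ > 0 and k₀ ∈ ℕ such that for every integer k ≥ k₀ and every integer n ≥ (C₃·k³)^k, there exist a finite alphabet Σ with |Σ| ≤ C₁·n^{1/k}, an integer m ≤ C₂·k²·log k, and a set 𝒞 ⊆ Σ^m with |𝒞| = n such that every subset S ⊆ 𝒞 that collides on more than ε·m coordinates satisfies |S| > c·k. -/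
open Finset


lemma choose_le_two_pow (m t : ℕ) : m.choose t ≤ 2 ^ m := by
  rcases le_or_gt t m with h | h
  · calc m.choose t ≤ ∑ i ∈ range (m+1), m.choose i :=
        Finset.single_le_sum (f := fun i => m.choose i) (fun i _ => Nat.zero_le _)
          (mem_range.mpr (Nat.lt_succ_of_le h))
    _ = 2 ^ m := Nat.sum_range_choose m
  · rw [Nat.choose_eq_zero_of_lt h]; positivity

lemma card_eq_pair (a n : ℕ) (hn : 2 ≤ n) (i i' : Fin n) (hii : i ≠ i') :
    (univ.filter (fun v : Fin n → Fin a => v i = v i')).card ≤ a ^ (n - 1) := by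
  classical
  have hsub : (univ.filter (fun v : Fin n → Fin a => v i = v i')) ⊆
      (univ : Finset (Fin a)).biUnion (fun b =>
        Fintype.piFinset (fun x => if x = i ∨ x = i' then {b} else univ)) := by
    intro v hv
    simp only [mem_filter, mem_univ, true_and] at hv
    refine mem_biUnion.mpr ⟨v i, mem_univ _, ?_⟩
    rw [Fintype.mem_piFinset]
    intro x
    by_cases hx : x = i ∨ x = i'
    · rw [if_pos hx]
      rcases hx with rfl | rfl
      · simp
      · simp [hv]
    · rw [if_neg hx]; exact mem_univ _
  refine (Finset.card_le_card hsub).trans ?_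
  refine (Finset.card_biUnion_le).trans ?_
  have hcard : ∀ b : Fin a,
      (Fintype.piFinset (fun x : Fin n => if x = i ∨ x = i' then ({b} : Finset (Fin a)) else univ)).card
        ≤ a ^ (n - 2) := by
    intro b
    have ha : 0 < a := b.pos
    rw [Fintype.card_piFinset]
    set f : Fin n → ℕ := fun x => ((if x = i ∨ x = i' then ({b} : Finset (Fin a)) else univ)).card with hf
    have h1 : f i = 1 := by simp [f]
    have h2 : f i' = 1 := by simp [f]
    have := Finset.mul_prod_erase Finset.univ f (Finset.mem_univ i)
    rw [← this, h1, one_mul]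
    have hi' : i' ∈ (univ : Finset (Fin n)).erase i := by
      simp [Finset.mem_erase, hii.symm]
    rw [← Finset.mul_prod_erase _ f hi', h2, one_mul]
    refine (Finset.prod_le_pow_card _ _ a ?_).trans ?_
    · intro x _
      simp only [f]
      split
      · simpa using (show 1 ≤ a from ha)
      · simp
    · apply Nat.pow_le_pow_right ha
      rw [Finset.card_erase_of_mem hi', Finset.card_erase_of_mem (Finset.mem_univ i)]
      simp only [card_univ, Fintype.card_fin]
      omega
  calc ∑ b : Fin a, (Fintype.piFinset (fun x : Fin n => if x = i ∨ x = i' then ({b} : Finset (Fin a)) else univ)).card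
      ≤ ∑ _b : Fin a, a ^ (n - 2) := Finset.sum_le_sum (fun b _ => hcard b)
    _ = a * a ^ (n - 2) := by rw [Finset.sum_const, card_univ, Fintype.card_fin, smul_eq_mul]
    _ = a ^ (n - 1) := by
        rw [← pow_succ']
        congr 1
        omega


lemma count_main (a n m s t : ℕ) (hn2 : 2 ≤ n) (hs2 : 2 ≤ s) (hsn : s ≤ n)
    (ht1 : 1 ≤ t) (htm : t ≤ m)
    (hmain : n ^ s * 2 ^ m * s ^ (2 * t) < a ^ t) :
    ∃ g : Fin m → Fin n → Fin a,
      ∀ T : Finset (Fin n), T.card = s →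
        (univ.filter (fun j => ∃ i ∈ T, ∃ i' ∈ T, i ≠ i' ∧ g j i = g j i')).card < t := by
  classical
  have ha : 0 < a := by
    rcases Nat.eq_zero_or_pos a with rfl | h
    · rw [Nat.zero_pow (by omega)] at hmain; omega
    · exact h
  set Coll : Finset (Fin n) → Finset (Fin n → Fin a) := fun T =>
    univ.filter (fun v => ∃ i ∈ T, ∃ i' ∈ T, i ≠ i' ∧ v i = v i') with hColl
  -- bound on Coll
  have hCollCard : ∀ T : Finset (Fin n), T.card = s → (Coll T).card ≤ s ^ 2 * a ^ (n - 1) := by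
    intro T hT
    have hsub : Coll T ⊆ ((T ×ˢ T).filter (fun p => p.1 ≠ p.2)).biUnion
        (fun p => univ.filter (fun v : Fin n → Fin a => v p.1 = v p.2)) := by
      intro v hv
      simp only [Coll, mem_filter, mem_univ, true_and] at hv
      obtain ⟨i, hi, i', hi', hne, heq⟩ := hv
      refine mem_biUnion.mpr ⟨(i, i'), ?_, ?_⟩
      · simp [Finset.mem_filter, Finset.mem_product, hi, hi', hne]
      · simp [heq]
    refine (Finset.card_le_card hsub).trans (Finset.card_biUnion_le.trans ?_)
    calc ∑ p ∈ (T ×ˢ T).filter (fun p => p.1 ≠ p.2),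
          (univ.filter (fun v : Fin n → Fin a => v p.1 = v p.2)).card
        ≤ ∑ _p ∈ (T ×ˢ T).filter (fun p => p.1 ≠ p.2), a ^ (n - 1) := by
          refine Finset.sum_le_sum ?_
          intro p hp
          simp only [mem_filter] at hp
          exact card_eq_pair a n hn2 p.1 p.2 hp.2
      _ ≤ s ^ 2 * a ^ (n - 1) := by
          rw [Finset.sum_const, smul_eq_mul]
          apply Nat.mul_le_mul_right
          calc ((T ×ˢ T).filter (fun p => p.1 ≠ p.2)).card ≤ (T ×ˢ T).card :=
              Finset.card_filter_le _ _
            _ = s ^ 2 := by rw [Finset.card_product, hT, sq]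
  -- the bad set
  set Bad : Finset (Fin m → Fin n → Fin a) :=
    univ.filter (fun g => ∃ T : Finset (Fin n), T.card = s ∧
      t ≤ (univ.filter (fun j => ∃ i ∈ T, ∃ i' ∈ T, i ≠ i' ∧ g j i = g j i')).card) with hBad
  have hBadSub : Bad ⊆ (univ.powersetCard s).biUnion (fun T =>
      ((univ : Finset (Fin m)).powersetCard t).biUnion (fun J =>
        Fintype.piFinset (fun j => if j ∈ J then Coll T else univ))) := by
    intro g hg
    simp only [Bad, mem_filter, mem_univ, true_and] at hg
    obtain ⟨T, hT, hcard⟩ := hg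
    obtain ⟨J, hJsub, hJcard⟩ := Finset.exists_subset_card_eq hcard
    refine mem_biUnion.mpr ⟨T, Finset.mem_powersetCard_univ.mpr hT,
      mem_biUnion.mpr ⟨J, Finset.mem_powersetCard_univ.mpr hJcard, ?_⟩⟩
    rw [Fintype.mem_piFinset]
    intro j
    by_cases hj : j ∈ J
    · rw [if_pos hj]
      have := hJsub hj
      simp only [mem_filter, mem_univ, true_and] at this
      simp only [Coll, mem_filter, mem_univ, true_and]
      exact this
    · rw [if_neg hj]; exact mem_univ _
  -- card of each piFinset
  have hPiCard : ∀ T : Finset (Fin n), T.card = s → ∀ J : Finset (Fin m), J.card = t →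
      (Fintype.piFinset (fun j => if j ∈ J then Coll T else univ)).card
        ≤ (s ^ 2 * a ^ (n - 1)) ^ t * (a ^ n) ^ (m - t) := by
    intro T hT J hJ
    rw [Fintype.card_piFinset]
    have : ∀ j : Fin m, ((if j ∈ J then Coll T else univ)).card
        = if j ∈ J then (Coll T).card else a ^ n := by
      intro j
      split
      · rfl
      · rw [card_univ]; simp [Fintype.card_fun]
    rw [Finset.prod_congr rfl (fun j _ => this j), Finset.prod_ite, Finset.prod_const,
      Finset.prod_const]
    have h1 : (univ.filter (fun j => j ∈ J)).card = t := by
      rw [Finset.filter_mem_eq_inter, Finset.univ_inter, hJ]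
    have h2 : (univ.filter (fun j => j ∉ J)).card = m - t := by
      have : univ.filter (fun j => j ∉ J) = Jᶜ := by
        ext j; simp
      rw [this, Finset.card_compl, Fintype.card_fin, hJ]
    rw [h1, h2]
    exact Nat.mul_le_mul_right _ (Nat.pow_le_pow_left (hCollCard T hT) t)
  -- total bound
  have hBadCard : Bad.card <
      Fintype.card (Fin m → Fin n → Fin a) := by
    have h1 : Bad.card ≤ n.choose s * (m.choose t * ((s ^ 2 * a ^ (n - 1)) ^ t * (a ^ n) ^ (m - t))) := by
      refine (Finset.card_le_card hBadSub).trans (Finset.card_biUnion_le.trans ?_)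
      calc ∑ T ∈ univ.powersetCard s, (((univ : Finset (Fin m)).powersetCard t).biUnion (fun J =>
            Fintype.piFinset (fun j => if j ∈ J then Coll T else univ))).card
          ≤ ∑ T ∈ univ.powersetCard s, m.choose t * ((s ^ 2 * a ^ (n - 1)) ^ t * (a ^ n) ^ (m - t)) := by
            refine Finset.sum_le_sum ?_
            intro T hT
            refine Finset.card_biUnion_le.trans ?_
            calc ∑ J ∈ (univ : Finset (Fin m)).powersetCard t,
                  (Fintype.piFinset (fun j => if j ∈ J then Coll T else univ)).card
                ≤ ∑ _J ∈ (univ : Finset (Fin m)).powersetCard t,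
                    (s ^ 2 * a ^ (n - 1)) ^ t * (a ^ n) ^ (m - t) := by
                  refine Finset.sum_le_sum ?_
                  intro J hJ
                  exact hPiCard T (Finset.mem_powersetCard_univ.mp hT) J
                    (Finset.mem_powersetCard_univ.mp hJ)
              _ = m.choose t * ((s ^ 2 * a ^ (n - 1)) ^ t * (a ^ n) ^ (m - t)) := by
                  rw [Finset.sum_const, smul_eq_mul, Finset.card_powersetCard, card_univ,
                    Fintype.card_fin]
        _ = n.choose s * (m.choose t * ((s ^ 2 * a ^ (n - 1)) ^ t * (a ^ n) ^ (m - t))) := by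
            rw [Finset.sum_const, smul_eq_mul, Finset.card_powersetCard, card_univ,
              Fintype.card_fin]
    have hcardF : Fintype.card (Fin m → Fin n → Fin a) = a ^ (n * m) := by
      simp [Fintype.card_fun, ← pow_mul]
    rw [hcardF]
    refine h1.trans_lt ?_
    -- n.choose s * (m.choose t * ((s^2 a^{n-1})^t (a^n)^{m-t})) < a^{nm}
    have e1 : (s ^ 2 * a ^ (n - 1)) ^ t = s ^ (2 * t) * a ^ ((n - 1) * t) := by
      rw [mul_pow, ← pow_mul, ← pow_mul]
    have e2 : (a ^ n) ^ (m - t) = a ^ (n * (m - t)) := by rw [← pow_mul]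
    have hexp : (n - 1) * t + n * (m - t) + t = n * m := by
      obtain ⟨n', rfl⟩ : ∃ n', n = n' + 1 := ⟨n - 1, by omega⟩
      obtain ⟨d, rfl⟩ : ∃ d, m = t + d := ⟨m - t, by omega⟩
      simp only [Nat.add_sub_cancel, Nat.add_sub_cancel_left]
      ring
    calc n.choose s * (m.choose t * ((s ^ 2 * a ^ (n - 1)) ^ t * (a ^ n) ^ (m - t)))
        ≤ n ^ s * (2 ^ m * ((s ^ 2 * a ^ (n - 1)) ^ t * (a ^ n) ^ (m - t))) := by
          refine Nat.mul_le_mul (Nat.choose_le_pow n s) (Nat.mul_le_mul (choose_le_two_pow m t) le_rfl)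
      _ = (n ^ s * 2 ^ m * s ^ (2 * t)) * a ^ ((n - 1) * t + n * (m - t)) := by
          rw [e1, e2, pow_add]; ring
      _ < a ^ t * a ^ ((n - 1) * t + n * (m - t)) := by
          exact Nat.mul_lt_mul_of_lt_of_le hmain le_rfl (Nat.pow_pos ha)
      _ = a ^ (n * m) := by rw [← pow_add, ← hexp]; congr 1; omega
  -- extract a good g
  obtain ⟨g, hg⟩ : ∃ g : Fin m → Fin n → Fin a, g ∉ Bad := by
    by_contra h
    push_neg at h
    have : (univ : Finset (Fin m → Fin n → Fin a)) ⊆ Bad := fun g _ => h g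
    have := Finset.card_le_card this
    rw [Finset.card_univ] at this
    omega
  refine ⟨g, ?_⟩
  intro T hT
  by_contra hcon
  push_neg at hcon
  exact hg (by simp only [Bad, mem_filter, mem_univ, true_and]; exact ⟨T, hT, hcon⟩)

lemma good_code (a n m s t : ℕ) (hn2 : 2 ≤ n) (hs2 : 2 ≤ s) (hsn : s ≤ n)
    (ht1 : 1 ≤ t) (htm : t ≤ m)
    (hmain : n ^ s * 2 ^ m * s ^ (2 * t) < a ^ t) :
    ∃ 𝒞 : Set (Fin m → Fin a), 𝒞.ncard = n ∧
      ∀ S ⊆ 𝒞, t ≤ ({j : Fin m | ∃ x ∈ S, ∃ y ∈ S, x ≠ y ∧ x j = y j}).ncard → s ≤ S.ncard := by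
  classical
  obtain ⟨g, hg⟩ := count_main a n m s t hn2 hs2 hsn ht1 htm hmain
  set f : Fin n → (Fin m → Fin a) := fun i j => g j i with hf
  have hinj : Function.Injective f := by
    intro i i' h
    by_contra hne
    obtain ⟨T, hsub, hT⟩ := Finset.exists_superset_card_eq (s := {i, i'})
      (n := s) (by rw [Finset.card_insert_of_notMem (by simpa using hne), Finset.card_singleton]; exact hs2)
      (by simpa using hsn)
    have : (univ.filter (fun j => ∃ x ∈ T, ∃ x' ∈ T, x ≠ x' ∧ g j x = g j x')) = univ := by
      refine Finset.eq_univ_of_forall ?_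
      intro j
      refine Finset.mem_filter.mpr ⟨mem_univ _, i, hsub (by simp), i', hsub (by simp), hne, ?_⟩
      have := congrFun h j
      simpa [f] using this
    have h2 := hg T hT
    rw [this, Finset.card_univ, Fintype.card_fin] at h2
    omega
  refine ⟨Set.range f, ?_, ?_⟩
  · rw [← Set.image_univ, Set.ncard_image_of_injective _ hinj, Set.ncard_univ, Nat.card_eq_fintype_card,
      Fintype.card_fin]
  · intro S hS hcol
    by_contra hcon
    push_neg at hcon
    set T₀ : Finset (Fin n) := univ.filter (fun i => f i ∈ S) with hT₀
    have hSeq : S = f '' ↑T₀ := by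
      ext x
      constructor
      · intro hx
        obtain ⟨i, rfl⟩ := hS hx
        exact ⟨i, by simp [T₀, hx], rfl⟩
      · rintro ⟨i, hi, rfl⟩
        simp only [T₀, Finset.coe_filter, Set.mem_setOf_eq] at hi
        exact hi.2
    have hScard : S.ncard = T₀.card := by
      rw [hSeq, Set.ncard_image_of_injective _ hinj, Set.ncard_coe_finset]
    have hT0le : T₀.card ≤ s := by rw [hScard] at hcon; exact hcon.le
    have hsn' : s ≤ Fintype.card (Fin n) := by simpa using hsn
    obtain ⟨T, hsub, hT⟩ := Finset.exists_superset_card_eq hT0le hsn' 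
    have hsub2 : {j : Fin m | ∃ x ∈ S, ∃ y ∈ S, x ≠ y ∧ x j = y j} ⊆
        ↑(univ.filter (fun j => ∃ i ∈ T, ∃ i' ∈ T, i ≠ i' ∧ g j i = g j i')) := by
      intro j hj
      obtain ⟨x, hx, y, hy, hxy, hxyj⟩ := hj
      obtain ⟨i, rfl⟩ := hS hx
      obtain ⟨i', rfl⟩ := hS hy
      have hii : i ≠ i' := fun h => hxy (by rw [h])
      have hi : i ∈ T₀ := by simp [T₀, hx]
      have hi' : i' ∈ T₀ := by simp [T₀, hy]
      simp only [Finset.coe_filter, Set.mem_setOf_eq, mem_univ, true_and]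
      exact ⟨i, hsub hi, i', hsub hi', hii, hxyj⟩
    have := Set.ncard_le_ncard hsub2 (Set.toFinite _)
    rw [Set.ncard_coe_finset] at this
    have h3 := hg T hT
    exact Nat.lt_irrefl t (Nat.lt_of_le_of_lt (hcol.trans this) h3)

set_option maxHeartbeats 1000000 in
/-- Lemma 3.4, existence form: for all constants `c > 1` and `ε ∈ (0,1)` there are
constants `C₁, C₂, C₃ > 0` and `k₀` such that for all `k ≥ k₀` and `n ≥ (C₃ k³)^k`
there is a code of size `n` over an alphabet of size at most `C₁ n^{1/k}`, of length at
most `C₂ k² log k`, whose `ε`-collision number exceeds `c·k`. -/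
theorem exists_short_code_with_large_collision_number
    (c ε : ℝ) (hc : 1 < c) (hε0 : 0 < ε) (hε1 : ε < 1) :
    ∃ C₁ C₂ C₃ : ℝ, 0 < C₁ ∧ 0 < C₂ ∧ 0 < C₃ ∧ ∃ k₀ : ℕ,
      ∀ k : ℕ, k₀ ≤ k → ∀ n : ℕ, (C₃ * (k : ℝ) ^ 3) ^ k ≤ (n : ℝ) →
      ∃ (a m : ℕ) (𝒞 : Set (Fin m → Fin a)),
        (a : ℝ) ≤ C₁ * (n : ℝ) ^ ((1 : ℝ) / (k : ℝ)) ∧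
        (m : ℝ) ≤ C₂ * (k : ℝ) ^ 2 * Real.log k ∧
        𝒞.ncard = n ∧
        ∀ S ⊆ 𝒞,
          ε * (m : ℝ) < (({j : Fin m | ∃ x ∈ S, ∃ y ∈ S, x ≠ y ∧ x j = y j}).ncard : ℝ) →
          c * (k : ℝ) < (S.ncard : ℝ) := by
  have hc0 : (0:ℝ) < c := lt_trans one_pos hc
  set M : ℕ := ⌈12 * c / ε⌉₊ with hMdef
  have hM1 : 1 ≤ M := Nat.one_le_iff_ne_zero.mpr (by
    intro h
    have := Nat.ceil_eq_zero.mp h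
    have : (0:ℝ) < 12 * c / ε := by positivity
    linarith)
  have hMge : 12 * c / ε ≤ (M:ℝ) := Nat.le_ceil _
  have hMR : (0:ℝ) < M := by exact_mod_cast hM1
  refine ⟨2, (M:ℝ), 8 * c ^ 3, by norm_num, hMR, by positivity, ⌈Real.exp M⌉₊ + 3, ?_⟩
  intro k hk n hn
  -- basic facts on k
  have hk3 : 3 ≤ k := le_trans (by omega) hk
  have hkR : (3:ℝ) ≤ k := by exact_mod_cast hk3
  have hk0 : (0:ℝ) < k := by linarith
  have hkexp : Real.exp M ≤ k := by
    have h1 : (⌈Real.exp M⌉₊ : ℝ) ≤ k := by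
      have : (⌈Real.exp M⌉₊ : ℕ) ≤ k := le_trans (by omega) hk
      exact_mod_cast this
    exact le_trans (Nat.le_ceil _) h1
  have hlogk : (M:ℝ) ≤ Real.log k := (Real.le_log_iff_exp_le hk0).mpr hkexp
  have hlogk1 : (1:ℝ) ≤ Real.log k := le_trans (by exact_mod_cast hM1) hlogk
  -- basic facts on n
  set B : ℝ := 8 * c ^ 3 * (k:ℝ) ^ 3 with hBdef
  have hck1 : (1:ℝ) ≤ c * k := by
    have := mul_le_mul (le_of_lt hc) (show (1:ℝ) ≤ k by linarith) zero_le_one (le_of_lt hc0)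
    linarith
  have hckpos : (0:ℝ) < c * k := by linarith
  have hB8 : B = 8 * (c * (k:ℝ)) ^ 3 := by rw [hBdef]; ring
  have hu2 : (1:ℝ) ≤ (c * k) ^ 2 := one_le_pow₀ hck1
  have hu3 : (1:ℝ) ≤ (c * k) ^ 3 := one_le_pow₀ hck1
  have hB1 : (1:ℝ) ≤ B := by rw [hB8]; linarith
  have hB0 : (0:ℝ) < B := by linarith
  have hn1R : (1:ℝ) ≤ n := le_trans (one_le_pow₀ hB1) hn
  have hn0 : (0:ℝ) < n := by linarith
  -- the root x
  set x : ℝ := (n:ℝ) ^ ((1:ℝ)/(k:ℝ)) with hxdef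
  have hkne : (k:ℝ) ≠ 0 := ne_of_gt hk0
  have hBx : B ≤ x := by
    have h1 : (B ^ k : ℝ) ^ ((1:ℝ)/(k:ℝ)) ≤ x := by
      apply Real.rpow_le_rpow (by positivity) hn (by positivity)
    calc B = (B ^ k : ℝ) ^ ((1:ℝ)/(k:ℝ)) := by
          rw [← Real.rpow_natCast B k, ← Real.rpow_mul (le_of_lt hB0)]
          rw [mul_one_div, div_self hkne, Real.rpow_one]
      _ ≤ x := h1
  have hx1 : (1:ℝ) ≤ x := le_trans hB1 hBx
  have hx0 : (0:ℝ) < x := by linarith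
  have hxn : x ≤ n := by
    calc x = (n:ℝ) ^ ((1:ℝ)/(k:ℝ)) := rfl
      _ ≤ (n:ℝ) ^ (1:ℝ) := by
          apply Real.rpow_le_rpow_of_exponent_le hn1R
          rw [div_le_one hk0]; linarith
      _ = n := Real.rpow_one _
  -- parameters
  set a : ℕ := ⌈x⌉₊ with hadef
  set m : ℕ := M * k ^ 2 with hmdef
  set s : ℕ := ⌊c * (k:ℝ)⌋₊ + 1 with hsdef
  set t : ℕ := ⌊ε * (m:ℕ)⌋₊ + 1 with htdef
  have haxge : x ≤ (a:ℝ) := Nat.le_ceil x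
  have haxle : (a:ℝ) ≤ 2 * x := by
    have := Nat.ceil_lt_add_one (le_of_lt hx0)
    have h2 : x + 1 ≤ 2 * x := by linarith
    linarith
  have ha1R : (1:ℝ) ≤ a := le_trans hx1 haxge
  have hmR : (m:ℝ) = (M:ℝ) * (k:ℝ) ^ 2 := by push_cast [hmdef]; ring
  have hm9 : 9 ≤ m := by
    have : 1 * 3 ^ 2 ≤ M * k ^ 2 := Nat.mul_le_mul hM1 (Nat.pow_le_pow_left hk3 2)
    simpa [hmdef] using this
  have hmpos : (0:ℝ) < m := by rw [hmR]; positivity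
  have hsgt : c * (k:ℝ) < s := by
    rw [hsdef]; push_cast
    exact Nat.lt_floor_add_one _
  have hsR : (s:ℝ) ≤ 2 * c * k := by
    rw [hsdef]; push_cast
    have := Nat.floor_le (le_of_lt hckpos)
    linarith
  have hs2 : 2 ≤ s := by
    rw [hsdef]
    have : 1 ≤ ⌊c * (k:ℝ)⌋₊ := Nat.le_floor (by exact_mod_cast hck1)
    omega
  have hs0R : (0:ℝ) < s := by
    have : (0:ℕ) < s := by omega
    exact_mod_cast this
  have hsnR : (s:ℝ) ≤ n := by
    have h1 : 2 * c * k ≤ B := by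
      rw [hB8]
      have h2 := mul_le_mul_of_nonneg_left hu2 (le_of_lt hckpos)
      nlinarith [h2, hckpos]
    linarith
  have hsn : s ≤ n := by exact_mod_cast hsnR
  have hn2 : 2 ≤ n := le_trans hs2 hsn
  have htεm : ε * (m:ℝ) < t := by
    rw [htdef]; push_cast
    exact Nat.lt_floor_add_one _
  have htm : t ≤ m := by
    have h1 : ⌊ε * (m:ℝ)⌋₊ < m := by
      rw [Nat.floor_lt (by positivity)]
      calc ε * (m:ℝ) < 1 * m := by apply mul_lt_mul_of_pos_right hε1 hmpos
        _ = m := one_mul _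
    omega
  have ht1 : 1 ≤ t := by omega
  have htmR : (t:ℝ) ≤ m := by exact_mod_cast htm
  have ht0R : (0:ℝ) < t := by
    have : (0:ℕ) < t := ht1
    exact_mod_cast this
  -- log quantities
  set L : ℝ := Real.log n with hLdef
  set P : ℝ := Real.log (2 * c * k) with hPdef
  set A : ℝ := Real.log a with hAdef
  set Sl : ℝ := Real.log s with hSldef
  have hPpos : 0 < P := Real.log_pos (by
    have := mul_le_mul_of_nonneg_left (show (1:ℝ) ≤ 2*c by linarith) (le_of_lt hk0)
    linarith)
  have hL3kP : 3 * (k:ℝ) * P ≤ L := by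
    have h1 : Real.log (B ^ k) ≤ L := Real.log_le_log (by positivity) hn
    rw [Real.log_pow] at h1
    have h2 : Real.log B = 3 * P := by
      have hB : B = (2 * c * (k:ℝ)) ^ 3 := by rw [hBdef]; ring
      rw [hB, Real.log_pow, hPdef]; push_cast; ring
    rw [h2] at h1
    linarith [h1]
  have hLpos : 0 < L := by
    have h1 : 0 < 3*(k:ℝ)*P := by positivity
    linarith
  have hLkA : L ≤ (k:ℝ) * A := by
    have h1 : Real.log x = (1/(k:ℝ)) * L := by
      rw [hxdef, Real.log_rpow hn0]
    have h2 : Real.log x ≤ A := Real.log_le_log hx0 haxge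
    have h3 : (1/(k:ℝ)) * L ≤ A := by rw [← h1]; exact h2
    calc L = (k:ℝ) * ((1/(k:ℝ)) * L) := by field_simp
      _ ≤ (k:ℝ) * A := by apply mul_le_mul_of_nonneg_left h3 (le_of_lt hk0)
  have h3PA : 3 * P ≤ A := by
    have h1 : (k:ℝ) * (3 * P) ≤ (k:ℝ) * A := by
      calc (k:ℝ) * (3 * P) = 3 * k * P := by ring
        _ ≤ L := hL3kP
        _ ≤ (k:ℝ) * A := hLkA
    exact le_of_mul_le_mul_left h1 hk0
  have hApos : 0 < A := by linarith
  have hSlP : Sl ≤ P := by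
    apply Real.log_le_log hs0R
    exact le_trans hsR (le_refl _)
  have hSl0 : 0 ≤ Sl := Real.log_nonneg (by
    have : (2:ℝ) ≤ s := by exact_mod_cast hs2
    linarith)
  -- ε m ≥ 12 c k²
  have hεM : 12 * c ≤ ε * (M:ℝ) := by
    rw [div_le_iff₀ hε0] at hMge
    linarith
  have ht12 : 12 * c * (k:ℝ)^2 ≤ (t:ℝ) := by
    have h1 : 12 * c * (k:ℝ)^2 ≤ ε * (m:ℝ) := by
      rw [hmR]
      have := mul_le_mul_of_nonneg_right hεM (sq_nonneg (k:ℝ))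
      linarith
    linarith
  -- main real inequality on logs
  have hmain_log : (s:ℝ) * L + (m:ℝ) * Real.log 2 + (2*(t:ℝ)) * Sl < (t:ℝ) * A := by
    have c12 : (0:ℝ) ≤ 12*c*(k:ℝ)^2 := by positivity
    have e1 : 2*(t:ℝ)*Sl ≤ 2*(t:ℝ)*P := by
      have := mul_le_mul_of_nonneg_left hSlP (le_of_lt ht0R)
      linarith
    have e2 : 12*c*(k:ℝ)^2*(A - 2*P) ≤ (t:ℝ)*A - 2*(t:ℝ)*P := by
      have := mul_le_mul_of_nonneg_right ht12 (show (0:ℝ) ≤ A - 2*P by linarith)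
      linarith
    have e3a : 12*c*(k:ℝ)^2*(A/3) ≤ 12*c*(k:ℝ)^2*(A - 2*P) := by
      have := mul_le_mul_of_nonneg_left (show A/3 ≤ A - 2*P by linarith) c12
      linarith
    have e3b : 4*c*(k:ℝ)*L ≤ 4*c*(k:ℝ)*((k:ℝ)*A) := by
      have := mul_le_mul_of_nonneg_left hLkA (show (0:ℝ) ≤ 4*c*(k:ℝ) by positivity)
      linarith
    have e3c : 4*c*(k:ℝ)*((k:ℝ)*A) = 12*c*(k:ℝ)^2*(A/3) := by ring
    have f1 : (s:ℝ)*L ≤ 2*c*(k:ℝ)*L := mul_le_mul_of_nonneg_right hsR (le_of_lt hLpos)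
    have f2 : (m:ℝ) * Real.log 2 < (m:ℝ) * 1 := by
      apply mul_lt_mul_of_pos_left _ hmpos
      have := Real.log_two_lt_d9
      linarith
    have f3 : (m:ℝ) ≤ (k:ℝ)^2 * Real.log k := by
      rw [hmR]
      have := mul_le_mul_of_nonneg_left hlogk (sq_nonneg (k:ℝ))
      linarith
    have f4 : 3*(k:ℝ)*Real.log k ≤ L := by
      have hk2ck : (k:ℝ) ≤ 2*c*(k:ℝ) := by
        have := mul_le_mul_of_nonneg_left (show (1:ℝ) ≤ 2*c by linarith) (le_of_lt hk0)
        linarith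
      have h1 : Real.log k ≤ P := Real.log_le_log hk0 hk2ck
      have := mul_le_mul_of_nonneg_left h1 (show (0:ℝ) ≤ 3*(k:ℝ) by positivity)
      linarith
    have f5 : (k:ℝ)^2 * Real.log k ≤ (k:ℝ)*L/3 := by
      have := mul_le_mul_of_nonneg_left f4 (show (0:ℝ) ≤ (k:ℝ)/3 by positivity)
      linarith
    have f6 : (k:ℝ)*L/3 < 2*c*((k:ℝ)*L) := by
      have hkL : 0 < (k:ℝ)*L := mul_pos hk0 hLpos
      have := mul_lt_mul_of_pos_right hc hkL
      linarith
    linarith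
  -- convert to the natural-number inequality
  have hmainR : ((n:ℝ))^s * 2^m * ((s:ℝ))^(2*t) < ((a:ℝ))^t := by
    have hNpos : (0:ℝ) < (n:ℝ)^s * 2^m * (s:ℝ)^(2*t) := by positivity
    have hApos2 : (0:ℝ) < (a:ℝ)^t := by positivity
    refine (Real.log_lt_log_iff hNpos hApos2).mp ?_
    have hl1 : Real.log ((n:ℝ)^s * 2^m * (s:ℝ)^(2*t)) =
        (s:ℝ) * L + (m:ℝ) * Real.log 2 + (2*(t:ℝ)) * Sl := by
      rw [Real.log_mul (by positivity) (by positivity),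
        Real.log_mul (by positivity) (by positivity),
        Real.log_pow, Real.log_pow, Real.log_pow]
      simp only [Nat.cast_mul, Nat.cast_ofNat]
      try ring
    have hl2 : Real.log ((a:ℝ)^t) = (t:ℝ) * A := by
      rw [Real.log_pow]
    rw [hl1, hl2]
    exact hmain_log
  have hmainN : n ^ s * 2 ^ m * s ^ (2*t) < a ^ t := by
    have h := hmainR
    have hcast : ((n ^ s * 2 ^ m * s ^ (2*t) : ℕ) : ℝ) < ((a ^ t : ℕ) : ℝ) := by
      simp only [Nat.cast_mul, Nat.cast_pow, Nat.cast_ofNat]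
      exact h
    exact_mod_cast hcast
  obtain ⟨𝒞, h𝒞card, h𝒞prop⟩ := good_code a n m s t hn2 hs2 hsn ht1 htm hmainN
  refine ⟨a, m, 𝒞, ?_, ?_, h𝒞card, ?_⟩
  · exact haxle
  · rw [hmR]
    have := mul_le_mul_of_nonneg_left hlogk1 (show (0:ℝ) ≤ (M:ℝ)*(k:ℝ)^2 by positivity)
    linarith
  · intro S hS hcol
    have ht' : t ≤ ({j : Fin m | ∃ x ∈ S, ∃ y ∈ S, x ≠ y ∧ x j = y j}).ncard := by
      have h1 : ⌊ε * (m:ℝ)⌋₊ < ({j : Fin m | ∃ x ∈ S, ∃ y ∈ S, x ≠ y ∧ x j = y j}).ncard := by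
        rw [Nat.floor_lt (by positivity)]
        exact hcol
      exact h1
    have h2 := h𝒞prop S hS ht'
    have h3 : (s:ℝ) ≤ (S.ncard : ℝ) := by exact_mod_cast h2
    linarith
end

section
/- If there exist a subset S ⊆ [n] with |S| = k₀ ≤ k and coefficients c_i ∈ F_p^+ for i ∈ S such that Σ_{i∈S} c_i·v_i = t, then ||Σ_{i∈S} c_i·v'_i − t'||₀ = k₀. -/
open scoped BigOperators

/-- Hamming weight of a vector of `F_p^{K·l+n}`, presented as the pair of its first
`K·l` coordinates (`K` blocks of length `l`) and its last `n` coordinates. -/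
noncomputable def hammingWt {F : Type} [Zero F] {K l n : ℕ}
    (x : (Fin K → Fin l → F) × (Fin n → F)) : ℕ :=
  ({q : Fin K × Fin l | x.1 q.1 q.2 ≠ 0}).ncard + ({i : Fin n | x.2 i ≠ 0}).ncard

/-- `v'_i ∈ F_p^{K·l+n}`: `K` copies of `v_i` followed by the `i`-th standard unit
vector of `F_p^n`. -/
def vPrime {F : Type} [Zero F] [One F] {l n : ℕ} (K : ℕ) [DecidableEq (Fin n)]
    (v : Fin n → Fin l → F) (i : Fin n) : (Fin K → Fin l → F) × (Fin n → F) :=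
  (fun _ => v i, fun i' => if i' = i then 1 else 0)

/-- `t' ∈ F_p^{K·l+n}`: `K` copies of `t` followed by the zero vector of `F_p^n`. -/
def tPrime {F : Type} [Zero F] {l n : ℕ} (K : ℕ) (t : Fin l → F) :
    (Fin K → Fin l → F) × (Fin n → F) :=
  (fun _ => t, 0)

/-- Completeness direction of the reduction from γ-Gap-k-MLD_p to γ-Gap-k-NCP_p
(Theorem A.1): if `Σ_{i∈S} c_i v_i = t` with `|S| = k₀ ≤ k` and nonzero coefficients,
then `‖Σ_{i∈S} c_i v'_i − t'‖₀ = k₀`, where `K = ⌈γk⌉`. -/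
theorem MLD_to_NCP_completeness
    (p : ℕ) (hp : IsPrimePow p)
    (F : Type) [Field F] [Fintype F] (hF : Fintype.card F = p)
    (γ : ℝ) (hγ : 1 ≤ γ) (k n l : ℕ) (hk : 1 ≤ k) (hn : 1 ≤ n) (hl : 1 ≤ l)
    (v : Fin n → Fin l → F) (t : Fin l → F)
    (S : Finset (Fin n)) (k₀ : ℕ) (hScard : S.card = k₀) (hk₀ : k₀ ≤ k)
    (c : Fin n → F) (hc : ∀ i ∈ S, c i ≠ 0)
    (hsum : ∑ i ∈ S, c i • v i = t) :
    hammingWt ((∑ i ∈ S, c i • vPrime (⌈γ * (k : ℝ)⌉₊) v i)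
      - tPrime (n := n) (⌈γ * (k : ℝ)⌉₊) t) = k₀ := by
  classical
  set K := ⌈γ * (k : ℝ)⌉₊ with hK
  set x := (∑ i ∈ S, c i • vPrime K v i) - tPrime (n := n) K t with hx
  have h1 : ∀ q1 : Fin K, ∀ q2 : Fin l, x.1 q1 q2 = 0 := by
    intro q1 q2
    have := congrFun hsum q2
    simp only [Finset.sum_apply, Pi.smul_apply, smul_eq_mul] at this
    simp [hx, vPrime, tPrime, Prod.fst_sum, Finset.sum_apply, this]
  have h2 : ∀ i' : Fin n, x.2 i' = if i' ∈ S then c i' else 0 := by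
    intro i'
    simp [hx, vPrime, tPrime, Prod.snd_sum, Finset.sum_apply, mul_ite,
      Finset.sum_ite_eq' S i' c]
  unfold hammingWt
  have e1 : {q : Fin K × Fin l | x.1 q.1 q.2 ≠ 0} = ∅ := by
    ext q; simp [h1]
  have e2 : {i : Fin n | x.2 i ≠ 0} = ↑S := by
    ext i
    simp only [Set.mem_setOf_eq, h2, Finset.coe_sort_coe, Finset.mem_coe]
    constructor
    · intro h; by_contra hi; simp [hi] at h
    · intro hi; simp [hi, hc i hi]
  rw [e1, e2]
  simp [hScard, Set.ncard_coe_finset]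
end

section
/- Suppose that for every subset S ⊆ [n] with |S| < γk and all coefficients c_i ∈ F_p^+ (i ∈ S) one has Σ_{i∈S} c_i·v_i ≠ t. Then for every subset S ⊆ [n] and all coefficients c_i ∈ F_p^+ (i ∈ S), ||Σ_{i∈S} c_i·v'_i − t'||₀ ≥ γk. -/
open scoped BigOperators

/-- Soundness direction of the reduction from γ-Gap-k-MLD_p to γ-Gap-k-NCP_p
(Theorem A.1): if no linear combination of fewer than `γk` of the `v_i` with nonzero
coefficients equals `t`, then every linear combination of the `v'_i` with nonzero
coefficients is at Hamming distance at least `γk` from `t'`, where `K = ⌈γk⌉`. -/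
theorem MLD_to_NCP_soundness
    (p : ℕ) (hp : IsPrimePow p)
    (F : Type) [Field F] [Fintype F] (hF : Fintype.card F = p)
    (γ : ℝ) (hγ : 1 ≤ γ) (k n l : ℕ) (hk : 1 ≤ k) (hn : 1 ≤ n) (hl : 1 ≤ l)
    (v : Fin n → Fin l → F) (t : Fin l → F)
    (hNO : ∀ S : Finset (Fin n), (S.card : ℝ) < γ * (k : ℝ) →
      ∀ c : Fin n → F, (∀ i ∈ S, c i ≠ 0) → ∑ i ∈ S, c i • v i ≠ t)
    (S : Finset (Fin n)) (c : Fin n → F) (hc : ∀ i ∈ S, c i ≠ 0) :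
    γ * (k : ℝ) ≤ (hammingWt ((∑ i ∈ S, c i • vPrime (⌈γ * (k : ℝ)⌉₊) v i)
      - tPrime (n := n) (⌈γ * (k : ℝ)⌉₊) t) : ℝ) := by
  set K := ⌈γ * (k : ℝ)⌉₊ with hK
  set x := (∑ i ∈ S, c i • vPrime K v i) - tPrime (n := n) K t with hx
  have hx1 : ∀ a j, x.1 a j = (∑ i ∈ S, c i • v i) j - t j := by
    intro a j
    simp only [hx, Prod.fst_sub, Prod.fst_sum, vPrime, tPrime, Prod.smul_mk, Prod.fst,
      Pi.sub_apply, Finset.sum_apply, Pi.smul_apply, smul_eq_mul]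
  have hx2 : ∀ i', i' ∈ S → x.2 i' = c i' := by
    intro i' hi'
    simp only [hx, Prod.snd_sub, tPrime, Prod.snd]
    simp only [Prod.snd_sum, vPrime, Prod.smul_mk, Prod.snd, sub_zero, Pi.sub_apply,
      Finset.sum_apply, Pi.smul_apply, smul_eq_mul, mul_ite, mul_one, mul_zero]
    rw [Finset.sum_ite_eq S i' c]
    simp [hi']
  by_cases hcard : (S.card : ℝ) < γ * (k : ℝ)
  · -- first block: each copy is nonzero somewhere
    have hne : ∑ i ∈ S, c i • v i ≠ t := hNO S hcard c hc
    obtain ⟨j, hj⟩ : ∃ j, (∑ i ∈ S, c i • v i) j ≠ t j := by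
      by_contra h
      push_neg at h
      exact hne (funext h)
    have hinj : Function.Injective (fun a : Fin K => (a, j)) := by
      intro a b hab
      exact (Prod.mk.injEq _ _ _ _).mp hab |>.1
    have hsub : (fun a : Fin K => (a, j)) '' Set.univ ⊆ {q : Fin K × Fin l | x.1 q.1 q.2 ≠ 0} := by
      rintro ⟨a, j'⟩ ⟨b, -, hb⟩
      cases hb
      simp only [Set.mem_setOf_eq, hx1]
      exact sub_ne_zero_of_ne hj
    have hcard1 : K ≤ ({q : Fin K × Fin l | x.1 q.1 q.2 ≠ 0}).ncard := by
      have := Set.ncard_le_ncard hsub (Set.toFinite _)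
      rwa [Set.ncard_image_of_injective _ hinj, Set.ncard_univ,
        Nat.card_eq_fintype_card, Fintype.card_fin] at this
    have hK' : γ * (k : ℝ) ≤ K := Nat.le_ceil _
    have : (K : ℝ) ≤ (hammingWt x : ℝ) := by
      have : K ≤ hammingWt x := le_trans hcard1 (Nat.le_add_right _ _)
      exact_mod_cast this
    linarith
  · -- last coordinates: S ⊆ support
    push_neg at hcard
    have hsub : (S : Set (Fin n)) ⊆ {i : Fin n | x.2 i ≠ 0} := by
      intro i hi
      simp only [Set.mem_setOf_eq, hx2 i hi]
      exact hc i hi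
    have hcard2 : S.card ≤ ({i : Fin n | x.2 i ≠ 0}).ncard := by
      have := Set.ncard_le_ncard hsub (Set.toFinite _)
      rwa [Set.ncard_coe_finset] at this
    have : (S.card : ℝ) ≤ (hammingWt x : ℝ) := by
      have : S.card ≤ hammingWt x := le_trans hcard2 (Nat.le_add_left _ _)
      exact_mod_cast this
    linarith
end

section
/- For every integer k ≥ 0, the following are equivalent: (1) there exists c ∈ F_p^n with ||Σ_{i∈[n]} c_i·w_i − T||₀ ≤ k; (2) there exist subsets S ⊆ [n] and R ⊆ [m−n], with |S| + |R| ≤ k, and coefficients c_i ∈ F_p^+ (i ∈ S) and d_j ∈ F_p^+ (j ∈ R), such that Σ_{i∈S} c_i·v_i + Σ_{j∈R} d_j·e_j = t'. -/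
open scoped BigOperators

noncomputable def hammingWt2 {F : Type} [Zero F] {n mn : ℕ}
    (x : (Fin n → F) × (Fin mn → F)) : ℕ :=
  ({i : Fin n | x.1 i ≠ 0}).ncard + ({j : Fin mn | x.2 j ≠ 0}).ncard

def wVec {F : Type} [Zero F] [One F] {n mn : ℕ}
    (v : Fin n → Fin mn → F) (i : Fin n) : (Fin n → F) × (Fin mn → F) :=
  (fun i' => if i' = i then 1 else 0, v i)

lemma sum_unit {F : Type} [Field F] {mn : ℕ} (R : Finset (Fin mn)) (d : Fin mn → F)
    (j' : Fin mn) :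
    (∑ j ∈ R, d j • (fun j'' => if j'' = j then (1 : F) else 0)) j'
      = if j' ∈ R then d j' else 0 := by
  rw [Finset.sum_apply]
  simp only [Pi.smul_apply, smul_eq_mul, mul_ite, mul_one, mul_zero]
  exact Finset.sum_ite_eq R j' d

lemma fst_eval {F : Type} [Field F] {n mn : ℕ} (v : Fin n → Fin mn → F)
    (c : Fin n → F) (j : Fin n) :
    (∑ i, c i • wVec v i).1 j = c j := by
  have : (∑ i, c i • wVec v i).1 = ∑ i, c i • (wVec v i).1 := by
    simp [Prod.fst_sum]
  rw [this, Finset.sum_apply]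
  simp only [wVec, Pi.smul_apply, smul_eq_mul, mul_ite, mul_one, mul_zero]
  simpa using Finset.sum_ite_eq Finset.univ j c

lemma snd_eval {F : Type} [Field F] {n mn : ℕ} (v : Fin n → Fin mn → F)
    (c : Fin n → F) :
    (∑ i, c i • wVec v i).2 = ∑ i, c i • v i := by
  simp [Prod.snd_sum, wVec]

/-- The key equivalence in the reduction from γ-Gap-k-NCP_p to γ-Gap-k-MLD_p
(Theorem A.2): `‖Σ_i c_i w_i − T‖₀ ≤ k` for some coefficients `c` iff `t'` is a
linear combination, with at most `k` nonzero coefficients in total, of the `v_i` and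
the standard unit vectors `e_j` of `F_p^{m−n}`. -/
theorem NCP_to_MLD_equivalence
    (p : ℕ) (hp : IsPrimePow p)
    (F : Type) [Field F] [Fintype F] (hF : Fintype.card F = p)
    (n m : ℕ) (hn : 1 ≤ n) (hnm : n ≤ m)
    (v : Fin n → Fin (m - n) → F) (t' : Fin (m - n) → F) (k : ℕ) :
    (∃ c : Fin n → F,
        hammingWt2 ((∑ i, c i • wVec v i) - ((0 : Fin n → F), t')) ≤ k) ↔
    (∃ (S : Finset (Fin n)) (R : Finset (Fin (m - n)))
        (c : Fin n → F) (d : Fin (m - n) → F),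
        S.card + R.card ≤ k ∧ (∀ i ∈ S, c i ≠ 0) ∧ (∀ j ∈ R, d j ≠ 0) ∧
        (∑ i ∈ S, c i • v i) + (∑ j ∈ R, d j • (fun j' => if j' = j then (1 : F) else 0))
          = t') := by
  constructor
  · rintro ⟨c, hc⟩
    classical
    set r : Fin (m - n) → F := (∑ i, c i • v i) - t' with hr
    refine ⟨Finset.univ.filter (fun i => c i ≠ 0),
            Finset.univ.filter (fun j => r j ≠ 0),
            c, fun j => -(r j), ?_, ?_, ?_, ?_⟩
    · have h1 : {i : Fin n | ((∑ i, c i • wVec v i) - ((0 : Fin n → F), t')).1 i ≠ 0}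
          = {i : Fin n | c i ≠ 0} := by
        ext i; simp [fst_eval v c i]
      have h2 : {j : Fin (m-n) | ((∑ i, c i • wVec v i) - ((0 : Fin n → F), t')).2 j ≠ 0}
          = {j : Fin (m-n) | r j ≠ 0} := by
        ext j
        simp [hr, snd_eval v c, sub_eq_iff_eq_add]
      have := hc
      rw [hammingWt2, h1, h2] at this
      have e1 : ({i : Fin n | c i ≠ 0}).ncard
          = (Finset.univ.filter (fun i => c i ≠ 0)).card := by
        rw [Set.ncard_eq_toFinset_card']; congr 1; ext i; simp
      have e2 : ({j : Fin (m-n) | r j ≠ 0}).ncard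
          = (Finset.univ.filter (fun j => r j ≠ 0)).card := by
        rw [Set.ncard_eq_toFinset_card']; congr 1; ext j; simp
      rw [← e1, ← e2]; exact this
    · intro i hi; simpa using (Finset.mem_filter.mp hi).2
    · intro j hj; have := (Finset.mem_filter.mp hj).2; simpa using this
    · funext j
      have hS : (∑ i ∈ Finset.univ.filter (fun i => c i ≠ 0), c i • v i)
          = ∑ i, c i • v i := by
        apply Finset.sum_subset (Finset.filter_subset _ _)
        intro i _ hi
        simp only [Finset.mem_filter, Finset.mem_univ, true_and, not_not] at hi
        simp [hi]
      rw [Pi.add_apply, hS, sum_unit]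
      have hrj : r j = (∑ i, c i • v i) j - t' j := by rw [hr]; simp
      by_cases h : r j = 0
      · simp only [Finset.mem_filter, Finset.mem_univ, true_and, not_not, ne_eq, h,
          not_true_eq_false, if_false]
        have : (∑ i, c i • v i) j - t' j = 0 := by rw [← hrj]; exact h
        linear_combination this
      · simp only [Finset.mem_filter, Finset.mem_univ, true_and, ne_eq, h,
          not_false_eq_true, if_true]
        linear_combination -hrj
  · rintro ⟨S, R, c, d, hcard, hcS, hdR, heq⟩
    classical
    set c' : Fin n → F := fun i => if i ∈ S then c i else 0 with hc'
    refine ⟨c', ?_⟩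
    have hfst : ∀ j, ((∑ i, c' i • wVec v i) - ((0 : Fin n → F), t')).1 j = c' j := by
      intro j; simp [fst_eval v c' j]
    have hsnd : ((∑ i, c' i • wVec v i) - ((0 : Fin n → F), t')).2
        = fun j => if j ∈ R then -(d j) else 0 := by
      funext j
      have : (∑ i, c' i • v i) = ∑ i ∈ S, c i • v i := by
        rw [← Finset.sum_subset (Finset.subset_univ S)]
        · apply Finset.sum_congr rfl; intro i hi; simp [hc', hi]
        · intro i _ hi; simp [hc', hi]
      simp only [Prod.snd_sub, snd_eval]
      rw [this]
      have := congrFun heq j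
      rw [Pi.add_apply, Finset.sum_apply, sum_unit] at this
      simp only [Pi.sub_apply]
      rw [Finset.sum_apply]
      by_cases h : j ∈ R <;> simp only [h, if_true, if_false] at this ⊢ <;>
        linear_combination this
    rw [hammingWt2]
    have h1 : {i : Fin n | ((∑ i, c' i • wVec v i) - ((0:Fin n → F), t')).1 i ≠ 0} ⊆ ↑S := by
      intro i hi
      simp only [Set.mem_setOf_eq, hfst] at hi
      by_contra h
      have : i ∉ S := fun hs => h (Finset.mem_coe.mpr hs)
      simp [hc', this] at hi
    have h2 : {j : Fin (m-n) | ((∑ i, c' i • wVec v i) - ((0:Fin n → F), t')).2 j ≠ 0} ⊆ ↑R := by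
      intro j hj
      simp only [Set.mem_setOf_eq, hsnd] at hj
      by_contra h
      have : j ∉ R := fun hs => h (Finset.mem_coe.mpr hs)
      simp [this] at hj
    calc _ ≤ (↑S : Set (Fin n)).ncard + (↑R : Set (Fin (m-n))).ncard :=
            add_le_add (Set.ncard_le_ncard h1 (Set.toFinite _))
              (Set.ncard_le_ncard h2 (Set.toFinite _))
         _ = S.card + R.card := by simp [Set.ncard_coe_finset]
         _ ≤ k := hcard
end
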